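/- arXiv:1110.4901 — 7 statements merged into one kernel-verified Lean document; each statement's English description precedes it below -/
import Mathlib

section
/- (Pohozaev identity.) Let 0 < t₂ < t₁ and let u : ℝ² → ℝ^K be C² on a neighborhood of the closed annulus {x : t₂ ≤ |x| ≤ t₁}. Then ∫_{B_{t₁} \ B_{t₂}} ⟨x·∇u(x), Δu(x)⟩ dx = ∫_{∂B_{t₁}} t₁ (|∂u/∂r|² − ½|∇u|²) dS − ∫_{∂B_{t₂}} t₂ (|∂u/∂r|² − ½|∇u|²) dS, where x·∇u(x) = x₁ ∂₁u(x) + x₂ ∂₂u(x) and ⟨·,·⟩ is the inner product of ℝ^K. -/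
open MeasureTheory Metric Set
open scoped RealInnerProductSpace

noncomputable section

abbrev E2 : Type := EuclideanSpace ℝ (Fin 2)
abbrev EK (K : ℕ) : Type := EuclideanSpace ℝ (Fin K)

/-- Squared Hilbert–Schmidt norm `|∇u|²` of the derivative of `u`. -/
def grad2 {K : ℕ} (u : E2 → EK K) (x : E2) : ℝ :=
  ∑ i : Fin 2, ‖fderiv ℝ u x (EuclideanSpace.single i 1)‖ ^ 2

/-- Squared Hilbert–Schmidt norm `|∇²u|²` of the second derivative of `u`. -/
def hess2 {K : ℕ} (u : E2 → EK K) (x : E2) : ℝ :=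
  ∑ i : Fin 2, ∑ j : Fin 2,
    ‖fderiv ℝ (fun y => fderiv ℝ u y (EuclideanSpace.single i 1)) x
      (EuclideanSpace.single j 1)‖ ^ 2

/-- Componentwise Laplacian `Δu`. -/
def lapl {K : ℕ} (u : E2 → EK K) (x : E2) : EK K :=
  ∑ i : Fin 2,
    fderiv ℝ (fun y => fderiv ℝ u y (EuclideanSpace.single i 1)) x (EuclideanSpace.single i 1)

/-- Radial derivative `∂u/∂r`, i.e. the derivative of `u` in the direction `x/‖x‖`. -/
def rderiv {K : ℕ} (u : E2 → EK K) (x : E2) : EK K :=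
  fderiv ℝ u x (‖x‖⁻¹ • x)

/-- The point `(r cos θ, r sin θ)` of `ℝ²`. -/
def cpt (r θ : ℝ) : E2 :=
  (WithLp.equiv 2 (Fin 2 → ℝ)).symm ![r * Real.cos θ, r * Real.sin θ]

/-- The arclength boundary integral `∫_{∂B_t} (|∂u/∂r|² − ½|∇u|²) dS`. -/
def bdry {K : ℕ} (u : E2 → EK K) (t : ℝ) : ℝ :=
  ∫ θ in (0:ℝ)..(2 * Real.pi),
    (‖rderiv u (cpt t θ)‖ ^ 2 - grad2 u (cpt t θ) / 2) * t

/-- The angular-mean (radially symmetric) map `u*`. -/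
def ustar {K : ℕ} (u : E2 → EK K) (x : E2) : EK K :=
  (2 * Real.pi)⁻¹ • ∫ θ in (0:ℝ)..(2 * Real.pi), u (cpt ‖x‖ θ)

/-- The pointwise inner product `⟨∇u, ∇v⟩` of gradients. -/
def gradInner {K : ℕ} (u v : E2 → EK K) (x : E2) : ℝ :=
  ∑ i : Fin 2,
    ⟪fderiv ℝ u x (EuclideanSpace.single i 1), fderiv ℝ v x (EuclideanSpace.single i 1)⟫

/-- The annular decay condition `(∫_{B_t \ B_{t/2}} |g|²)^{1/2} ≤ C₀ t^{-a}` for all `0 < t < 1`. -/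
def annDecay {K : ℕ} (g : E2 → EK K) (a C₀ : ℝ) : Prop :=
  ∀ t : ℝ, 0 < t → t < 1 →
    Real.sqrt (∫ x in ball (0 : E2) t \ ball 0 (t / 2), ‖g x‖ ^ 2) ≤ C₀ * t ^ (-a)

namespace Poho
def s0 : E2 := EuclideanSpace.single 0 1
def s1 : E2 := EuclideanSpace.single 1 1
def ee1 (θ : ℝ) : E2 := Real.cos θ • s0 + Real.sin θ • s1
def ee2 (θ : ℝ) : E2 := (-Real.sin θ) • s0 + Real.cos θ • s1

lemma cpt_eq (r θ : ℝ) : cpt r θ = r • ee1 θ := by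
  ext i
  fin_cases i <;>
    simp [cpt, ee1, s0, s1, WithLp.equiv_symm_apply, EuclideanSpace.single_apply] <;> ring

lemma norm_cpt (r θ : ℝ) (hr : 0 ≤ r) : ‖cpt r θ‖ = r := by
  rw [EuclideanSpace.norm_eq]
  rw [show ∑ i : Fin 2, ‖cpt r θ i‖ ^ 2 = (r * Real.cos θ)^2 + (r * Real.sin θ)^2 by
    simp [cpt, WithLp.equiv_symm_apply, Fin.sum_univ_two, sq_abs]]
  rw [show (r * Real.cos θ)^2 + (r * Real.sin θ)^2 = r^2 by
    linear_combination r^2 * Real.sin_sq_add_cos_sq θ]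
  exact Real.sqrt_sq hr

lemma hasDerivAt_ee1 (θ : ℝ) : HasDerivAt ee1 (ee2 θ) θ :=
  ((Real.hasDerivAt_cos θ).smul_const s0).add ((Real.hasDerivAt_sin θ).smul_const s1)

lemma hasDerivAt_ee2 (θ : ℝ) : HasDerivAt ee2 (-ee1 θ) θ := by
  have := (((Real.hasDerivAt_sin θ).neg).smul_const s0).add
    ((Real.hasDerivAt_cos θ).smul_const s1)
  rw [show -ee1 θ = -Real.cos θ • s0 + -Real.sin θ • s1 by simp only [ee1, neg_add, neg_smul]]
  exact this

def lin2E {F : Type*} [NormedAddCommGroup F] [NormedSpace ℝ F] (a b : F) : ℝ × ℝ →L[ℝ] F :=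
  (ContinuousLinearMap.fst ℝ ℝ ℝ).smulRight a + (ContinuousLinearMap.snd ℝ ℝ ℝ).smulRight b

@[simp] lemma lin2E_apply {F : Type*} [NormedAddCommGroup F] [NormedSpace ℝ F] (a b : F)
    (w : ℝ × ℝ) : lin2E a b w = w.1 • a + w.2 • b := by
  simp [lin2E]

lemma clm_eq_lin2E {F : Type*} [NormedAddCommGroup F] [NormedSpace ℝ F] (D : ℝ × ℝ →L[ℝ] F) :
    D = lin2E (D (1,0)) (D (0,1)) := by
  refine ContinuousLinearMap.ext fun w => ?_
  have hw : w = w.1 • ((1:ℝ),(0:ℝ)) + w.2 • ((0:ℝ),(1:ℝ)) := by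
    apply Prod.ext <;> simp
  rw [lin2E_apply]
  conv_lhs => rw [hw]
  rw [map_add, ContinuousLinearMap.map_smul, ContinuousLinearMap.map_smul]

lemma hasFDerivAt_of_eval {F : Type*} [NormedAddCommGroup F] [NormedSpace ℝ F]
    {f : ℝ × ℝ → F} {D : ℝ × ℝ →L[ℝ] F} {p : ℝ × ℝ} (h : HasFDerivAt f D p) {a b : F}
    (ha : D (1,0) = a) (hb : D (0,1) = b) : HasFDerivAt f (lin2E a b) p := by
  rw [← ha, ← hb, ← clm_eq_lin2E]; exact h

lemma hasFDerivAt_gamma (p : ℝ × ℝ) :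
    HasFDerivAt (fun q : ℝ × ℝ => cpt q.1 q.2) (lin2E (ee1 p.2) (p.1 • ee2 p.2)) p := by
  have h2 := ((hasDerivAt_ee1 p.2).hasFDerivAt).comp p
    (hasFDerivAt_snd (𝕜 := ℝ) (E := ℝ) (F := ℝ) (p := p))
  have h2' : HasFDerivAt (fun q : ℝ × ℝ => ee1 q.2)
      (((1 : ℝ →L[ℝ] ℝ).smulRight (ee2 p.2)).comp (ContinuousLinearMap.snd ℝ ℝ ℝ)) p := h2
  have h := (hasFDerivAt_fst (𝕜 := ℝ) (E := ℝ) (F := ℝ) (p := p)).fun_smul h2'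
  simp only [show (fun q : ℝ × ℝ => q.1 • ee1 q.2) = fun q : ℝ × ℝ => cpt q.1 q.2 from
    funext fun q => (cpt_eq q.1 q.2).symm] at h
  exact hasFDerivAt_of_eval h (by simp) (by simp)

end Poho

section Stage2
namespace Poho
variable {K : ℕ}

def gam (p : ℝ × ℝ) : E2 := cpt p.1 p.2
def Amap (u : E2 → EK K) (p : ℝ × ℝ) : EK K := fderiv ℝ u (gam p) (ee1 p.2)
def Bmap (u : E2 → EK K) (p : ℝ × ℝ) : EK K := fderiv ℝ u (gam p) (ee2 p.2)
def Hb (u : E2 → EK K) (p : ℝ × ℝ) (a b : E2) : EK K := fderiv ℝ (fderiv ℝ u) (gam p) a b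
def ArP (u : E2 → EK K) (p : ℝ × ℝ) : EK K := Hb u p (ee1 p.2) (ee1 p.2)
def AtP (u : E2 → EK K) (p : ℝ × ℝ) : EK K := p.1 • Hb u p (ee2 p.2) (ee1 p.2) + Bmap u p
def BrP (u : E2 → EK K) (p : ℝ × ℝ) : EK K := Hb u p (ee1 p.2) (ee2 p.2)
def BtP (u : E2 → EK K) (p : ℝ × ℝ) : EK K := p.1 • Hb u p (ee2 p.2) (ee2 p.2) - Amap u p

variable {u : E2 → EK K} {U : Set E2}

lemma hasFDerivAt_Lgam (hUo : IsOpen U) (hu2 : ContDiffOn ℝ 2 u U) {p : ℝ × ℝ}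
    (hp : gam p ∈ U) :
    HasFDerivAt (fun q => fderiv ℝ u (gam q))
      ((fderiv ℝ (fderiv ℝ u) (gam p)).comp (lin2E (ee1 p.2) (p.1 • ee2 p.2))) p := by
  have hd : DifferentiableAt ℝ (fderiv ℝ u) (gam p) :=
    (((hu2.fderiv_of_isOpen hUo (m := 1) (by norm_num)).differentiableOn one_ne_zero) _ hp).differentiableAt
      (hUo.mem_nhds hp)
  exact hd.hasFDerivAt.comp p (hasFDerivAt_gamma p)

lemma hasFDerivAt_ee1snd (p : ℝ × ℝ) :
    HasFDerivAt (fun q : ℝ × ℝ => ee1 q.2)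
      (((1 : ℝ →L[ℝ] ℝ).smulRight (ee2 p.2)).comp (ContinuousLinearMap.snd ℝ ℝ ℝ)) p :=
  ((hasDerivAt_ee1 p.2).hasFDerivAt).comp p
    (hasFDerivAt_snd (𝕜 := ℝ) (E := ℝ) (F := ℝ) (p := p))

lemma hasFDerivAt_ee2snd (p : ℝ × ℝ) :
    HasFDerivAt (fun q : ℝ × ℝ => ee2 q.2)
      (((1 : ℝ →L[ℝ] ℝ).smulRight (-ee1 p.2)).comp (ContinuousLinearMap.snd ℝ ℝ ℝ)) p :=
  ((hasDerivAt_ee2 p.2).hasFDerivAt).comp p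
    (hasFDerivAt_snd (𝕜 := ℝ) (E := ℝ) (F := ℝ) (p := p))

lemma hasFDerivAt_Amap (hUo : IsOpen U) (hu2 : ContDiffOn ℝ 2 u U) {p : ℝ × ℝ}
    (hp : gam p ∈ U) : HasFDerivAt (Amap u) (lin2E (ArP u p) (AtP u p)) p := by
  have h := (hasFDerivAt_Lgam hUo hu2 hp).clm_apply (hasFDerivAt_ee1snd p)
  refine hasFDerivAt_of_eval h ?_ ?_
  · simp [ArP, Hb, Amap, gam]
  · simp [AtP, Hb, Amap, Bmap, gam]; abel

lemma hasFDerivAt_Bmap (hUo : IsOpen U) (hu2 : ContDiffOn ℝ 2 u U) {p : ℝ × ℝ}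
    (hp : gam p ∈ U) : HasFDerivAt (Bmap u) (lin2E (BrP u p) (BtP u p)) p := by
  have h := (hasFDerivAt_Lgam hUo hu2 hp).clm_apply (hasFDerivAt_ee2snd p)
  refine hasFDerivAt_of_eval h ?_ ?_
  · simp [BrP, Hb, Bmap, gam]
  · simp [BtP, Hb, Amap, Bmap, gam, sub_eq_add_neg]; abel

end Poho
end Stage2
section Stage3
namespace Poho
variable {K : ℕ} {u : E2 → EK K} {U : Set E2}

def fP (u : E2 → EK K) (p : ℝ × ℝ) : ℝ :=
  p.1 ^ 2 / 2 * (⟪Amap u p, Amap u p⟫ - ⟪Bmap u p, Bmap u p⟫)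
def gP (u : E2 → EK K) (p : ℝ × ℝ) : ℝ := p.1 * ⟪Amap u p, Bmap u p⟫
def frP (u : E2 → EK K) (p : ℝ × ℝ) : ℝ :=
  p.1 ^ 2 / 2 * ((⟪Amap u p, ArP u p⟫ + ⟪ArP u p, Amap u p⟫)
    - (⟪Bmap u p, BrP u p⟫ + ⟪BrP u p, Bmap u p⟫))
  + (⟪Amap u p, Amap u p⟫ - ⟪Bmap u p, Bmap u p⟫) * p.1
def ftP (u : E2 → EK K) (p : ℝ × ℝ) : ℝ :=
  p.1 ^ 2 / 2 * ((⟪Amap u p, AtP u p⟫ + ⟪AtP u p, Amap u p⟫)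
    - (⟪Bmap u p, BtP u p⟫ + ⟪BtP u p, Bmap u p⟫))
def grP (u : E2 → EK K) (p : ℝ × ℝ) : ℝ :=
  p.1 * (⟪Amap u p, BrP u p⟫ + ⟪ArP u p, Bmap u p⟫) + ⟪Amap u p, Bmap u p⟫
def gtP (u : E2 → EK K) (p : ℝ × ℝ) : ℝ :=
  p.1 * (⟪Amap u p, BtP u p⟫ + ⟪AtP u p, Bmap u p⟫)
def divP (u : E2 → EK K) (p : ℝ × ℝ) : ℝ :=
  p.1 ^ 2 * ⟪Amap u p, Hb u p (ee1 p.2) (ee1 p.2) + Hb u p (ee2 p.2) (ee2 p.2)⟫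

lemma hasFDerivAt_half_sq (p : ℝ × ℝ) :
    HasFDerivAt (fun q : ℝ × ℝ => q.1 ^ 2 / 2) (lin2E p.1 0) p := by
  have h := ((hasFDerivAt_fst (𝕜 := ℝ) (E := ℝ) (F := ℝ) (p := p)).mul
    (hasFDerivAt_fst (𝕜 := ℝ) (E := ℝ) (F := ℝ) (p := p))).const_mul (2⁻¹ : ℝ)
  rw [show (fun q : ℝ × ℝ => q.1 ^ 2 / 2) = fun q : ℝ × ℝ => (2⁻¹ : ℝ) * (q.1 * q.1) from
    funext fun q => by ring]
  refine hasFDerivAt_of_eval h ?_ ?_ <;> simp <;> ring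

lemma hasFDerivAt_fP (hUo : IsOpen U) (hu2 : ContDiffOn ℝ 2 u U) {p : ℝ × ℝ}
    (hp : gam p ∈ U) : HasFDerivAt (fP u) (lin2E (frP u p) (ftP u p)) p := by
  have hA := hasFDerivAt_Amap hUo hu2 hp
  have hB := hasFDerivAt_Bmap hUo hu2 hp
  have h := (hasFDerivAt_half_sq p).mul ((hA.inner ℝ hA).sub (hB.inner ℝ hB))
  refine hasFDerivAt_of_eval h ?_ ?_ <;>
    (simp [frP, ftP, fderivInnerCLM_apply]; try ring)

lemma hasFDerivAt_gP (hUo : IsOpen U) (hu2 : ContDiffOn ℝ 2 u U) {p : ℝ × ℝ}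
    (hp : gam p ∈ U) : HasFDerivAt (gP u) (lin2E (grP u p) (gtP u p)) p := by
  have hA := hasFDerivAt_Amap hUo hu2 hp
  have hB := hasFDerivAt_Bmap hUo hu2 hp
  have h := (hasFDerivAt_fst (𝕜 := ℝ) (E := ℝ) (F := ℝ) (p := p)).mul (hA.inner ℝ hB)
  refine hasFDerivAt_of_eval h ?_ ?_ <;>
    (simp [grP, gtP, fderivInnerCLM_apply]; try ring)

lemma div_identity (hUo : IsOpen U) (hu2 : ContDiffOn ℝ 2 u U) {p : ℝ × ℝ}
    (hp : gam p ∈ U) : frP u p + gtP u p = divP u p := by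
  have hsym : ∀ v w : E2, Hb u p v w = Hb u p w v :=
    (hu2.contDiffAt (hUo.mem_nhds hp)).isSymmSndFDerivAt (by norm_num)
  have c1 : ⟪Hb u p (ee1 p.2) (ee1 p.2), Amap u p⟫ = ⟪Amap u p, Hb u p (ee1 p.2) (ee1 p.2)⟫ :=
    real_inner_comm _ _
  have c2 : ⟪Hb u p (ee1 p.2) (ee2 p.2), Bmap u p⟫ = ⟪Bmap u p, Hb u p (ee1 p.2) (ee2 p.2)⟫ :=
    real_inner_comm _ _
  have c3 : ⟪Hb u p (ee2 p.2) (ee1 p.2), Bmap u p⟫ = ⟪Bmap u p, Hb u p (ee1 p.2) (ee2 p.2)⟫ := by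
    rw [hsym]; exact real_inner_comm _ _
  have c4 : ⟪Amap u p, Hb u p (ee2 p.2) (ee1 p.2)⟫ = ⟪Amap u p, Hb u p (ee1 p.2) (ee2 p.2)⟫ := by
    rw [hsym]
  simp only [frP, gtP, divP, AtP, BtP, ArP, BrP, inner_add_left, inner_add_right, inner_sub_left,
    inner_sub_right, inner_smul_left, inner_smul_right, RCLike.conj_to_real, c1, c2, c3, c4]
  ring

end Poho
end Stage3

section Stage4
namespace Poho
variable {K : ℕ} {u : E2 → EK K} {U : Set E2}

lemma fderiv_clm_eval (hUo : IsOpen U) (hu2 : ContDiffOn ℝ 2 u U) {x : E2} (hx : x ∈ U)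
    (v w : E2) :
    fderiv ℝ (fun y => fderiv ℝ u y v) x w = fderiv ℝ (fderiv ℝ u) x w v := by
  have hd : DifferentiableAt ℝ (fderiv ℝ u) x :=
    (((hu2.fderiv_of_isOpen hUo (m := 1) (by norm_num)).differentiableOn one_ne_zero) _ hx).differentiableAt
      (hUo.mem_nhds hx)
  have h := hd.hasFDerivAt.clm_apply (hasFDerivAt_const v x)
  rw [h.fderiv]
  simp

lemma lapl_eq (hUo : IsOpen U) (hu2 : ContDiffOn ℝ 2 u U) {x : E2} (hx : x ∈ U) :
    lapl u x = fderiv ℝ (fderiv ℝ u) x s0 s0 + fderiv ℝ (fderiv ℝ u) x s1 s1 := by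
  rw [lapl, Fin.sum_univ_two, fderiv_clm_eval hUo hu2 hx, fderiv_clm_eval hUo hu2 hx]
  rfl

lemma trace_rot (H : E2 →L[ℝ] E2 →L[ℝ] EK K) (θ : ℝ) :
    H (ee1 θ) (ee1 θ) + H (ee2 θ) (ee2 θ) = H s0 s0 + H s1 s1 := by
  simp only [ee1, ee2, map_add, _root_.map_smul, ContinuousLinearMap.add_apply,
    ContinuousLinearMap.smul_apply, ContinuousLinearMap.coe_smul', Pi.smul_apply]
  match_scalars <;> nlinarith [Real.sin_sq_add_cos_sq θ]

lemma grad_rot (L : E2 →L[ℝ] EK K) (θ : ℝ) :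
    ⟪L (ee1 θ), L (ee1 θ)⟫ + ⟪L (ee2 θ), L (ee2 θ)⟫ = ⟪L s0, L s0⟫ + ⟪L s1, L s1⟫ := by
  simp only [ee1, ee2, map_add, _root_.map_smul, inner_add_left, inner_add_right,
    real_inner_smul_left, real_inner_smul_right]
  linear_combination (⟪L s0, L s0⟫ + ⟪L s1, L s1⟫) * Real.sin_sq_add_cos_sq θ

lemma phi_eq (hUo : IsOpen U) (hu2 : ContDiffOn ℝ 2 u U) {p : ℝ × ℝ} (hp : gam p ∈ U) :
    p.1 * ⟪fderiv ℝ u (gam p) (gam p), lapl u (gam p)⟫ = divP u p := by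
  have hg : gam p = p.1 • ee1 p.2 := cpt_eq p.1 p.2
  have h1 : fderiv ℝ u (gam p) (gam p) = p.1 • Amap u p := by
    rw [Amap, ← ContinuousLinearMap.map_smul, ← hg]
  rw [h1, lapl_eq hUo hu2 hp, ← trace_rot (fderiv ℝ (fderiv ℝ u) (gam p)) p.2,
    real_inner_smul_left]
  rw [divP]
  have : Hb u p (ee1 p.2) (ee1 p.2) + Hb u p (ee2 p.2) (ee2 p.2)
      = fderiv ℝ (fderiv ℝ u) (gam p) (ee1 p.2) (ee1 p.2)
        + fderiv ℝ (fderiv ℝ u) (gam p) (ee2 p.2) (ee2 p.2) := rfl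
  rw [this]; ring

lemma grad2_eq (hUo : IsOpen U) (hu2 : ContDiffOn ℝ 2 u U) {p : ℝ × ℝ} (hp : gam p ∈ U) :
    grad2 u (gam p) = ⟪Amap u p, Amap u p⟫ + ⟪Bmap u p, Bmap u p⟫ := by
  rw [grad2, Fin.sum_univ_two]
  rw [← real_inner_self_eq_norm_sq, ← real_inner_self_eq_norm_sq]
  have e0 : EuclideanSpace.single (0 : Fin 2) (1 : ℝ) = s0 := rfl
  have e1 : EuclideanSpace.single (1 : Fin 2) (1 : ℝ) = s1 := rfl
  simp only [e0, e1]
  rw [← grad_rot (fderiv ℝ u (gam p)) p.2]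
  rfl

lemma rderiv_eq {p : ℝ × ℝ} (hr : 0 < p.1) : rderiv u (gam p) = Amap u p := by
  rw [rderiv, Amap]
  congr 1
  have hn : ‖gam p‖ = p.1 := norm_cpt p.1 p.2 hr.le
  rw [hn, show gam p = p.1 • ee1 p.2 from cpt_eq p.1 p.2, smul_smul,
    inv_mul_cancel₀ hr.ne', one_smul]

lemma bdry_pt_eq (hUo : IsOpen U) (hu2 : ContDiffOn ℝ 2 u U) {t θ : ℝ} (htpos : 0 < t)
    (hp : gam (t, θ) ∈ U) :
    t * ((‖rderiv u (cpt t θ)‖ ^ 2 - grad2 u (cpt t θ) / 2) * t) = fP u (t, θ) := by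
  have h0 : cpt t θ = gam (t, θ) := rfl
  rw [h0, rderiv_eq (by exact htpos), grad2_eq hUo hu2 hp, fP,
    ← real_inner_self_eq_norm_sq]
  ring

end Poho
end Stage4

section Stage5
namespace Poho
variable {K : ℕ} {u : E2 → EK K} {U : Set E2}

lemma cont_ee1 : Continuous ee1 :=
  (Real.continuous_cos.smul continuous_const).add (Real.continuous_sin.smul continuous_const)

lemma cont_ee2 : Continuous ee2 :=
  ((Real.continuous_sin.neg).smul continuous_const).add
    (Real.continuous_cos.smul continuous_const)

lemma cont_gam : Continuous gam := by
  have : gam = fun p : ℝ × ℝ => p.1 • ee1 p.2 := funext fun p => cpt_eq p.1 p.2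
  rw [this]
  exact continuous_fst.smul (cont_ee1.comp continuous_snd)

def VV (U : Set E2) : Set (ℝ × ℝ) := gam ⁻¹' U

lemma maps_VV : Set.MapsTo gam (VV U) U := fun p hp => hp

lemma cont_Lgam (hUo : IsOpen U) (hu2 : ContDiffOn ℝ 2 u U) :
    ContinuousOn (fun p => fderiv ℝ u (gam p)) (VV U) :=
  ((hu2.continuousOn_fderiv_of_isOpen hUo (by norm_num)).comp cont_gam.continuousOn maps_VV)

lemma cont_Hgam (hUo : IsOpen U) (hu2 : ContDiffOn ℝ 2 u U) :
    ContinuousOn (fun p => fderiv ℝ (fderiv ℝ u) (gam p)) (VV U) :=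
  (((hu2.fderiv_of_isOpen hUo (by norm_num)).continuousOn_fderiv_of_isOpen hUo
    le_rfl).comp cont_gam.continuousOn maps_VV)

lemma cont_Amap (hUo : IsOpen U) (hu2 : ContDiffOn ℝ 2 u U) :
    ContinuousOn (Amap u) (VV U) :=
  (cont_Lgam hUo hu2).clm_apply (cont_ee1.comp continuous_snd).continuousOn

lemma cont_Bmap (hUo : IsOpen U) (hu2 : ContDiffOn ℝ 2 u U) :
    ContinuousOn (Bmap u) (VV U) :=
  (cont_Lgam hUo hu2).clm_apply (cont_ee2.comp continuous_snd).continuousOn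

lemma cont_Hb (hUo : IsOpen U) (hu2 : ContDiffOn ℝ 2 u U)
    {a b : ℝ → E2} (ha : Continuous a) (hb : Continuous b) :
    ContinuousOn (fun p => Hb u p (a p.2) (b p.2)) (VV U) :=
  ((cont_Hgam hUo hu2).clm_apply (ha.comp continuous_snd).continuousOn).clm_apply
    (hb.comp continuous_snd).continuousOn

lemma cont_divP (hUo : IsOpen U) (hu2 : ContDiffOn ℝ 2 u U) :
    ContinuousOn (divP u) (VV U) := by
  refine ((continuous_fst.pow 2).continuousOn).mul ?_
  exact (cont_Amap hUo hu2).inner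
    ((cont_Hb hUo hu2 cont_ee1 cont_ee1).add (cont_Hb hUo hu2 cont_ee2 cont_ee2))

lemma cont_fP (hUo : IsOpen U) (hu2 : ContDiffOn ℝ 2 u U) :
    ContinuousOn (fP u) (VV U) := by
  refine (((continuous_fst.pow 2).div_const 2).continuousOn).mul ?_
  exact ((cont_Amap hUo hu2).inner (cont_Amap hUo hu2)).sub
    ((cont_Bmap hUo hu2).inner (cont_Bmap hUo hu2))

lemma cont_gP (hUo : IsOpen U) (hu2 : ContDiffOn ℝ 2 u U) :
    ContinuousOn (gP u) (VV U) :=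
  (continuous_fst.continuousOn).mul ((cont_Amap hUo hu2).inner (cont_Bmap hUo hu2))

lemma ee1_per (θ : ℝ) : ee1 (θ + 2 * Real.pi) = ee1 θ := by
  simp [ee1, Real.cos_add_two_pi, Real.sin_add_two_pi]

lemma ee2_per (θ : ℝ) : ee2 (θ + 2 * Real.pi) = ee2 θ := by
  simp [ee2, Real.cos_add_two_pi, Real.sin_add_two_pi]

lemma gam_per (r θ : ℝ) : gam (r, θ + 2 * Real.pi) = gam (r, θ) := by
  have h1 := cpt_eq r (θ + 2 * Real.pi)
  have h2 := cpt_eq r θ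
  show cpt r (θ + 2 * Real.pi) = cpt r θ
  rw [h1, h2, ee1_per]

lemma Amap_per (r θ : ℝ) : Amap u (r, θ + 2 * Real.pi) = Amap u (r, θ) := by
  simp only [Amap, gam_per, ee1_per]

lemma Bmap_per (r θ : ℝ) : Bmap u (r, θ + 2 * Real.pi) = Bmap u (r, θ) := by
  simp only [Bmap, gam_per, ee2_per]

lemma fP_per (r θ : ℝ) : fP u (r, θ + 2 * Real.pi) = fP u (r, θ) := by
  simp only [fP, Amap_per, Bmap_per]

lemma gP_per (r θ : ℝ) : gP u (r, θ + 2 * Real.pi) = gP u (r, θ) := by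
  simp only [gP, Amap_per, Bmap_per]

lemma divP_per (r θ : ℝ) : divP u (r, θ + 2 * Real.pi) = divP u (r, θ) := by
  simp only [divP, Hb, Amap_per, gam_per, ee1_per, ee2_per]

end Poho
end Stage5

open Poho

/-- Pohozaev identity: for `u` of class `C²` near the closed annulus `{t₂ ≤ |x| ≤ t₁}`,
`∫_{B_{t₁} \ B_{t₂}} ⟨x·∇u, Δu⟩ = ∫_{∂B_{t₁}} t₁(|∂u/∂r|² − ½|∇u|²) dS
  − ∫_{∂B_{t₂}} t₂(|∂u/∂r|² − ½|∇u|²) dS`. -/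
theorem statement2 {K : ℕ} (t₁ t₂ : ℝ) (ht₂ : 0 < t₂) (ht : t₂ < t₁)
    (u : E2 → EK K)
    (hu : ∃ U : Set E2, IsOpen U ∧ (closedBall (0 : E2) t₁ \ ball 0 t₂) ⊆ U ∧
      ContDiffOn ℝ 2 u U) :
    (∫ x in ball (0 : E2) t₁ \ ball 0 t₂, ⟪fderiv ℝ u x x, lapl u x⟫) =
      t₁ * bdry u t₁ - t₂ * bdry u t₂ := by
  obtain ⟨U, hUo, hUsub, hu2⟩ := hu
  have ht₁ : 0 < t₁ := ht₂.trans ht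
  have hπ := Real.pi_pos
  have h2π : (0:ℝ) ≤ 2 * Real.pi := by linarith
  -- membership of polar points in U
  have hmemU : ∀ p : ℝ × ℝ, t₂ ≤ p.1 → p.1 ≤ t₁ → gam p ∈ U := by
    intro p h1 h2
    apply hUsub
    have hn : ‖gam p‖ = p.1 := norm_cpt p.1 p.2 (le_trans ht₂.le h1)
    refine ⟨mem_closedBall_zero_iff.2 (by rw [hn]; exact h2), fun hc => ?_⟩
    rw [mem_ball_zero_iff, hn] at hc
    linarith
  have hsub1 : (Icc t₂ t₁ ×ˢ Icc 0 (2 * Real.pi)) ⊆ VV U :=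
    fun p hp => hmemU p hp.1.1 hp.1.2
  have hsub2 : (Icc t₂ t₁ ×ˢ Icc (-Real.pi) Real.pi) ⊆ VV U :=
    fun p hp => hmemU p hp.1.1 hp.1.2
  set φ : E2 → ℝ := fun x => ⟪fderiv ℝ u x x, lapl u x⟫ with hφ
  set S : Set E2 := ball (0 : E2) t₁ \ ball 0 t₂ with hSdef
  have hSmeas : MeasurableSet S := measurableSet_ball.diff measurableSet_ball
  -- boundary integrals
  have hbdry : ∀ t : ℝ, 0 < t → t₂ ≤ t → t ≤ t₁ →
      t * bdry u t = ∫ θ in (0:ℝ)..(2 * Real.pi), fP u (t, θ) := by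
    intro t h0 hge hle
    rw [bdry, ← intervalIntegral.integral_const_mul]
    refine intervalIntegral.integral_congr fun θ _ => ?_
    exact bdry_pt_eq hUo hu2 h0 (hmemU (t, θ) hge hle)
  -- divergence theorem on the rectangle
  have hIcc1 : Set.uIcc t₂ t₁ = Icc t₂ t₁ := uIcc_of_le ht.le
  have hIcc2 : Set.uIcc (0:ℝ) (2 * Real.pi) = Icc 0 (2 * Real.pi) := uIcc_of_le h2π
  have hdivint : IntegrableOn (divP u) (Icc t₂ t₁ ×ˢ Icc 0 (2 * Real.pi)) :=
    ((cont_divP hUo hu2).mono hsub1).integrableOn_compact (isCompact_Icc.prod isCompact_Icc)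
  have hEq' : ∀ p ∈ Icc t₂ t₁ ×ˢ Icc 0 (2 * Real.pi),
      divP u p = (lin2E (frP u p) (ftP u p)) (1, 0) + (lin2E (grP u p) (gtP u p)) (0, 1) := by
    intro p hp
    simp only [lin2E_apply, one_smul, zero_smul, smul_eq_mul, one_mul, zero_mul,
      add_zero, zero_add]
    exact (div_identity hUo hu2 (hsub1 hp)).symm
  have hdiv := MeasureTheory.integral2_divergence_prod_of_hasFDerivAt_off_countable
    (fP u) (gP u) (fun p => lin2E (frP u p) (ftP u p)) (fun p => lin2E (grP u p) (gtP u p))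
    t₂ 0 t₁ (2 * Real.pi) ∅ Set.countable_empty
    (by rw [hIcc1, hIcc2]; exact (cont_fP hUo hu2).mono hsub1)
    (by rw [hIcc1, hIcc2]; exact (cont_gP hUo hu2).mono hsub1)
    (by
      intro p hp
      rw [min_eq_left ht.le, max_eq_right ht.le, min_eq_left h2π, max_eq_right h2π] at hp
      exact hasFDerivAt_fP hUo hu2 (hmemU p hp.1.1.1.le hp.1.1.2.le))
    (by
      intro p hp
      rw [min_eq_left ht.le, max_eq_right ht.le, min_eq_left h2π, max_eq_right h2π] at hp
      exact hasFDerivAt_gP hUo hu2 (hmemU p hp.1.1.1.le hp.1.1.2.le))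
    (by
      rw [hIcc1, hIcc2]
      exact hdivint.congr_fun hEq' (measurableSet_Icc.prod measurableSet_Icc))
  -- the g-boundary terms cancel by periodicity
  have hgper : (∫ x in t₂..t₁, gP u (x, 2 * Real.pi)) = ∫ x in t₂..t₁, gP u (x, 0) := by
    refine intervalIntegral.integral_congr fun r _ => ?_
    simpa using gP_per (u := u) r 0
  -- rewrite the divergence-theorem LHS as the iterated integral of divP
  have hLHSdiv : (∫ x in t₂..t₁, ∫ y in (0:ℝ)..(2 * Real.pi),
        ((lin2E (frP u (x, y)) (ftP u (x, y))) (1, 0) +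
          (lin2E (grP u (x, y)) (gtP u (x, y))) (0, 1)))
      = ∫ x in t₂..t₁, ∫ y in (0:ℝ)..(2 * Real.pi), divP u (x, y) := by
    refine intervalIntegral.integral_congr fun r hr => ?_
    refine intervalIntegral.integral_congr fun θ hθ => ?_
    rw [hIcc1] at hr; rw [hIcc2] at hθ
    exact (hEq' (r, θ) ⟨hr, hθ⟩).symm
  -- change of variables to polar coordinates
  set Teq : (ℝ × ℝ) ≃ᵐ E2 :=
    (MeasurableEquiv.finTwoArrow).symm.trans (MeasurableEquiv.toLp 2 (Fin 2 → ℝ))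
    with hTeqdef
  have hTpre : MeasurePreserving Teq volume volume := by
    exact ((EuclideanSpace.volume_preserving_symm_measurableEquiv_toLp (Fin 2)).symm).comp
      ((volume_preserving_finTwoArrow ℝ).symm)
  have hTgam : ∀ p : ℝ × ℝ, Teq (polarCoord.symm p) = gam p := by
    intro p
    have hps : polarCoord.symm p = (p.1 * Real.cos p.2, p.1 * Real.sin p.2) := rfl
    rw [hps]
    ext i
    fin_cases i <;>
      simp [hTeqdef, gam, cpt, WithLp.equiv_symm_apply,
        MeasurableEquiv.toLp_apply, MeasurableEquiv.finTwoArrow]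
  have hn' : ∀ p : ℝ × ℝ, 0 < p.1 → ‖gam p‖ = p.1 := fun p hp => norm_cpt p.1 p.2 hp.le
  have hpt : ∀ p ∈ polarCoord.target,
      p.1 • S.indicator φ (gam p)
        = (Ico t₂ t₁ ×ˢ (univ : Set ℝ)).indicator (fun q => q.1 * φ (gam q)) p := by
    intro p hp
    have hp1 : 0 < p.1 := hp.1
    by_cases hc : t₂ ≤ p.1 ∧ p.1 < t₁
    · have hmem : gam p ∈ S := by
        refine ⟨mem_ball_zero_iff.2 (by rw [hn' p hp1]; exact hc.2), fun hcon => ?_⟩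
        rw [mem_ball_zero_iff, hn' p hp1] at hcon
        linarith [hc.1]
      have hmem2 : p ∈ Ico t₂ t₁ ×ˢ (univ : Set ℝ) := ⟨hc, trivial⟩
      rw [indicator_of_mem hmem, indicator_of_mem hmem2, smul_eq_mul]
    · have h1 : gam p ∉ S := by
        intro hcon
        apply hc
        constructor
        · by_contra h
          exact hcon.2 (mem_ball_zero_iff.2 (by rw [hn' p hp1]; linarith [not_le.1 h]))
        · have := mem_ball_zero_iff.1 hcon.1
          rwa [hn' p hp1] at this
      have h2 : p ∉ Ico t₂ t₁ ×ˢ (univ : Set ℝ) := fun hcon => hc ⟨hcon.1.1, hcon.1.2⟩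
      rw [indicator_of_notMem h1, indicator_of_notMem h2, smul_zero]
  have hset : polarCoord.target ∩ (Ico t₂ t₁ ×ˢ (univ : Set ℝ))
      = Ico t₂ t₁ ×ˢ Ioo (-Real.pi) Real.pi := by
    rw [show polarCoord.target = Ioi (0:ℝ) ×ˢ Ioo (-Real.pi) Real.pi from rfl,
      Set.prod_inter_prod, inter_univ]
    congr 1
    rw [inter_eq_right]
    exact fun x hx => lt_of_lt_of_le ht₂ hx.1
  have hdivint2 : IntegrableOn (divP u) (Ico t₂ t₁ ×ˢ Ioo (-Real.pi) Real.pi) :=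
    (((cont_divP hUo hu2).mono hsub2).integrableOn_compact
      (isCompact_Icc.prod isCompact_Icc)).mono_set
      (prod_mono Ico_subset_Icc_self Ioo_subset_Icc_self)
  have hphi : ∀ p ∈ Ico t₂ t₁ ×ˢ Ioo (-Real.pi) Real.pi,
      p.1 * φ (gam p) = divP u p := by
    intro p hp
    exact phi_eq hUo hu2 (hmemU p hp.1.1 hp.1.2.le)
  have hinner : ∀ r : ℝ, (∫ θ in Ioo (-Real.pi) Real.pi, divP u (r, θ))
      = ∫ θ in (0:ℝ)..(2 * Real.pi), divP u (r, θ) := by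
    intro r
    have hper : Function.Periodic (fun θ => divP u (r, θ)) (2 * Real.pi) :=
      fun θ => divP_per r θ
    have hshift := hper.intervalIntegral_add_eq (-Real.pi) 0
    rw [show -Real.pi + 2 * Real.pi = Real.pi by ring, zero_add] at hshift
    rw [setIntegral_congr_set Ioo_ae_eq_Ioc]
    rw [← intervalIntegral.integral_of_le (by linarith : -Real.pi ≤ Real.pi)]
    exact hshift
  have hchain : (∫ x in S, φ x) = ∫ x in t₂..t₁, ∫ y in (0:ℝ)..(2 * Real.pi), divP u (x, y) := by
    calc (∫ x in S, φ x) = ∫ x, S.indicator φ x := (integral_indicator hSmeas).symm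
      _ = ∫ q, S.indicator φ (Teq q) := (hTpre.integral_comp Teq.measurableEmbedding _).symm
      _ = ∫ p in polarCoord.target, p.1 • S.indicator φ (Teq (polarCoord.symm p)) :=
          (integral_comp_polarCoord_symm _).symm
      _ = ∫ p in polarCoord.target, p.1 • S.indicator φ (gam p) := by simp_rw [hTgam]
      _ = ∫ p in polarCoord.target,
            (Ico t₂ t₁ ×ˢ (univ : Set ℝ)).indicator (fun q => q.1 * φ (gam q)) p :=
          setIntegral_congr_fun polarCoord.open_target.measurableSet hpt
      _ = ∫ p in polarCoord.target ∩ (Ico t₂ t₁ ×ˢ (univ : Set ℝ)), p.1 * φ (gam p) :=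
          setIntegral_indicator (measurableSet_Ico.prod MeasurableSet.univ)
      _ = ∫ p in Ico t₂ t₁ ×ˢ Ioo (-Real.pi) Real.pi, p.1 * φ (gam p) := by rw [hset]
      _ = ∫ p in Ico t₂ t₁ ×ˢ Ioo (-Real.pi) Real.pi, divP u p :=
          setIntegral_congr_fun (measurableSet_Ico.prod measurableSet_Ioo) hphi
      _ = ∫ r in Ico t₂ t₁, ∫ θ in Ioo (-Real.pi) Real.pi, divP u (r, θ) := by
          rw [MeasureTheory.Measure.volume_eq_prod] at hdivint2 ⊢
          exact setIntegral_prod _ hdivint2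
      _ = ∫ r in Ico t₂ t₁, ∫ θ in (0:ℝ)..(2 * Real.pi), divP u (r, θ) := by
          simp_rw [hinner]
      _ = ∫ r in Ioc t₂ t₁, ∫ θ in (0:ℝ)..(2 * Real.pi), divP u (r, θ) :=
          setIntegral_congr_set Ico_ae_eq_Ioc
      _ = ∫ r in t₂..t₁, ∫ θ in (0:ℝ)..(2 * Real.pi), divP u (r, θ) :=
          (intervalIntegral.integral_of_le ht.le).symm
  -- put everything together
  rw [show (∫ x in ball (0 : E2) t₁ \ ball 0 t₂, ⟪fderiv ℝ u x x, lapl u x⟫) = ∫ x in S, φ x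
    from rfl, hchain, ← hLHSdiv, hdiv, hgper, sub_self, zero_add,
    hbdry t₁ ht₁ ht.le le_rfl, hbdry t₂ ht₂ le_rfl ht.le]
end
end

section
/- (Pohozaev inequality.) Let 0 < t₂ < t₁ < 1, let u : ℝ² → ℝ^K be C² on a neighborhood of the closed annulus {x : t₂ ≤ |x| ≤ t₁}, and let g : ℝ² → ℝ^K be continuous there with the property that for every x in the annulus the vector Δu(x) − g(x) is orthogonal in ℝ^K to the image of the derivative of u at x. Then ∫_{∂B_{t₁}} t₁ (|∂u/∂r|² − ½|∇u|²) dS − ∫_{∂B_{t₂}} t₂ (|∂u/∂r|² − ½|∇u|²) dS ≤ t₁ · ‖∇u‖_{L²(B_{t₁} \ B_{t₂})} · ‖g‖_{L²(B_{t₁} \ B_{t₂})}. -/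
open MeasureTheory Metric Set
open scoped RealInnerProductSpace

noncomputable section

/-! ### Auxiliary material for the Pohozaev inequality -/

namespace PohAux

/-- the radial unit vector -/
def er (θ : ℝ) : E2 := (WithLp.equiv 2 (Fin 2 → ℝ)).symm ![Real.cos θ, Real.sin θ]
/-- the angular unit vector -/
def et (θ : ℝ) : E2 := (WithLp.equiv 2 (Fin 2 → ℝ)).symm ![-Real.sin θ, Real.cos θ]

def e1 : E2 := EuclideanSpace.single 0 1
def e2 : E2 := EuclideanSpace.single 1 1

lemma er_eq (θ : ℝ) : er θ = Real.cos θ • e1 + Real.sin θ • e2 := by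
  ext i
  fin_cases i <;>
    simp [er, e1, e2, EuclideanSpace.single_apply]

lemma et_eq (θ : ℝ) : et θ = (-Real.sin θ) • e1 + Real.cos θ • e2 := by
  ext i
  fin_cases i <;>
    simp [et, e1, e2, EuclideanSpace.single_apply]

lemma cpt_eq (r θ : ℝ) : cpt r θ = r • er θ := by
  ext i
  fin_cases i <;> simp [cpt, er]

lemma norm_er (θ : ℝ) : ‖er θ‖ = 1 := by
  have : ‖er θ‖ ^ 2 = 1 := by
    rw [EuclideanSpace.norm_eq]
    rw [Real.sq_sqrt (by positivity)]
    simp [er, Fin.sum_univ_two]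
  nlinarith [norm_nonneg (er θ)]

lemma norm_cpt (r θ : ℝ) (hr : 0 ≤ r) : ‖cpt r θ‖ = r := by
  rw [cpt_eq, norm_smul, norm_er, Real.norm_eq_abs, abs_of_nonneg hr, mul_one]

lemma hasDerivAt_er (θ : ℝ) : HasDerivAt er (et θ) θ := by
  have h : ∀ θ', er θ' = Real.cos θ' • e1 + Real.sin θ' • e2 := er_eq
  rw [show er = fun θ' => Real.cos θ' • e1 + Real.sin θ' • e2 from funext h, et_eq]
  exact ((Real.hasDerivAt_cos θ).smul_const e1).add ((Real.hasDerivAt_sin θ).smul_const e2)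

lemma hasDerivAt_et (θ : ℝ) : HasDerivAt et (-er θ) θ := by
  have h : ∀ θ', et θ' = (-Real.sin θ') • e1 + Real.cos θ' • e2 := et_eq
  rw [show et = fun θ' => (-Real.sin θ') • e1 + Real.cos θ' • e2 from funext h]
  have : -er θ = (-Real.cos θ) • e1 + (-Real.sin θ) • e2 := by
    rw [er_eq]; module
  rw [this]
  exact (((Real.hasDerivAt_sin θ).neg).smul_const e1).add
    ((Real.hasDerivAt_cos θ).smul_const e2)

lemma continuous_er : Continuous er :=
  continuous_iff_continuousAt.2 fun θ => (hasDerivAt_er θ).continuousAt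

lemma continuous_et : Continuous et :=
  continuous_iff_continuousAt.2 fun θ => (hasDerivAt_et θ).continuousAt

lemma er_periodic : Function.Periodic er (2 * Real.pi) := by
  intro θ; simp [er, Real.cos_add_two_pi, Real.sin_add_two_pi]

lemma et_periodic : Function.Periodic et (2 * Real.pi) := by
  intro θ; simp [et, Real.cos_add_two_pi, Real.sin_add_two_pi]

/-- expansion of squared norm -/
lemma normsq_expand {K : ℕ} (a b : ℝ) (x y : EK K) :
    ‖a • x + b • y‖ ^ 2 = a ^ 2 * ‖x‖ ^ 2 + 2 * (a * b) * ⟪x, y⟫ + b ^ 2 * ‖y‖ ^ 2 := by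
  rw [norm_add_sq_real, real_inner_smul_left, real_inner_smul_right, norm_smul, norm_smul]
  simp [mul_pow, sq_abs]
  ring

/-- rotation invariance of the HS norm of a linear map -/
lemma rot_norm {K : ℕ} (L : E2 →L[ℝ] EK K) (θ : ℝ) :
    ‖L (er θ)‖ ^ 2 + ‖L (et θ)‖ ^ 2 = ‖L e1‖ ^ 2 + ‖L e2‖ ^ 2 := by
  have h1 : L (er θ) = Real.cos θ • L e1 + Real.sin θ • L e2 := by
    rw [er_eq]; simp
  have h2 : L (et θ) = (-Real.sin θ) • L e1 + Real.cos θ • L e2 := by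
    rw [et_eq]; simp
  rw [h1, h2, normsq_expand, normsq_expand]
  nlinarith [Real.sin_sq_add_cos_sq θ]

lemma grad2_eq {K : ℕ} (u : E2 → EK K) (x : E2) (θ : ℝ) :
    grad2 u x = ‖fderiv ℝ u x (er θ)‖ ^ 2 + ‖fderiv ℝ u x (et θ)‖ ^ 2 := by
  have h := rot_norm (fderiv ℝ u x) θ
  rw [grad2, Fin.sum_univ_two,
    show EuclideanSpace.single (0 : Fin 2) (1 : ℝ) = e1 from rfl,
    show EuclideanSpace.single (1 : Fin 2) (1 : ℝ) = e2 from rfl]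
  exact h.symm

lemma grad2_nonneg {K : ℕ} (u : E2 → EK K) (x : E2) : 0 ≤ grad2 u x :=
  Finset.sum_nonneg fun i _ => sq_nonneg _

/-- The polar parametrization map. -/
def Φ (p : ℝ × ℝ) : E2 := cpt p.1 p.2

lemma Φ_periodic (t θ : ℝ) : Φ (t, θ + 2 * Real.pi) = Φ (t, θ) := by
  show cpt t (θ + 2 * Real.pi) = cpt t θ
  rw [cpt_eq, cpt_eq, er_periodic θ]

lemma hasFDerivAt_Φ (p : ℝ × ℝ) :
    HasFDerivAt Φ
      (p.1 • ((ContinuousLinearMap.snd ℝ ℝ ℝ).smulRight (et p.2)) +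
        (ContinuousLinearMap.fst ℝ ℝ ℝ).smulRight (er p.2)) p := by
  have hE : HasFDerivAt (fun q : ℝ × ℝ => er q.2)
      (((1 : ℝ →L[ℝ] ℝ).smulRight (et p.2)).comp (ContinuousLinearMap.snd ℝ ℝ ℝ)) p :=
    ((hasDerivAt_er p.2).hasFDerivAt).comp p hasFDerivAt_snd
  have h := (hasFDerivAt_fst (p := p)).smul hE
  have heq : (fun q : ℝ × ℝ => q.1 • er q.2) = Φ := by
    funext q; rw [Φ, cpt_eq]
  rw [← heq]
  have : ((1 : ℝ →L[ℝ] ℝ).smulRight (et p.2)).comp (ContinuousLinearMap.snd ℝ ℝ ℝ)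
      = (ContinuousLinearMap.snd ℝ ℝ ℝ).smulRight (et p.2) := by
    refine ContinuousLinearMap.ext fun v => ?_
    simp
  rw [this] at h
  exact h

lemma continuous_Φ : Continuous Φ := by
  have heq : (fun q : ℝ × ℝ => q.1 • er q.2) = Φ := by
    funext q; rw [Φ, cpt_eq]
  rw [← heq]
  exact continuous_fst.smul (continuous_er.comp continuous_snd)

section U

variable {K : ℕ} {u : E2 → EK K} {U : Set E2} (hUo : IsOpen U) (hu : ContDiffOn ℝ 2 u U)
include hUo hu

lemma hasFDerivAt_u' {x : E2} (hx : x ∈ U) : HasFDerivAt u (fderiv ℝ u x) x :=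
  ((hu.differentiableOn (by norm_num)).differentiableAt (hUo.mem_nhds hx)).hasFDerivAt

lemma contDiffOn_L : ContDiffOn ℝ 1 (fderiv ℝ u) U :=
  hu.fderiv_of_isOpen hUo (by norm_num)

lemma hasFDerivAt_L' {x : E2} (hx : x ∈ U) :
    HasFDerivAt (fderiv ℝ u) (fderiv ℝ (fderiv ℝ u) x) x :=
  (((contDiffOn_L hUo hu).differentiableOn (by norm_num)).differentiableAt
    (hUo.mem_nhds hx)).hasFDerivAt

lemma contOn_L : ContinuousOn (fderiv ℝ u) U := (contDiffOn_L hUo hu).continuousOn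

lemma contOn_H : ContinuousOn (fderiv ℝ (fderiv ℝ u)) U :=
  (contDiffOn_L hUo hu).continuousOn_fderiv_of_isOpen hUo (by norm_num)

lemma symm_H' {x : E2} (hx : x ∈ U) (v w : E2) :
    fderiv ℝ (fderiv ℝ u) x v w = fderiv ℝ (fderiv ℝ u) x w v := by
  refine second_derivative_symmetric_of_eventually (f := u) ?_ (hasFDerivAt_L' hUo hu hx) v w
  filter_upwards [hUo.mem_nhds hx] with y hy using hasFDerivAt_u' hUo hu hy

lemma fderiv_apply_dir {x : E2} (hx : x ∈ U) (v w : E2) :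
    fderiv ℝ (fun y => fderiv ℝ u y v) x w = fderiv ℝ (fderiv ℝ u) x w v := by
  have h : HasFDerivAt (fun y => fderiv ℝ u y v)
      ((ContinuousLinearMap.apply ℝ (EK K) v).comp (fderiv ℝ (fderiv ℝ u) x)) x :=
    ((ContinuousLinearMap.apply ℝ (EK K) v).hasFDerivAt).comp x (hasFDerivAt_L' hUo hu hx)
  rw [h.fderiv]
  simp

lemma lapl_eq' {x : E2} (hx : x ∈ U) :
    lapl u x = fderiv ℝ (fderiv ℝ u) x e1 e1 + fderiv ℝ (fderiv ℝ u) x e2 e2 := by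
  rw [lapl, Fin.sum_univ_two,
    fderiv_apply_dir hUo hu hx, fderiv_apply_dir hUo hu hx]
  rfl

lemma contOn_lapl : ContinuousOn (lapl u) U := by
  refine ContinuousOn.congr ?_ (fun x hx => lapl_eq' hUo hu hx)
  exact (((contOn_H hUo hu).clm_apply continuousOn_const).clm_apply continuousOn_const).add
    (((contOn_H hUo hu).clm_apply continuousOn_const).clm_apply continuousOn_const)

end U

variable {K : ℕ}

/-- the radial first derivative along the polar parametrization -/
def aa {K : ℕ} (u : E2 → EK K) (q : ℝ × ℝ) : EK K := fderiv ℝ u (Φ q) (er q.2)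
/-- the angular first derivative along the polar parametrization -/
def bb {K : ℕ} (u : E2 → EK K) (q : ℝ × ℝ) : EK K := fderiv ℝ u (Φ q) (et q.2)
/-- first component of the Pohozaev vector field in polar coordinates -/
def ff {K : ℕ} (u : E2 → EK K) (q : ℝ × ℝ) : ℝ :=
  2⁻¹ * (q.1 * q.1 * (⟪aa u q, aa u q⟫ - ⟪bb u q, bb u q⟫))
/-- second component of the Pohozaev vector field in polar coordinates -/
def hh {K : ℕ} (u : E2 → EK K) (q : ℝ × ℝ) : ℝ :=
  q.1 * ⟪bb u q, aa u q⟫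
/-- the divergence of the Pohozaev vector field -/
def FF {K : ℕ} (u : E2 → EK K) (q : ℝ × ℝ) : ℝ :=
  q.1 * q.1 * ⟪lapl u (Φ q), aa u q⟫

lemma inner_rot (P : E2 →L[ℝ] E2 →L[ℝ] EK K) (θ : ℝ) (v : EK K) :
    ⟪P (er θ) (er θ), v⟫ + ⟪P (et θ) (et θ), v⟫ = ⟪P e1 e1, v⟫ + ⟪P e2 e2, v⟫ := by
  rw [er_eq, et_eq]
  simp only [map_add, ContinuousLinearMap.map_smul, map_neg, ContinuousLinearMap.add_apply,
    ContinuousLinearMap.smul_apply, ContinuousLinearMap.neg_apply,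
    inner_add_left, real_inner_smul_left, inner_neg_left]
  linear_combination (Real.sin_sq_add_cos_sq θ) * (⟪(P e1) e1, v⟫ + ⟪(P e2) e2, v⟫)

theorem key {u : E2 → EK K} {U : Set E2} (hUo : IsOpen U) (hu : ContDiffOn ℝ 2 u U)
    (p : ℝ × ℝ) (hp : Φ p ∈ U) :
    ∃ Df Dh : ℝ × ℝ →L[ℝ] ℝ, HasFDerivAt (ff u) Df p ∧ HasFDerivAt (hh u) Dh p ∧
      Df (1, 0) + Dh (0, 1) = FF u p := by
  set P := fderiv ℝ (fderiv ℝ u) (Φ p) with hP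
  have hΦ := hasFDerivAt_Φ p
  set DΦ := (p.1 • ((ContinuousLinearMap.snd ℝ ℝ ℝ).smulRight (et p.2)) +
        (ContinuousLinearMap.fst ℝ ℝ ℝ).smulRight (er p.2)) with hDΦ
  have hW : HasFDerivAt (fun q => fderiv ℝ u (Φ q)) (P.comp DΦ) p :=
    (hasFDerivAt_L' hUo hu hp).comp p hΦ
  have hE : HasFDerivAt (fun q : ℝ × ℝ => er q.2)
      (((1 : ℝ →L[ℝ] ℝ).smulRight (et p.2)).comp (ContinuousLinearMap.snd ℝ ℝ ℝ)) p :=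
    ((hasDerivAt_er p.2).hasFDerivAt).comp p hasFDerivAt_snd
  have hEt : HasFDerivAt (fun q : ℝ × ℝ => et q.2)
      (((1 : ℝ →L[ℝ] ℝ).smulRight (-er p.2)).comp (ContinuousLinearMap.snd ℝ ℝ ℝ)) p :=
    ((hasDerivAt_et p.2).hasFDerivAt).comp p hasFDerivAt_snd
  have ha : HasFDerivAt (aa u)
      ((fderiv ℝ u (Φ p)).comp ((((1 : ℝ →L[ℝ] ℝ).smulRight (et p.2)).comp
          (ContinuousLinearMap.snd ℝ ℝ ℝ))) + (P.comp DΦ).flip (er p.2)) p :=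
    hW.clm_apply hE
  have hb : HasFDerivAt (bb u)
      ((fderiv ℝ u (Φ p)).comp ((((1 : ℝ →L[ℝ] ℝ).smulRight (-er p.2)).comp
          (ContinuousLinearMap.snd ℝ ℝ ℝ))) + (P.comp DΦ).flip (et p.2)) p :=
    hW.clm_apply hEt
  have hq : HasFDerivAt (fun q : ℝ × ℝ => q.1 * q.1)
      (p.1 • ContinuousLinearMap.fst ℝ ℝ ℝ + p.1 • ContinuousLinearMap.fst ℝ ℝ ℝ) p :=
    hasFDerivAt_fst.mul hasFDerivAt_fst
  have hff := ((hq.mul ((ha.inner ℝ ha).sub (hb.inner ℝ hb))).const_mul (2⁻¹ : ℝ))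
  have hhh := hasFDerivAt_fst.mul (hb.inner ℝ ha)
  refine ⟨_, _, hff, hhh, ?_⟩
  simp only [ContinuousLinearMap.add_apply, ContinuousLinearMap.smul_apply,
    ContinuousLinearMap.comp_apply, ContinuousLinearMap.smulRight_apply,
    ContinuousLinearMap.flip_apply, ContinuousLinearMap.coe_fst',
    ContinuousLinearMap.coe_snd', ContinuousLinearMap.one_apply,
    fderivInnerCLM_apply, ContinuousLinearMap.prod_apply,
    ContinuousLinearMap.sub_apply, Pi.sub_apply, hDΦ,
    one_smul, zero_smul, smul_zero, add_zero, zero_add, ContinuousLinearMap.map_smul,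
    map_neg, map_zero,
    smul_eq_mul, mul_zero, mul_one, zero_mul, neg_zero]
  rw [FF, lapl_eq' hUo hu hp]
  rw [← hP]
  have hrot := inner_rot P p.2 (aa u p)
  have hsym : ∀ v w : E2, P v w = P w v := symm_H' hUo hu hp
  conv_rhs => rw [inner_add_left, ← hrot]
  rw [hsym (et p.2) (er p.2)]
  simp only [real_inner_smul_left, real_inner_smul_right, inner_neg_left, inner_neg_right,
    inner_add_left, inner_add_right]
  rw [real_inner_comm (aa u p) ((P (er p.2)) (er p.2))]
  rw [real_inner_comm (bb u p) ((P (er p.2)) (et p.2))]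
  simp only [aa, bb]
  rw [real_inner_comm (fderiv ℝ u (Φ p) (et p.2)) (fderiv ℝ u (Φ p) (et p.2) )]
  ring

/-- identification of the boundary term -/
lemma bdry_eq (u : E2 → EK K) (t : ℝ) (htpos : 0 < t) :
    t * bdry u t = ∫ θ in (0:ℝ)..(2 * Real.pi), ff u (t, θ) := by
  rw [bdry, ← intervalIntegral.integral_const_mul]
  refine intervalIntegral.integral_congr fun θ _ => ?_
  have hx : cpt t θ = Φ (t, θ) := rfl
  have hr : rderiv u (cpt t θ) = aa u (t, θ) := by
    rw [rderiv, norm_cpt t θ htpos.le]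
    have harg : t⁻¹ • cpt t θ = er θ := by
      rw [cpt_eq, smul_smul, inv_mul_cancel₀ htpos.ne', one_smul]
    rw [harg]
    rfl
  have hg : grad2 u (cpt t θ) = ‖aa u (t, θ)‖ ^ 2 + ‖bb u (t, θ)‖ ^ 2 := grad2_eq u _ θ
  rw [hr, hg, ff, real_inner_self_eq_norm_sq, real_inner_self_eq_norm_sq]
  show t * ((‖aa u (t, θ)‖ ^ 2 - (‖aa u (t, θ)‖ ^ 2 + ‖bb u (t, θ)‖ ^ 2) / 2) * t) = _
  ring

/-- periodicity of the angular boundary component -/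
lemma hh_per (u : E2 → EK K) (t : ℝ) : hh u (t, 2 * Real.pi) = hh u (t, 0) := by
  have h1 : Φ ((t, 2 * Real.pi) : ℝ × ℝ) = Φ ((t, 0) : ℝ × ℝ) := by
    have := Φ_periodic t 0
    rw [zero_add] at this
    exact this
  have h2 : er (2 * Real.pi) = er 0 := by
    have := er_periodic 0
    rw [zero_add] at this
    exact this
  have h3 : et (2 * Real.pi) = et 0 := by
    have := et_periodic 0
    rw [zero_add] at this
    exact this
  simp only [hh, aa, bb]
  rw [h1, h2, h3]

/-- Cauchy–Schwarz for real integrals -/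
lemma integral_CS {α : Type*} [MeasurableSpace α] (μ : Measure α) (f g : α → ℝ)
    (hf2 : Integrable (fun x => f x ^ 2) μ) (hg2 : Integrable (fun x => g x ^ 2) μ)
    (hfg : Integrable (fun x => f x * g x) μ) :
    ∫ x, f x * g x ∂μ ≤ Real.sqrt (∫ x, f x ^ 2 ∂μ) * Real.sqrt (∫ x, g x ^ 2 ∂μ) := by
  set X := ∫ x, f x ^ 2 ∂μ with hX
  set Y := ∫ x, g x ^ 2 ∂μ with hY
  set Z := ∫ x, f x * g x ∂μ with hZ
  have hXnn : 0 ≤ X := integral_nonneg fun x => sq_nonneg _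
  have hYnn : 0 ≤ Y := integral_nonneg fun x => sq_nonneg _
  have quad : ∀ t : ℝ, 0 ≤ X * (t * t) + 2 * Z * t + Y := by
    intro t
    have h0 : 0 ≤ ∫ x, (t * f x + g x) ^ 2 ∂μ := integral_nonneg fun x => sq_nonneg _
    have hexp : ∀ x, (t * f x + g x) ^ 2 = t ^ 2 * f x ^ 2 + (2 * t) * (f x * g x) + g x ^ 2 := by
      intro x; ring
    rw [show (fun x => (t * f x + g x) ^ 2) = fun x =>
        t ^ 2 * f x ^ 2 + (2 * t) * (f x * g x) + g x ^ 2 from funext hexp] at h0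
    have hI1 : Integrable (fun x => t ^ 2 * f x ^ 2 + (2 * t) * (f x * g x)) μ :=
      (hf2.const_mul _).add (hfg.const_mul _)
    rw [integral_add hI1 hg2, integral_add (hf2.const_mul _) (hfg.const_mul _),
      MeasureTheory.integral_const_mul, MeasureTheory.integral_const_mul] at h0
    calc (0:ℝ) ≤ t ^ 2 * X + 2 * t * Z + Y := h0
    _ = X * (t * t) + 2 * Z * t + Y := by ring
  have hdisc : discrim X (2 * Z) Y ≤ 0 := discrim_le_zero quad
  rw [discrim] at hdisc
  have hZ2 : Z ^ 2 ≤ X * Y := by nlinarith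
  calc Z ≤ |Z| := le_abs_self Z
  _ = Real.sqrt (Z ^ 2) := (Real.sqrt_sq_eq_abs Z).symm
  _ ≤ Real.sqrt (X * Y) := Real.sqrt_le_sqrt hZ2
  _ = Real.sqrt X * Real.sqrt Y := Real.sqrt_mul hXnn Y

/-- the euclidean-to-prod measurable equiv -/
def eP : E2 ≃ᵐ ℝ × ℝ :=
  (MeasurableEquiv.toLp 2 (Fin 2 → ℝ)).symm.trans MeasurableEquiv.finTwoArrow

lemma eP_mp : MeasurePreserving (eP) := by
  exact (volume_preserving_finTwoArrow ℝ).comp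
    (EuclideanSpace.volume_preserving_symm_measurableEquiv_toLp (Fin 2))

lemma eP_symm_polar (q : ℝ × ℝ) : eP.symm (polarCoord.symm q) = Φ q := by
  show eP.symm (q.1 * Real.cos q.2, q.1 * Real.sin q.2) = Φ q
  rfl

/-- product of a.e.-equal sets -/
lemma prod_ae_eq {A A' B B' : Set ℝ} (hA : A =ᵐ[volume] A') (hB : B =ᵐ[volume] B') :
    (A ×ˢ B : Set (ℝ × ℝ)) =ᵐ[volume] (A' ×ˢ B' : Set (ℝ × ℝ)) := by
  have h1 : (volume : Measure (ℝ × ℝ)) ((A ×ˢ B) \ (A' ×ˢ B')) = 0 := by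
    have hsub : (A ×ˢ B) \ (A' ×ˢ B') ⊆ ((A \ A') ×ˢ univ) ∪ (univ ×ˢ (B \ B')) := by
      rintro ⟨x, y⟩ ⟨⟨hx, hy⟩, hne⟩
      by_cases hx' : x ∈ A'
      · right
        refine ⟨trivial, hy, fun hyB' => hne ⟨hx', hyB'⟩⟩
      · left; exact ⟨⟨hx, hx'⟩, trivial⟩
    refine measure_mono_null hsub ?_
    rw [Measure.volume_eq_prod]
    refine le_antisymm (le_trans (measure_union_le _ _) ?_) zero_le
    rw [Measure.prod_prod, Measure.prod_prod]
    have hA0 : volume (A \ A') = 0 := ae_le_set.1 hA.le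
    have hB0 : volume (B \ B') = 0 := ae_le_set.1 hB.le
    simp [hA0, hB0]
  have h2 : (volume : Measure (ℝ × ℝ)) ((A' ×ˢ B') \ (A ×ˢ B)) = 0 := by
    have hsub : (A' ×ˢ B') \ (A ×ˢ B) ⊆ ((A' \ A) ×ˢ univ) ∪ (univ ×ˢ (B' \ B)) := by
      rintro ⟨x, y⟩ ⟨⟨hx, hy⟩, hne⟩
      by_cases hx' : x ∈ A
      · right; exact ⟨trivial, hy, fun hyB => hne ⟨hx', hyB⟩⟩
      · left; exact ⟨⟨hx, hx'⟩, trivial⟩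
    refine measure_mono_null hsub ?_
    rw [Measure.volume_eq_prod]
    refine le_antisymm (le_trans (measure_union_le _ _) ?_) zero_le
    rw [Measure.prod_prod, Measure.prod_prod]
    have hA0 : volume (A' \ A) = 0 := ae_le_set.1 hA.symm.le
    have hB0 : volume (B' \ B) = 0 := ae_le_set.1 hB.symm.le
    simp [hA0, hB0]
  exact ae_eq_set.2 ⟨h1, h2⟩

theorem polar_ann {t₁ t₂ : ℝ} (ht₂ : 0 < t₂) (ht : t₂ < t₁) (ψ : E2 → ℝ)
    (hψ : ContinuousOn ψ (closedBall (0 : E2) t₁ \ ball 0 t₂)) :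
    ∫ p in Icc ((t₂, 0) : ℝ × ℝ) (t₁, 2 * Real.pi), p.1 * ψ (Φ p) =
      ∫ x in ball (0 : E2) t₁ \ ball 0 t₂, ψ x := by
  have hπ := Real.pi_pos
  set Ann : Set E2 := ball (0 : E2) t₁ \ ball 0 t₂ with hAnn
  have hAnnm : MeasurableSet Ann := measurableSet_ball.diff measurableSet_ball
  set S : Set (ℝ × ℝ) := eP.symm ⁻¹' Ann with hS
  have hSm : MeasurableSet S := eP.symm.measurable hAnnm
  set T : Set (ℝ × ℝ) := Φ ⁻¹' Ann with hT
  have hTm : MeasurableSet T := continuous_Φ.measurable hAnnm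
  set G : ℝ × ℝ → ℝ := fun q => q.1 * ψ (Φ q) with hG
  have hGcont : ∀ a b : ℝ, ContinuousOn G (Icc t₂ t₁ ×ˢ Icc a b) := by
    intro a b
    have hmaps : MapsTo Φ (Icc t₂ t₁ ×ˢ Icc a b) (closedBall (0 : E2) t₁ \ ball 0 t₂) := by
      rintro ⟨r, θ⟩ ⟨⟨hr1, hr2⟩, -⟩
      have hnorm : ‖Φ (r, θ)‖ = r := norm_cpt r θ (le_trans ht₂.le hr1)
      constructor
      · rw [mem_closedBall_zero_iff, hnorm]; exact hr2
      · rw [mem_ball_zero_iff, hnorm]; exact not_lt.2 hr1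
    exact continuousOn_fst.mul (hψ.comp continuous_Φ.continuousOn hmaps)
  have hGint : ∀ a b : ℝ, IntegrableOn G (Icc t₂ t₁ ×ˢ Icc a b) :=
    fun a b => (hGcont a b).integrableOn_compact (isCompact_Icc.prod isCompact_Icc)
  have hshift : ∫ p in Icc t₂ t₁ ×ˢ Icc (0:ℝ) (2 * Real.pi), G p
      = ∫ p in Icc t₂ t₁ ×ˢ Icc (-Real.pi) Real.pi, G p := by
    rw [Measure.volume_eq_prod]
    rw [setIntegral_prod _ ((Measure.volume_eq_prod ℝ ℝ) ▸ hGint 0 (2 * Real.pi)),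
      setIntegral_prod _ ((Measure.volume_eq_prod ℝ ℝ) ▸ hGint (-Real.pi) Real.pi)]
    refine setIntegral_congr_fun measurableSet_Icc fun t _ => ?_
    have hper : Function.Periodic (fun θ => G (t, θ)) (2 * Real.pi) := by
      intro θ; simp only [hG]; rw [Φ_periodic]
    have hkey := hper.intervalIntegral_add_eq 0 (-Real.pi)
    rw [zero_add] at hkey
    have h2 : -Real.pi + 2 * Real.pi = Real.pi := by ring
    rw [h2] at hkey
    rw [integral_Icc_eq_integral_Ioc, integral_Icc_eq_integral_Ioc,
      ← intervalIntegral.integral_of_le (by linarith : (0:ℝ) ≤ 2 * Real.pi),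
      ← intervalIntegral.integral_of_le (by linarith : -Real.pi ≤ Real.pi)]
    exact hkey
  have hTF : polarCoord.target ∩ T = Ico t₂ t₁ ×ˢ Ioo (-Real.pi) Real.pi := by
    ext ⟨r, θ⟩
    simp only [polarCoord_target, hT, mem_inter_iff, mem_prod, mem_Ioi, mem_Ioo, mem_preimage,
      hAnn, mem_diff, mem_ball_zero_iff, mem_Ico]
    constructor
    · rintro ⟨⟨hr, hθ⟩, h1, h2⟩
      have hnorm : ‖Φ (r, θ)‖ = r := norm_cpt r θ hr.le
      rw [hnorm] at h1 h2
      exact ⟨⟨not_lt.1 h2, h1⟩, hθ⟩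
    · rintro ⟨⟨hr1, hr2⟩, hθ⟩
      have hr : 0 < r := lt_of_lt_of_le ht₂ hr1
      have hnorm : ‖Φ (r, θ)‖ = r := norm_cpt r θ hr.le
      exact ⟨⟨hr, hθ⟩, by rw [hnorm]; exact hr2, by rw [hnorm]; exact not_lt.2 hr1⟩
  have hind : ∀ p : ℝ × ℝ,
      p.1 • (S.indicator (fun q => ψ (eP.symm q))) (polarCoord.symm p) = T.indicator G p := by
    intro p
    have hmem : polarCoord.symm p ∈ S ↔ p ∈ T := by
      rw [hS, hT, mem_preimage, mem_preimage, eP_symm_polar]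
    by_cases hp : p ∈ T
    · rw [indicator_of_mem ((hmem).2 hp), indicator_of_mem hp, eP_symm_polar, smul_eq_mul]
    · rw [indicator_of_notMem (fun h => hp ((hmem).1 h)), indicator_of_notMem hp, smul_zero]
  calc ∫ p in Icc ((t₂, 0) : ℝ × ℝ) (t₁, 2 * Real.pi), p.1 * ψ (Φ p)
      = ∫ p in Icc t₂ t₁ ×ˢ Icc (0:ℝ) (2 * Real.pi), G p := by rw [Icc_prod_eq]
    _ = ∫ p in Icc t₂ t₁ ×ˢ Icc (-Real.pi) Real.pi, G p := hshift
    _ = ∫ p in Ico t₂ t₁ ×ˢ Ioo (-Real.pi) Real.pi, G p :=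
        (setIntegral_congr_set (prod_ae_eq Ico_ae_eq_Icc Ioo_ae_eq_Icc)).symm
    _ = ∫ p in polarCoord.target ∩ T, G p := by rw [hTF]
    _ = ∫ p in polarCoord.target, T.indicator G p := (setIntegral_indicator hTm).symm
    _ = ∫ p in polarCoord.target,
          p.1 • (S.indicator (fun q => ψ (eP.symm q))) (polarCoord.symm p) := by
        refine setIntegral_congr_fun polarCoord.open_target.measurableSet fun p _ => ?_
        rw [hind p]
    _ = ∫ p, S.indicator (fun q => ψ (eP.symm q)) p :=
        integral_comp_polarCoord_symm _
    _ = ∫ p in S, ψ (eP.symm p) := integral_indicator hSm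
    _ = ∫ x in Ann, ψ x := by
        exact (MeasurePreserving.symm eP eP_mp).setIntegral_preimage_emb
          eP.symm.measurableEmbedding ψ Ann

end PohAux

open PohAux

/-- Pohozaev inequality: if `Δu − g` is orthogonal to the image of the derivative of `u`
on the annulus, then the difference of the boundary terms is bounded by
`t₁ ‖∇u‖_{L²(B_{t₁}\B_{t₂})} ‖g‖_{L²(B_{t₁}\B_{t₂})}`. -/
theorem statement3 {K : ℕ} (t₁ t₂ : ℝ) (ht₂ : 0 < t₂) (ht : t₂ < t₁) (ht₁ : t₁ < 1)
    (u g : E2 → EK K)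
    (hu : ∃ U : Set E2, IsOpen U ∧ (closedBall (0 : E2) t₁ \ ball 0 t₂) ⊆ U ∧
      ContDiffOn ℝ 2 u U)
    (hg : ContinuousOn g (closedBall (0 : E2) t₁ \ ball 0 t₂))
    (horth : ∀ x ∈ closedBall (0 : E2) t₁ \ ball 0 t₂, ∀ v : E2,
      ⟪lapl u x - g x, fderiv ℝ u x v⟫ = 0) :
    t₁ * bdry u t₁ - t₂ * bdry u t₂ ≤
      t₁ * Real.sqrt (∫ x in ball (0 : E2) t₁ \ ball 0 t₂, grad2 u x) *
        Real.sqrt (∫ x in ball (0 : E2) t₁ \ ball 0 t₂, ‖g x‖ ^ 2) := by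
  obtain ⟨U, hUo, hUsub, hu2⟩ := hu
  have hπ := Real.pi_pos
  have ht₁pos : 0 < t₁ := ht₂.trans ht
  -- membership facts
  have hmem : ∀ p : ℝ × ℝ, t₂ ≤ p.1 → p.1 ≤ t₁ →
      Φ p ∈ closedBall (0 : E2) t₁ \ ball 0 t₂ := by
    intro p h1 h2
    have hnorm : ‖Φ p‖ = p.1 := norm_cpt _ _ (le_trans ht₂.le h1)
    exact ⟨by rw [mem_closedBall_zero_iff, hnorm]; exact h2,
           by rw [mem_ball_zero_iff, hnorm]; exact not_lt.2 h1⟩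
  have hmemU : ∀ p : ℝ × ℝ, t₂ ≤ p.1 → p.1 ≤ t₁ → Φ p ∈ U :=
    fun p h1 h2 => hUsub (hmem p h1 h2)
  have hab : ((t₂, 0) : ℝ × ℝ) ≤ (t₁, 2 * Real.pi) := ⟨ht.le, by positivity⟩
  have hIccm : ∀ p ∈ Icc ((t₂, 0) : ℝ × ℝ) (t₁, 2 * Real.pi), t₂ ≤ p.1 ∧ p.1 ≤ t₁ :=
    fun p hp => ⟨hp.1.1, hp.2.1⟩
  -- derivative data
  have hval : ∀ p : ℝ × ℝ, Φ p ∈ U →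
      (HasFDerivAt (ff u) (fderiv ℝ (ff u) p) p ∧ HasFDerivAt (hh u) (fderiv ℝ (hh u) p) p ∧
        fderiv ℝ (ff u) p (1, 0) + fderiv ℝ (hh u) p (0, 1) = FF u p) := by
    intro p hp
    obtain ⟨Df, Dh, h1, h2, h3⟩ := key hUo hu2 p hp
    refine ⟨by rw [h1.fderiv]; exact h1, by rw [h2.fderiv]; exact h2, ?_⟩
    rw [h1.fderiv, h2.fderiv]; exact h3
  -- continuity on Φ ⁻¹' U
  have hcontW : ContinuousOn (fun q : ℝ × ℝ => fderiv ℝ u (Φ q)) (Φ ⁻¹' U) :=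
    (contOn_L hUo hu2).comp continuous_Φ.continuousOn fun p hp => hp
  have hconta : ContinuousOn (aa u) (Φ ⁻¹' U) :=
    hcontW.clm_apply (continuous_er.comp continuous_snd).continuousOn
  have hcontb : ContinuousOn (bb u) (Φ ⁻¹' U) :=
    hcontW.clm_apply (continuous_et.comp continuous_snd).continuousOn
  have hcontff : ContinuousOn (ff u) (Φ ⁻¹' U) :=
    continuousOn_const.mul ((continuousOn_fst.mul continuousOn_fst).mul
      ((hconta.inner hconta).sub (hcontb.inner hcontb)))
  have hconthh : ContinuousOn (hh u) (Φ ⁻¹' U) :=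
    continuousOn_fst.mul (hcontb.inner hconta)
  have hcontFF : ContinuousOn (FF u) (Φ ⁻¹' U) :=
    (continuousOn_fst.mul continuousOn_fst).mul
      (((contOn_lapl hUo hu2).comp continuous_Φ.continuousOn fun p hp => hp).inner hconta)
  have hIccV : Icc ((t₂, 0) : ℝ × ℝ) (t₁, 2 * Real.pi) ⊆ Φ ⁻¹' U :=
    fun p hp => hmemU p (hIccm p hp).1 (hIccm p hp).2
  -- integrability of the divergence
  have hFFint : IntegrableOn (FF u) (Icc ((t₂, 0) : ℝ × ℝ) (t₁, 2 * Real.pi)) :=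
    (hcontFF.mono hIccV).integrableOn_compact isCompact_Icc
  have hdivint : IntegrableOn (fun p => fderiv ℝ (ff u) p (1, 0) + fderiv ℝ (hh u) p (0, 1))
      (Icc ((t₂, 0) : ℝ × ℝ) (t₁, 2 * Real.pi)) :=
    hFFint.congr_fun (fun p hp => ((hval p (hIccV hp)).2.2).symm) measurableSet_Icc
  -- divergence theorem
  have hdiv := integral_divergence_prod_Icc_of_hasFDerivAt_off_countable_of_le
    (ff u) (hh u) (fun p => fderiv ℝ (ff u) p) (fun p => fderiv ℝ (hh u) p)
    ((t₂, 0) : ℝ × ℝ) (t₁, 2 * Real.pi) hab ∅ countable_empty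
    (hcontff.mono hIccV) (hconthh.mono hIccV)
    (fun p hp => (hval p (hmemU p (le_of_lt hp.1.1.1) (le_of_lt hp.1.1.2))).1)
    (fun p hp => (hval p (hmemU p (le_of_lt hp.1.1.1) (le_of_lt hp.1.1.2))).2.1)
    hdivint
  dsimp only at hdiv
  have heqI : ∫ p in Icc ((t₂, 0) : ℝ × ℝ) (t₁, 2 * Real.pi),
      (fderiv ℝ (ff u) p (1, 0) + fderiv ℝ (hh u) p (0, 1)) =
      ∫ p in Icc ((t₂, 0) : ℝ × ℝ) (t₁, 2 * Real.pi), FF u p :=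
    setIntegral_congr_fun measurableSet_Icc fun p hp => (hval p (hIccV hp)).2.2
  rw [heqI] at hdiv
  have hcancel : (∫ x in t₂..t₁, hh u (x, 2 * Real.pi)) = ∫ x in t₂..t₁, hh u (x, 0) :=
    intervalIntegral.integral_congr fun x _ => hh_per u x
  rw [hcancel] at hdiv
  have hmain : t₁ * bdry u t₁ - t₂ * bdry u t₂ =
      ∫ p in Icc ((t₂, 0) : ℝ × ℝ) (t₁, 2 * Real.pi), FF u p := by
    rw [bdry_eq u t₁ ht₁pos, bdry_eq u t₂ ht₂, hdiv]
    ring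
  -- the weight function
  set ψ : E2 → ℝ := fun x => Real.sqrt (grad2 u x) * ‖g x‖ with hψdef
  have hcontgrad2 : ContinuousOn (grad2 u) U := by
    have hsum : ContinuousOn
        (fun x => ‖fderiv ℝ u x (EuclideanSpace.single (0 : Fin 2) (1 : ℝ))‖ ^ 2 +
          ‖fderiv ℝ u x (EuclideanSpace.single (1 : Fin 2) (1 : ℝ))‖ ^ 2) U :=
      ((((contOn_L hUo hu2).clm_apply continuousOn_const).norm).pow 2).add
        ((((contOn_L hUo hu2).clm_apply continuousOn_const).norm).pow 2)
    exact hsum.congr fun x _ => by rw [grad2, Fin.sum_univ_two]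
  have hψcont : ContinuousOn ψ (closedBall (0 : E2) t₁ \ ball 0 t₂) := by
    refine ContinuousOn.mul ?_ hg.norm
    exact Real.continuous_sqrt.comp_continuousOn (hcontgrad2.mono hUsub)
  -- pointwise bound on the rectangle
  have hptwise : ∀ p ∈ Icc ((t₂, 0) : ℝ × ℝ) (t₁, 2 * Real.pi),
      FF u p ≤ p.1 * (t₁ * ψ (Φ p)) := by
    intro p hp
    obtain ⟨h1, h2⟩ := hIccm p hp
    have hxC : Φ p ∈ closedBall (0 : E2) t₁ \ ball 0 t₂ := hmem p h1 h2
    have horth' := horth (Φ p) hxC (er p.2)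
    rw [inner_sub_left, sub_eq_zero] at horth'
    have haa : aa u p = fderiv ℝ u (Φ p) (er p.2) := rfl
    have hAnorm : ‖aa u p‖ ≤ Real.sqrt (grad2 u (Φ p)) := by
      have hg2 : grad2 u (Φ p) = ‖aa u p‖ ^ 2 + ‖bb u p‖ ^ 2 := grad2_eq u _ p.2
      rw [show ‖aa u p‖ = Real.sqrt (‖aa u p‖ ^ 2) by rw [Real.sqrt_sq (norm_nonneg _)]]
      apply Real.sqrt_le_sqrt
      rw [hg2]
      nlinarith [sq_nonneg ‖bb u p‖]
    have hinn : ⟪lapl u (Φ p), aa u p⟫ ≤ ψ (Φ p) := by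
      rw [haa, horth', ← haa]
      calc ⟪g (Φ p), aa u p⟫ ≤ ‖g (Φ p)‖ * ‖aa u p‖ := real_inner_le_norm _ _
      _ ≤ ‖g (Φ p)‖ * Real.sqrt (grad2 u (Φ p)) :=
          mul_le_mul_of_nonneg_left hAnorm (norm_nonneg _)
      _ = ψ (Φ p) := by rw [hψdef]; ring
    have hψnn : 0 ≤ ψ (Φ p) := mul_nonneg (Real.sqrt_nonneg _) (norm_nonneg _)
    have hp1 : 0 ≤ p.1 := le_trans ht₂.le h1
    calc FF u p = p.1 * p.1 * ⟪lapl u (Φ p), aa u p⟫ := rfl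
    _ ≤ p.1 * p.1 * ψ (Φ p) := mul_le_mul_of_nonneg_left hinn (mul_nonneg hp1 hp1)
    _ = p.1 * (p.1 * ψ (Φ p)) := by ring
    _ ≤ p.1 * (t₁ * ψ (Φ p)) :=
        mul_le_mul_of_nonneg_left (mul_le_mul_of_nonneg_right h2 hψnn) hp1
  -- monotonicity
  have hRHScont : ContinuousOn (fun p : ℝ × ℝ => p.1 * (t₁ * ψ (Φ p)))
      (Icc ((t₂, 0) : ℝ × ℝ) (t₁, 2 * Real.pi)) := by
    refine continuousOn_fst.mul (continuousOn_const.mul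
      (hψcont.comp continuous_Φ.continuousOn ?_))
    intro p hp
    exact hmem p (hIccm p hp).1 (hIccm p hp).2
  have hmono := setIntegral_mono_on hFFint
    (hRHScont.integrableOn_compact isCompact_Icc) measurableSet_Icc hptwise
  have hpull : ∫ p in Icc ((t₂, 0) : ℝ × ℝ) (t₁, 2 * Real.pi), p.1 * (t₁ * ψ (Φ p))
      = t₁ * ∫ p in Icc ((t₂, 0) : ℝ × ℝ) (t₁, 2 * Real.pi), p.1 * ψ (Φ p) := by
    rw [← MeasureTheory.integral_const_mul]
    exact setIntegral_congr_fun measurableSet_Icc fun p _ => by ring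
  have hchg := polar_ann ht₂ ht ψ hψcont
  -- Cauchy–Schwarz on the annulus
  have hAnnC : (ball (0 : E2) t₁ \ ball 0 t₂) ⊆ closedBall (0 : E2) t₁ \ ball 0 t₂ :=
    diff_subset_diff ball_subset_closedBall (subset_refl _)
  have hCAnncomp : IsCompact (closedBall (0 : E2) t₁ \ ball 0 t₂) :=
    (isCompact_closedBall _ _).diff isOpen_ball
  have hg2int : IntegrableOn (fun x => ‖g x‖ ^ 2) (ball (0 : E2) t₁ \ ball 0 t₂) :=
    ((hg.norm.pow 2).integrableOn_compact hCAnncomp).mono_set hAnnC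
  have hgr2int : IntegrableOn (grad2 u) (ball (0 : E2) t₁ \ ball 0 t₂) :=
    ((hcontgrad2.mono hUsub).integrableOn_compact hCAnncomp).mono_set hAnnC
  have hψint : IntegrableOn ψ (ball (0 : E2) t₁ \ ball 0 t₂) :=
    (hψcont.integrableOn_compact hCAnncomp).mono_set hAnnC
  have hCS : ∫ x in ball (0 : E2) t₁ \ ball 0 t₂, ψ x ≤
      Real.sqrt (∫ x in ball (0 : E2) t₁ \ ball 0 t₂, grad2 u x) *
        Real.sqrt (∫ x in ball (0 : E2) t₁ \ ball 0 t₂, ‖g x‖ ^ 2) := by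
    have hsq : (fun x => Real.sqrt (grad2 u x) ^ 2) = grad2 u :=
      funext fun x => Real.sq_sqrt (grad2_nonneg u x)
    have hf2 : Integrable (fun x => Real.sqrt (grad2 u x) ^ 2)
        ((volume : Measure E2).restrict (ball (0 : E2) t₁ \ ball 0 t₂)) := by
      rw [hsq]; exact hgr2int
    have h := integral_CS ((volume : Measure E2).restrict (ball (0 : E2) t₁ \ ball 0 t₂))
      (fun x => Real.sqrt (grad2 u x)) (fun x => ‖g x‖) hf2 hg2int hψint
    rw [hsq] at h
    exact h
  -- final chain
  calc t₁ * bdry u t₁ - t₂ * bdry u t₂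
      = ∫ p in Icc ((t₂, 0) : ℝ × ℝ) (t₁, 2 * Real.pi), FF u p := hmain
    _ ≤ ∫ p in Icc ((t₂, 0) : ℝ × ℝ) (t₁, 2 * Real.pi), p.1 * (t₁ * ψ (Φ p)) := hmono
    _ = t₁ * ∫ p in Icc ((t₂, 0) : ℝ × ℝ) (t₁, 2 * Real.pi), p.1 * ψ (Φ p) := hpull
    _ = t₁ * ∫ x in ball (0 : E2) t₁ \ ball 0 t₂, ψ x := by rw [hchg]
    _ ≤ t₁ * (Real.sqrt (∫ x in ball (0 : E2) t₁ \ ball 0 t₂, grad2 u x) *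
        Real.sqrt (∫ x in ball (0 : E2) t₁ \ ball 0 t₂, ‖g x‖ ^ 2)) :=
          mul_le_mul_of_nonneg_left hCS ht₁pos.le
    _ = t₁ * Real.sqrt (∫ x in ball (0 : E2) t₁ \ ball 0 t₂, grad2 u x) *
        Real.sqrt (∫ x in ball (0 : E2) t₁ \ ball 0 t₂, ‖g x‖ ^ 2) := (mul_assoc _ _ _).symm
end
end

section
/- Let 0 < a < 1, let u : ℝ² → ℝ^K be C² on B \ {0}, and let g : B → ℝ^K be continuous on B \ {0}, satisfying: for every x ∈ B \ {0} the vector Δu(x) − g(x) is orthogonal in ℝ^K to the image of the derivative of u at x, and g satisfies the annular decay condition with exponent a and constant C₀. Then for every 0 < t < 1, ∫_{∂B_t} (|∂u/∂r|² − ½|∇u|²) dS − ½ ∫_{∂B_{t/2}} (|∂u/∂r|² − ½|∇u|²) dS ≤ C₀ t^{−a} ‖∇u‖_{L²(B_t \ B_{t/2})}. -/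
open MeasureTheory Metric Set
open scoped RealInnerProductSpace

noncomputable section

namespace Stmt4

open Real intervalIntegral

/-- The punctured disk. -/
abbrev Om : Set E2 := ball (0 : E2) 1 \ {0}

lemma isOpen_Om : IsOpen Om := isOpen_ball.sdiff isClosed_singleton

/-- standard basis -/
def ee (i : Fin 2) : E2 := EuclideanSpace.single i 1

/-- radial unit vector -/
def cv (θ : ℝ) : E2 := Real.cos θ • ee 0 + Real.sin θ • ee 1

/-- angular unit vector -/
def dv (θ : ℝ) : E2 := (-Real.sin θ) • ee 0 + Real.cos θ • ee 1

lemma cpt_eq (r θ : ℝ) : cpt r θ = r • cv θ := by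
  ext i
  fin_cases i <;> simp [cpt, cv, ee, EuclideanSpace.single_apply]

lemma norm_cpt {r : ℝ} (hr : 0 ≤ r) (θ : ℝ) : ‖cpt r θ‖ = r := by
  rw [EuclideanSpace.norm_eq]
  simp only [cpt, Fin.sum_univ_two, WithLp.equiv_symm_apply, PiLp.toLp_apply, Matrix.cons_val_zero,
    Matrix.cons_val_one, Matrix.head_cons, Real.norm_eq_abs, sq_abs]
  rw [show (r * Real.cos θ) ^ 2 + (r * Real.sin θ) ^ 2 = r ^ 2 by
    nlinarith [Real.sin_sq_add_cos_sq θ]]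
  exact Real.sqrt_sq hr

lemma cpt_mem_Om {r : ℝ} (h0 : 0 < r) (h1 : r < 1) (θ : ℝ) : cpt r θ ∈ Om := by
  constructor
  · rw [mem_ball, dist_zero_right, norm_cpt h0.le]; exact h1
  · simp only [mem_singleton_iff]
    intro h
    have := norm_cpt h0.le θ
    rw [h, norm_zero] at this
    exact h0.ne this

lemma cpt_periodic (s θ : ℝ) : cpt s (θ + 2 * π) = cpt s θ := by
  simp [cpt, Real.cos_add_two_pi, Real.sin_add_two_pi]

lemma cv_periodic (θ : ℝ) : cv (θ + 2 * π) = cv θ := by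
  simp [cv, Real.cos_add_two_pi, Real.sin_add_two_pi]

lemma dv_periodic (θ : ℝ) : dv (θ + 2 * π) = dv θ := by
  simp [dv, Real.cos_add_two_pi, Real.sin_add_two_pi]

lemma continuous_cv : Continuous cv := by unfold cv; fun_prop

lemma continuous_dv : Continuous dv := by unfold dv; fun_prop

lemma continuous_cpt : Continuous (fun p : ℝ × ℝ => cpt p.1 p.2) := by
  have : (fun p : ℝ × ℝ => cpt p.1 p.2) = fun p : ℝ × ℝ => p.1 • cv p.2 := by
    funext p; exact cpt_eq p.1 p.2
  rw [this]
  exact continuous_fst.smul (continuous_cv.comp continuous_snd)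

lemma hasDerivAt_cpt_r (θ s : ℝ) : HasDerivAt (fun r => cpt r θ) (cv θ) s := by
  have h : (fun r => cpt r θ) = fun r : ℝ => r • cv θ := by
    funext r; exact cpt_eq r θ
  rw [h]
  simpa using (hasDerivAt_id s).smul_const (cv θ)

lemma hasDerivAt_cv (θ : ℝ) : HasDerivAt cv (dv θ) θ := by
  have h1 := ((Real.hasDerivAt_cos θ).smul_const (ee 0)).add
    ((Real.hasDerivAt_sin θ).smul_const (ee 1))
  exact h1

lemma hasDerivAt_dv (θ : ℝ) : HasDerivAt dv (-cv θ) θ := by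
  have h1 : HasDerivAt (fun φ => (-Real.sin φ) • ee 0 + Real.cos φ • ee 1)
      ((-Real.cos θ) • ee 0 + (-Real.sin θ) • ee 1) θ :=
    (((Real.hasDerivAt_sin θ).neg).smul_const (ee 0)).add
      ((Real.hasDerivAt_cos θ).smul_const (ee 1))
  have h2 : -cv θ = (-Real.cos θ) • ee 0 + (-Real.sin θ) • ee 1 := by
    unfold cv; module
  rw [show dv = fun φ => (-Real.sin φ) • ee 0 + Real.cos φ • ee 1 from rfl, h2]
  exact h1

lemma hasDerivAt_cpt_theta (s θ : ℝ) : HasDerivAt (fun φ => cpt s φ) (s • dv θ) θ := by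
  have h : (fun φ => cpt s φ) = fun φ : ℝ => s • cv φ := by
    funext φ; exact cpt_eq s φ
  rw [h]
  exact (hasDerivAt_cv θ).const_smul s

section K

variable {K : ℕ}

lemma rot_clm (L : E2 →L[ℝ] EK K) (θ : ℝ) :
    ‖L (cv θ)‖ ^ 2 + ‖L (dv θ)‖ ^ 2 = ‖L (ee 0)‖ ^ 2 + ‖L (ee 1)‖ ^ 2 := by
  have h1 : L (cv θ) = Real.cos θ • L (ee 0) + Real.sin θ • L (ee 1) := by
    simp [cv, map_add, _root_.map_smul]
  have h2 : L (dv θ) = (-Real.sin θ) • L (ee 0) + Real.cos θ • L (ee 1) := by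
    simp [dv, map_add, _root_.map_smul]
  rw [h1, h2, norm_add_sq_real, norm_add_sq_real]
  simp only [norm_smul, Real.norm_eq_abs, real_inner_smul_left, real_inner_smul_right, mul_pow,
    sq_abs]
  linear_combination (‖L (ee 0)‖ ^ 2 + ‖L (ee 1)‖ ^ 2) * Real.sin_sq_add_cos_sq θ

lemma decomp (v : E2) : v = v 0 • ee 0 + v 1 • ee 1 := by
  ext i; fin_cases i <;> simp [ee, EuclideanSpace.single_apply]

lemma norm_sq_E2 (v : E2) : ‖v‖ ^ 2 = v 0 ^ 2 + v 1 ^ 2 := by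
  rw [EuclideanSpace.norm_eq, Real.sq_sqrt (by positivity)]
  simp [Fin.sum_univ_two, sq_abs]

lemma opnorm_clm (L : E2 →L[ℝ] EK K) (v : E2) :
    ‖L v‖ ^ 2 ≤ (‖L (ee 0)‖ ^ 2 + ‖L (ee 1)‖ ^ 2) * ‖v‖ ^ 2 := by
  have h1 : ‖L v‖ ≤ |v 0| * ‖L (ee 0)‖ + |v 1| * ‖L (ee 1)‖ := by
    conv_lhs => rw [decomp v]
    rw [map_add, _root_.map_smul, _root_.map_smul]
    refine (norm_add_le _ _).trans ?_
    simp [norm_smul]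
  rw [norm_sq_E2]
  nlinarith [sq_nonneg (|v 0| * ‖L (ee 1)‖ - |v 1| * ‖L (ee 0)‖), norm_nonneg (L v),
    abs_nonneg (v 0), abs_nonneg (v 1), norm_nonneg (L (ee 0)), norm_nonneg (L (ee 1)),
    sq_abs (v 0), sq_abs (v 1),
    mul_nonneg (abs_nonneg (v 0)) (norm_nonneg (L (ee 0))),
    mul_nonneg (abs_nonneg (v 1)) (norm_nonneg (L (ee 1)))]

lemma rot_bil (M : E2 →L[ℝ] E2 →L[ℝ] EK K)
    (hsym : M (ee 0) (ee 1) = M (ee 1) (ee 0)) (θ : ℝ) :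
    M (cv θ) (cv θ) + M (dv θ) (dv θ) = M (ee 0) (ee 0) + M (ee 1) (ee 1) := by
  simp only [cv, dv, map_add, _root_.map_smul, map_neg, ContinuousLinearMap.add_apply,
    ContinuousLinearMap.coe_smul', Pi.smul_apply, ContinuousLinearMap.neg_apply,
    Pi.neg_apply, ContinuousLinearMap.smul_apply]
  rw [← hsym]
  match_scalars <;> ring_nf <;> linear_combination Real.sin_sq_add_cos_sq θ

variable (u g : E2 → EK K)

lemma grad2_eq (x : E2) :
    grad2 u x = ‖fderiv ℝ u x (ee 0)‖ ^ 2 + ‖fderiv ℝ u x (ee 1)‖ ^ 2 := by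
  simp [grad2, ee, Fin.sum_univ_two]

lemma grad2_nonneg (x : E2) : 0 ≤ grad2 u x := by
  rw [grad2_eq]; positivity

lemma grad2_cpt (s θ : ℝ) :
    grad2 u (cpt s θ) =
      ‖fderiv ℝ u (cpt s θ) (cv θ)‖ ^ 2 + ‖fderiv ℝ u (cpt s θ) (dv θ)‖ ^ 2 := by
  rw [grad2_eq, rot_clm]

variable (hu : ContDiffOn ℝ 2 u Om)
include hu

lemma hasFDerivAt_u {x : E2} (hx : x ∈ Om) : HasFDerivAt u (fderiv ℝ u x) x :=
  ((hu.differentiableOn (by norm_num)).differentiableAt (isOpen_Om.mem_nhds hx)).hasFDerivAt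

lemma contOn_fd : ContinuousOn (fderiv ℝ u) Om :=
  hu.continuousOn_fderiv_of_isOpen isOpen_Om (by norm_num)

lemma contDiffOn_fd : ContDiffOn ℝ 1 (fderiv ℝ u) Om :=
  hu.fderiv_of_isOpen isOpen_Om (by norm_num)

lemma hasFDerivAt_fd {x : E2} (hx : x ∈ Om) :
    HasFDerivAt (fderiv ℝ u) (fderiv ℝ (fderiv ℝ u) x) x :=
  (((contDiffOn_fd u hu).differentiableOn one_ne_zero).differentiableAt
    (isOpen_Om.mem_nhds hx)).hasFDerivAt

lemma contOn_fd2 : ContinuousOn (fderiv ℝ (fderiv ℝ u)) Om :=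
  (contDiffOn_fd u hu).continuousOn_fderiv_of_isOpen isOpen_Om le_rfl

lemma sym2 {x : E2} (hx : x ∈ Om) (v w : E2) :
    fderiv ℝ (fderiv ℝ u) x v w = fderiv ℝ (fderiv ℝ u) x w v := by
  have hev : ∀ᶠ y in nhds x, HasFDerivAt u (fderiv ℝ u y) y := by
    filter_upwards [isOpen_Om.mem_nhds hx] with y hy using hasFDerivAt_u u hu hy
  exact second_derivative_symmetric_of_eventually hev (hasFDerivAt_fd u hu hx) v w

lemma fderiv_apply_const {x : E2} (hx : x ∈ Om) (v w : E2) :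
    fderiv ℝ (fun y => fderiv ℝ u y v) x w = fderiv ℝ (fderiv ℝ u) x w v := by
  have hdf : DifferentiableAt ℝ (fderiv ℝ u) x :=
    ((contDiffOn_fd u hu).differentiableOn one_ne_zero).differentiableAt (isOpen_Om.mem_nhds hx)
  rw [fderiv_clm_apply hdf (differentiableAt_const v)]
  simp

lemma lapl_eq {x : E2} (hx : x ∈ Om) :
    lapl u x = fderiv ℝ (fderiv ℝ u) x (ee 0) (ee 0) + fderiv ℝ (fderiv ℝ u) x (ee 1) (ee 1) := by
  have h0 := fderiv_apply_const u hu hx (ee 0) (ee 0)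
  have h1 := fderiv_apply_const u hu hx (ee 1) (ee 1)
  unfold ee at h0 h1
  rw [lapl, Fin.sum_univ_two, h0, h1]
  rfl

lemma lapl_rot {x : E2} (hx : x ∈ Om) (θ : ℝ) :
    lapl u x = fderiv ℝ (fderiv ℝ u) x (cv θ) (cv θ) + fderiv ℝ (fderiv ℝ u) x (dv θ) (dv θ) := by
  rw [lapl_eq u hu hx, rot_bil _ (sym2 u hu hx _ _)]

omit hu in
lemma rderiv_cpt {s : ℝ} (hs : 0 < s) (θ : ℝ) :
    rderiv u (cpt s θ) = fderiv ℝ u (cpt s θ) (cv θ) := by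
  unfold rderiv
  rw [norm_cpt hs.le]
  congr 1
  conv_lhs => rw [cpt_eq]
  rw [smul_smul, inv_mul_cancel₀ hs.ne', one_smul]

end K

/-- the integrand `⟨g, x·∇u⟩` -/
def hfun {K : ℕ} (u g : E2 → EK K) (x : E2) : ℝ := ⟪g x, fderiv ℝ u x x⟫

/-- polar Pohozaev integrand `s²(|u_r|² − |u_θ|²/s²)/2` -/
def Qf {K : ℕ} (u : E2 → EK K) (s θ : ℝ) : ℝ :=
  s ^ 2 * (‖fderiv ℝ u (cpt s θ) (cv θ)‖ ^ 2 - ‖fderiv ℝ u (cpt s θ) (dv θ)‖ ^ 2) / 2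

/-- `∂Qf/∂s` -/
def DQ {K : ℕ} (u : E2 → EK K) (s θ : ℝ) : ℝ :=
  s * (‖fderiv ℝ u (cpt s θ) (cv θ)‖ ^ 2 - ‖fderiv ℝ u (cpt s θ) (dv θ)‖ ^ 2) +
    s ^ 2 * (⟪fderiv ℝ (fderiv ℝ u) (cpt s θ) (cv θ) (cv θ), fderiv ℝ u (cpt s θ) (cv θ)⟫ -
      ⟪fderiv ℝ (fderiv ℝ u) (cpt s θ) (cv θ) (dv θ), fderiv ℝ u (cpt s θ) (dv θ)⟫)

/-- angular flux `s²⟨u_θ/s, u_r⟩` -/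
def Gf {K : ℕ} (u : E2 → EK K) (s θ : ℝ) : ℝ :=
  s ^ 2 * ⟪fderiv ℝ u (cpt s θ) (dv θ), fderiv ℝ u (cpt s θ) (cv θ)⟫

/-- `∂Gf/∂θ` -/
def DG {K : ℕ} (u : E2 → EK K) (s θ : ℝ) : ℝ :=
  s ^ 2 * (⟪fderiv ℝ u (cpt s θ) (dv θ),
      s • fderiv ℝ (fderiv ℝ u) (cpt s θ) (dv θ) (cv θ) + fderiv ℝ u (cpt s θ) (dv θ)⟫ +
    ⟪s • fderiv ℝ (fderiv ℝ u) (cpt s θ) (dv θ) (dv θ) - fderiv ℝ u (cpt s θ) (cv θ),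
      fderiv ℝ u (cpt s θ) (cv θ)⟫)

lemma polar_annulus {f : E2 → ℝ} (hf : ContinuousOn f Om) {t : ℝ} (ht0 : 0 < t) (ht1 : t < 1) :
    ∫ x in ball (0 : E2) t \ ball 0 (t / 2), f x =
      ∫ s in (t/2)..t, ∫ θ in (0:ℝ)..(2 * π), s * f (cpt s θ) := by
  have hπ := Real.pi_pos
  have ht2 : 0 < t / 2 := by linarith
  have hle : t / 2 ≤ t := by linarith
  set φ : E2 ≃ᵐ ℝ × ℝ :=
    (MeasurableEquiv.toLp 2 (Fin 2 → ℝ)).symm.trans MeasurableEquiv.finTwoArrow with hφdef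
  have hφ : MeasurePreserving φ volume volume :=
    (volume_preserving_finTwoArrow ℝ).comp
      (EuclideanSpace.volume_preserving_symm_measurableEquiv_toLp (Fin 2))
  have hφs : MeasurePreserving φ.symm volume volume := hφ.symm
  set A : Set E2 := ball (0 : E2) t \ ball 0 (t / 2) with hA
  have mA : MeasurableSet A := measurableSet_ball.diff measurableSet_ball
  have hcpt : ∀ a b : ℝ, φ.symm (polarCoord.symm (a, b)) = cpt a b := by
    intro a b
    ext i
    fin_cases i <;> rfl
  have h1 : ∫ x in A, f x = ∫ p in φ.symm ⁻¹' A, f (φ.symm p) :=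
    (hφs.setIntegral_preimage_emb φ.symm.measurableEmbedding f A).symm
  have h2 : ∫ p in φ.symm ⁻¹' A, f (φ.symm p)
      = ∫ p : ℝ × ℝ, indicator (φ.symm ⁻¹' A) (fun p => f (φ.symm p)) p :=
    (MeasureTheory.integral_indicator (φ.symm.measurable mA)).symm
  rw [h1, h2, ← integral_comp_polarCoord_symm]
  have h3 : EqOn (fun q : ℝ × ℝ =>
        q.1 • indicator (φ.symm ⁻¹' A) (fun p => f (φ.symm p)) (polarCoord.symm q))
      (fun q : ℝ × ℝ => indicator (Ico (t/2) t ×ˢ (univ : Set ℝ))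
        (fun q : ℝ × ℝ => q.1 * f (cpt q.1 q.2)) q) polarCoord.target := by
    rintro ⟨r, θ⟩ ⟨hr, hθ⟩
    have hr' : (0:ℝ) < r := hr
    have hmem : polarCoord.symm (r, θ) ∈ φ.symm ⁻¹' A ↔ (t/2 ≤ r ∧ r < t) := by
      rw [mem_preimage, hcpt r θ]
      simp only [hA, mem_diff, mem_ball, dist_zero_right]
      rw [norm_cpt hr'.le θ]
      constructor
      · rintro ⟨hlt, hge⟩; exact ⟨not_lt.1 hge, hlt⟩
      · rintro ⟨hge, hlt⟩; exact ⟨hlt, not_lt.2 hge⟩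
    dsimp only
    by_cases hq : t/2 ≤ r ∧ r < t
    · have hm2 : ((r, θ) : ℝ × ℝ) ∈ Ico (t/2) t ×ˢ (univ : Set ℝ) := ⟨⟨hq.1, hq.2⟩, trivial⟩
      rw [indicator_of_mem (hmem.2 hq), indicator_of_mem hm2, hcpt r θ, smul_eq_mul]
    · have hm2 : ((r, θ) : ℝ × ℝ) ∉ Ico (t/2) t ×ˢ (univ : Set ℝ) := by
        intro hc; exact hq ⟨hc.1.1, hc.1.2⟩
      rw [indicator_of_notMem (fun hc => hq (hmem.1 hc)), indicator_of_notMem hm2, smul_zero]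
  rw [setIntegral_congr_fun polarCoord.open_target.measurableSet h3]
  rw [setIntegral_indicator (measurableSet_Ico.prod MeasurableSet.univ)]
  have h4 : polarCoord.target ∩ (Ico (t/2) t ×ˢ (univ : Set ℝ)) = Ico (t/2) t ×ˢ Ioo (-π) π := by
    rw [polarCoord_target, Set.prod_inter_prod, Set.inter_univ]
    congr 1
    exact Set.inter_eq_self_of_subset_right (fun x hx => lt_of_lt_of_le ht2 hx.1)
  rw [h4]
  have hmapsTo : MapsTo (fun q : ℝ × ℝ => cpt q.1 q.2) (Icc (t/2) t ×ˢ Icc (-π) π) Om := by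
    rintro ⟨r, θ⟩ ⟨hr, -⟩
    exact cpt_mem_Om (lt_of_lt_of_le ht2 hr.1) (lt_of_le_of_lt hr.2 ht1) θ
  have hint : IntegrableOn (fun q : ℝ × ℝ => q.1 * f (cpt q.1 q.2))
      (Ico (t/2) t ×ˢ Ioo (-π) π) := by
    refine IntegrableOn.mono_set ?_ (prod_mono Ico_subset_Icc_self Ioo_subset_Icc_self)
    refine ContinuousOn.integrableOn_compact ((isCompact_Icc).prod isCompact_Icc) ?_
    exact continuous_fst.continuousOn.mul
      (hf.comp continuous_cpt.continuousOn hmapsTo)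
  rw [Measure.volume_eq_prod] at hint ⊢
  rw [setIntegral_prod _ hint]
  rw [MeasureTheory.integral_Ico_eq_integral_Ioo, ← MeasureTheory.integral_Ioc_eq_integral_Ioo,
    ← intervalIntegral.integral_of_le hle]
  refine intervalIntegral.integral_congr fun s hs => ?_
  dsimp only
  rw [← MeasureTheory.integral_Ioc_eq_integral_Ioo,
    ← intervalIntegral.integral_of_le (by linarith : -π ≤ π)]
  have hper : Function.Periodic (fun θ => s * f (cpt s θ)) (2 * π) := by
    intro θ; simp [cpt_periodic]
  have hshift := hper.intervalIntegral_add_eq (-π) 0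
  rw [show -π + 2*π = π by ring, zero_add] at hshift
  exact hshift

section K2

variable {K : ℕ} (u g : E2 → EK K) (hu : ContDiffOn ℝ 2 u Om)
include hu

lemma hasDerivAt_Qf {s : ℝ} (hs0 : 0 < s) (hs1 : s < 1) (θ : ℝ) :
    HasDerivAt (fun r => Qf u r θ) (DQ u s θ) s := by
  have hXm : cpt s θ ∈ Om := cpt_mem_Om hs0 hs1 θ
  have hL : HasDerivAt (fun r => fderiv ℝ u (cpt r θ))
      (fderiv ℝ (fderiv ℝ u) (cpt s θ) (cv θ)) s :=
    (hasFDerivAt_fd u hu hXm).comp_hasDerivAt s (hasDerivAt_cpt_r θ s)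
  have hW1 : HasDerivAt (fun r => fderiv ℝ u (cpt r θ) (cv θ))
      (fderiv ℝ (fderiv ℝ u) (cpt s θ) (cv θ) (cv θ)) s := by
    simpa using hL.clm_apply (hasDerivAt_const s (cv θ))
  have hW2 : HasDerivAt (fun r => fderiv ℝ u (cpt r θ) (dv θ))
      (fderiv ℝ (fderiv ℝ u) (cpt s θ) (cv θ) (dv θ)) s := by
    simpa using hL.clm_apply (hasDerivAt_const s (dv θ))
  have hN1 := hW1.inner ℝ hW1
  have hN2 := hW2.inner ℝ hW2
  simp only [real_inner_self_eq_norm_sq] at hN1 hN2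
  have hs2 : HasDerivAt (fun r : ℝ => r ^ 2) (2 * s) s := by
    simpa using hasDerivAt_pow 2 s
  have h := (hs2.mul (hN1.sub hN2)).div_const 2
  refine h.congr_deriv ?_
  unfold DQ
  rw [real_inner_comm (fderiv ℝ u (cpt s θ) (cv θ)), real_inner_comm (fderiv ℝ u (cpt s θ) (dv θ))]
  simp only [Pi.sub_apply]
  ring

lemma hasDerivAt_Gf {s : ℝ} (hs0 : 0 < s) (hs1 : s < 1) (θ : ℝ) :
    HasDerivAt (fun φ => Gf u s φ) (DG u s θ) θ := by
  have hXm : cpt s θ ∈ Om := cpt_mem_Om hs0 hs1 θ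
  have hL : HasDerivAt (fun φ => fderiv ℝ u (cpt s φ))
      (fderiv ℝ (fderiv ℝ u) (cpt s θ) (s • dv θ)) θ :=
    (hasFDerivAt_fd u hu hXm).comp_hasDerivAt θ (hasDerivAt_cpt_theta s θ)
  have hW1 : HasDerivAt (fun φ => fderiv ℝ u (cpt s φ) (cv φ))
      (fderiv ℝ (fderiv ℝ u) (cpt s θ) (s • dv θ) (cv θ) + fderiv ℝ u (cpt s θ) (dv θ)) θ :=
    hL.clm_apply (hasDerivAt_cv θ)
  have hW2 : HasDerivAt (fun φ => fderiv ℝ u (cpt s φ) (dv φ))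
      (fderiv ℝ (fderiv ℝ u) (cpt s θ) (s • dv θ) (dv θ) + fderiv ℝ u (cpt s θ) (-cv θ)) θ :=
    hL.clm_apply (hasDerivAt_dv θ)
  have h := (hW2.inner ℝ hW1).const_mul (s ^ 2)
  refine h.congr_deriv ?_
  unfold DG
  simp only [_root_.map_smul, ContinuousLinearMap.smul_apply, map_neg, sub_eq_add_neg]

lemma DQ_eq (horth : ∀ x ∈ Om, ∀ v : E2, ⟪lapl u x - g x, fderiv ℝ u x v⟫ = 0)
    {s : ℝ} (hs0 : 0 < s) (hs1 : s < 1) (θ : ℝ) :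
    DQ u s θ = s * hfun u g (cpt s θ) - s⁻¹ * DG u s θ := by
  have hXm : cpt s θ ∈ Om := cpt_mem_Om hs0 hs1 θ
  have hsym : fderiv ℝ (fderiv ℝ u) (cpt s θ) (dv θ) (cv θ) =
      fderiv ℝ (fderiv ℝ u) (cpt s θ) (cv θ) (dv θ) := sym2 u hu hXm (dv θ) (cv θ)
  have hlap : lapl u (cpt s θ) = fderiv ℝ (fderiv ℝ u) (cpt s θ) (cv θ) (cv θ) +
      fderiv ℝ (fderiv ℝ u) (cpt s θ) (dv θ) (dv θ) := lapl_rot u hu hXm θ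
  have h1 : ⟪lapl u (cpt s θ), fderiv ℝ u (cpt s θ) (cv θ)⟫ =
      ⟪g (cpt s θ), fderiv ℝ u (cpt s θ) (cv θ)⟫ := by
    have h := horth (cpt s θ) hXm (cv θ)
    rw [inner_sub_left, sub_eq_zero] at h
    exact h
  have h3 : fderiv ℝ u (cpt s θ) (cpt s θ) = s • fderiv ℝ u (cpt s θ) (cv θ) := by
    rw [show (cpt s θ : E2) = s • cv θ from cpt_eq s θ, _root_.map_smul]
  unfold DQ hfun DG
  rw [h3, real_inner_smul_right, ← h1, hlap, inner_add_left]
  simp only [inner_add_left, inner_add_right, inner_sub_left, real_inner_smul_left,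
    real_inner_smul_right, real_inner_self_eq_norm_sq]
  rw [hsym]
  rw [show ⟪fderiv ℝ u (cpt s θ) (dv θ), fderiv ℝ (fderiv ℝ u) (cpt s θ) (cv θ) (dv θ)⟫ =
      ⟪fderiv ℝ (fderiv ℝ u) (cpt s θ) (cv θ) (dv θ), fderiv ℝ u (cpt s θ) (dv θ)⟫ from
    real_inner_comm _ _]
  field_simp
  ring

/-- the strip on which everything is continuous -/
abbrev S01 : Set (ℝ × ℝ) := Ioo (0:ℝ) 1 ×ˢ (univ : Set ℝ)

omit hu in
lemma mapsTo_cpt_S01 : MapsTo (fun p : ℝ × ℝ => cpt p.1 p.2) S01 Om := by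
  rintro ⟨s, θ⟩ ⟨hs, -⟩; exact cpt_mem_Om hs.1 hs.2 θ

omit hu in
lemma contOn_apply {G : Type*} [NormedAddCommGroup G] [NormedSpace ℝ G]
    {F : ℝ × ℝ → E2 →L[ℝ] G} {V : ℝ × ℝ → E2} {S : Set (ℝ × ℝ)}
    (hF : ContinuousOn F S) (hV : Continuous V) :
    ContinuousOn (fun p => F p (V p)) S :=
  hF.clm_apply hV.continuousOn

lemma contOn_L : ContinuousOn (fun p : ℝ × ℝ => fderiv ℝ u (cpt p.1 p.2)) S01 :=
  (contOn_fd u hu).comp continuous_cpt.continuousOn mapsTo_cpt_S01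

lemma contOn_M : ContinuousOn (fun p : ℝ × ℝ => fderiv ℝ (fderiv ℝ u) (cpt p.1 p.2)) S01 :=
  (contOn_fd2 u hu).comp continuous_cpt.continuousOn mapsTo_cpt_S01

lemma contOn_Lc : ContinuousOn (fun p : ℝ × ℝ => fderiv ℝ u (cpt p.1 p.2) (cv p.2)) S01 :=
  contOn_apply (contOn_L u hu) (continuous_cv.comp continuous_snd)

lemma contOn_Ld : ContinuousOn (fun p : ℝ × ℝ => fderiv ℝ u (cpt p.1 p.2) (dv p.2)) S01 :=
  contOn_apply (contOn_L u hu) (continuous_dv.comp continuous_snd)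

lemma contOn_Mc : ContinuousOn
    (fun p : ℝ × ℝ => fderiv ℝ (fderiv ℝ u) (cpt p.1 p.2) (cv p.2)) S01 :=
  contOn_apply (contOn_M u hu) (continuous_cv.comp continuous_snd)

lemma contOn_Md : ContinuousOn
    (fun p : ℝ × ℝ => fderiv ℝ (fderiv ℝ u) (cpt p.1 p.2) (dv p.2)) S01 :=
  contOn_apply (contOn_M u hu) (continuous_dv.comp continuous_snd)

lemma contOn_Qf : ContinuousOn (fun p : ℝ × ℝ => Qf u p.1 p.2) S01 := by
  unfold Qf
  exact ((continuous_fst.pow 2).continuousOn.mul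
    (((contOn_Lc u hu).norm.pow 2).sub ((contOn_Ld u hu).norm.pow 2))).div_const 2

lemma contOn_DQ : ContinuousOn (fun p : ℝ × ℝ => DQ u p.1 p.2) S01 := by
  unfold DQ
  refine (continuous_fst.continuousOn.mul
    (((contOn_Lc u hu).norm.pow 2).sub ((contOn_Ld u hu).norm.pow 2))).add
    ((continuous_fst.pow 2).continuousOn.mul (ContinuousOn.sub ?_ ?_))
  · exact (contOn_apply (contOn_Mc u hu) (continuous_cv.comp continuous_snd)).inner
      (contOn_Lc u hu)
  · exact (contOn_apply (contOn_Mc u hu) (continuous_dv.comp continuous_snd)).inner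
      (contOn_Ld u hu)

lemma contOn_DG : ContinuousOn (fun p : ℝ × ℝ => DG u p.1 p.2) S01 := by
  unfold DG
  refine (continuous_fst.pow 2).continuousOn.mul (ContinuousOn.add ?_ ?_)
  · exact (contOn_Ld u hu).inner ((continuous_fst.continuousOn.smul
      (contOn_apply (contOn_Md u hu) (continuous_cv.comp continuous_snd))).add
      (contOn_Ld u hu))
  · exact ((continuous_fst.continuousOn.smul
      (contOn_apply (contOn_Md u hu) (continuous_dv.comp continuous_snd))).sub
      (contOn_Lc u hu)).inner (contOn_Lc u hu)

lemma contOn_hfun (hg : ContinuousOn g Om) : ContinuousOn (hfun u g) Om := by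
  unfold hfun
  exact hg.inner
    ((contOn_fd u hu).clm_apply
      continuousOn_id)

lemma contOn_grad2 : ContinuousOn (grad2 u) Om := by
  refine ContinuousOn.congr (f := fun x =>
    ‖fderiv ℝ u x (ee 0)‖ ^ 2 + ‖fderiv ℝ u x (ee 1)‖ ^ 2) ?_ (fun x _ => grad2_eq u x)
  refine ContinuousOn.add ?_ ?_ <;>
    exact (((contOn_fd u hu).clm_apply
      continuousOn_const).norm.pow 2)

omit hu in
lemma bdry_eq {s : ℝ} (hs0 : 0 < s) (hs1 : s < 1) :
    s * bdry u s = ∫ θ in (0:ℝ)..(2 * π), Qf u s θ := by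
  unfold bdry
  rw [← intervalIntegral.integral_const_mul]
  apply intervalIntegral.integral_congr
  intro θ _
  dsimp only
  unfold Qf
  rw [rderiv_cpt u hs0 θ, grad2_cpt u s θ]
  ring

lemma intDG_zero {s : ℝ} (hs0 : 0 < s) (hs1 : s < 1) :
    (∫ θ in (0:ℝ)..(2 * π), DG u s θ) = 0 := by
  have hderiv : ∀ θ ∈ uIcc (0:ℝ) (2 * π), HasDerivAt (fun φ => Gf u s φ) (DG u s θ) θ :=
    fun θ _ => hasDerivAt_Gf u hu hs0 hs1 θ
  have hint : IntervalIntegrable (fun θ => DG u s θ) volume 0 (2 * π) := by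
    apply Continuous.intervalIntegrable
    have hf : Continuous (fun θ : ℝ => ((s, θ) : ℝ × ℝ)) := by fun_prop
    exact (contOn_DG u hu).comp_continuous hf (fun θ => ⟨⟨hs0, hs1⟩, trivial⟩)
  rw [intervalIntegral.integral_eq_sub_of_hasDerivAt hderiv hint]
  have hper : Gf u s (2 * π) = Gf u s 0 := by
    unfold Gf
    rw [show (2 * π : ℝ) = 0 + 2 * π by ring, cpt_periodic, cv_periodic, dv_periodic]
  rw [hper, sub_self]

lemma key_identity (hg : ContinuousOn g Om)
    (horth : ∀ x ∈ Om, ∀ v : E2, ⟪lapl u x - g x, fderiv ℝ u x v⟫ = 0)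
    {t : ℝ} (ht0 : 0 < t) (ht1 : t < 1) :
    t * bdry u t - (t / 2) * bdry u (t / 2) =
      ∫ x in ball (0 : E2) t \ ball 0 (t / 2), hfun u g x := by
  have hπ := Real.pi_pos
  have ht2 : 0 < t / 2 := by linarith
  have ht21 : t / 2 < 1 := by linarith
  have hle : t / 2 ≤ t := by linarith
  set a₁ : ℝ := t / 4 with ha₁
  set b₁ : ℝ := (1 + t) / 2 with hb₁
  have ha₁0 : 0 < a₁ := by rw [ha₁]; linarith
  have hb₁1 : b₁ < 1 := by rw [hb₁]; linarith
  have hab : a₁ ≤ b₁ := by rw [ha₁, hb₁]; linarith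
  have hsub : (Icc a₁ b₁ ×ˢ Icc (-1 : ℝ) (2 * π + 1)) ⊆ S01 := by
    rintro ⟨x, y⟩ ⟨hx, -⟩
    exact ⟨⟨lt_of_lt_of_le ha₁0 hx.1, lt_of_le_of_lt hx.2 hb₁1⟩, trivial⟩
  obtain ⟨C, hC⟩ := ((isCompact_Icc).prod isCompact_Icc).exists_bound_of_continuousOn
    ((contOn_DQ u hu).mono hsub)
  set ε : ℝ := min (t / 4) ((1 - t) / 2) with hε
  have hε0 : 0 < ε := lt_min (by linarith) (by linarith)
  have hball : ∀ s₀ ∈ Icc (t / 2) t, ∀ x ∈ ball s₀ ε, a₁ ≤ x ∧ x ≤ b₁ := by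
    intro s₀ hs₀ x hx
    rw [mem_ball, Real.dist_eq] at hx
    have h1 := abs_lt.1 hx
    have h2 : ε ≤ t / 4 := min_le_left _ _
    have h3 : ε ≤ (1 - t) / 2 := min_le_right _ _
    obtain ⟨hs₀1, hs₀2⟩ := hs₀
    constructor
    · rw [ha₁]; linarith [h1.1, h1.2]
    · rw [hb₁]; linarith [h1.1, h1.2]
  have hmemS : ∀ x : ℝ, a₁ ≤ x → x ≤ b₁ → (0 < x ∧ x < 1) :=
    fun x h1 h2 => ⟨lt_of_lt_of_le ha₁0 h1, lt_of_le_of_lt h2 hb₁1⟩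
  have hcontθ : ∀ x : ℝ, 0 < x → x < 1 → ∀ {F : ℝ × ℝ → ℝ}, ContinuousOn F S01 →
      Continuous (fun θ => F (x, θ)) := by
    intro x hx0 hx1 F hF
    have hf : Continuous (fun θ : ℝ => ((x, θ) : ℝ × ℝ)) := by fun_prop
    exact hF.comp_continuous hf (fun θ => ⟨⟨hx0, hx1⟩, trivial⟩)
  have hderivΦ : ∀ s₀ ∈ uIcc (t / 2) t,
      HasDerivAt (fun r => ∫ θ in (0:ℝ)..(2 * π), Qf u r θ)
        (∫ θ in (0:ℝ)..(2 * π), DQ u s₀ θ) s₀ := by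
    intro s₀ hs₀
    rw [uIcc_of_le hle] at hs₀
    have hs₀0 : 0 < s₀ := lt_of_lt_of_le ht2 hs₀.1
    have hs₀1 : s₀ < 1 := lt_of_le_of_lt hs₀.2 ht1
    refine (intervalIntegral.hasDerivAt_integral_of_dominated_loc_of_deriv_le
      (bound := fun _ => C) (ball_mem_nhds s₀ hε0) ?_ ?_ ?_ ?_ ?_ ?_).2
    · filter_upwards [ball_mem_nhds s₀ hε0] with x hx
      have hx' := hball s₀ hs₀ x hx
      have hx'' := hmemS x hx'.1 hx'.2
      exact (hcontθ x hx''.1 hx''.2 (contOn_Qf u hu)).aestronglyMeasurable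
    · exact (hcontθ s₀ hs₀0 hs₀1 (contOn_Qf u hu)).intervalIntegrable _ _
    · exact (hcontθ s₀ hs₀0 hs₀1 (contOn_DQ u hu)).aestronglyMeasurable
    · refine Filter.Eventually.of_forall (fun θ hθ x hx => ?_)
      have hx' := hball s₀ hs₀ x hx
      rw [Set.uIoc_of_le (by linarith : (0:ℝ) ≤ 2 * π)] at hθ
      exact hC (x, θ) ⟨⟨hx'.1, hx'.2⟩, ⟨by linarith [hθ.1], by linarith [hθ.2]⟩⟩
    · exact intervalIntegrable_const
    · refine Filter.Eventually.of_forall (fun θ _ x hx => ?_)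
      have hx' := hball s₀ hs₀ x hx
      have hx'' := hmemS x hx'.1 hx'.2
      exact hasDerivAt_Qf u hu hx''.1 hx''.2 θ
  have hintR : IntervalIntegrable (fun s => ∫ θ in (0:ℝ)..(2 * π), DQ u s θ)
      volume (t / 2) t := by
    have hcont : Continuous (fun x : ℝ => ∫ θ in (0:ℝ)..(2 * π), DQ u (max a₁ (min x b₁)) θ) := by
      apply continuous_parametric_intervalIntegral_of_continuous'
      have hm : Continuous (fun p : ℝ × ℝ => ((max a₁ (min p.1 b₁), p.2) : ℝ × ℝ)) := by
        fun_prop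
      have hmem : ∀ p : ℝ × ℝ, ((max a₁ (min p.1 b₁), p.2) : ℝ × ℝ) ∈ S01 := by
        intro p
        have h1 : a₁ ≤ max a₁ (min p.1 b₁) := le_max_left _ _
        have h2 : max a₁ (min p.1 b₁) ≤ b₁ := max_le hab (min_le_right _ _)
        exact ⟨⟨lt_of_lt_of_le ha₁0 h1, lt_of_le_of_lt h2 hb₁1⟩, trivial⟩
      exact (contOn_DQ u hu).comp_continuous hm hmem
    apply ContinuousOn.intervalIntegrable
    refine hcont.continuousOn.congr ?_
    intro s hs
    rw [uIcc_of_le hle] at hs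
    have h1 : a₁ ≤ s := by rw [ha₁]; linarith [hs.1]
    have h2 : s ≤ b₁ := by rw [hb₁]; linarith [hs.2]
    simp only [min_eq_left h2, max_eq_right h1]
  have hFTC := intervalIntegral.integral_eq_sub_of_hasDerivAt hderivΦ hintR
  have hRs : ∀ s ∈ uIcc (t / 2) t,
      (∫ θ in (0:ℝ)..(2 * π), DQ u s θ) = ∫ θ in (0:ℝ)..(2 * π), s * hfun u g (cpt s θ) := by
    intro s hs
    rw [uIcc_of_le hle] at hs
    have hs0 : 0 < s := lt_of_lt_of_le ht2 hs.1
    have hs1 : s < 1 := lt_of_le_of_lt hs.2 ht1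
    have hint1 : IntervalIntegrable (fun θ => s * hfun u g (cpt s θ)) volume 0 (2 * π) := by
      apply Continuous.intervalIntegrable
      refine continuous_const.mul ?_
      have hm : Continuous (fun θ : ℝ => cpt s θ) :=
        continuous_cpt.comp (by fun_prop : Continuous (fun θ : ℝ => ((s, θ) : ℝ × ℝ)))
      exact (contOn_hfun u g hu hg).comp_continuous hm (fun θ => cpt_mem_Om hs0 hs1 θ)
    have hint2 : IntervalIntegrable (fun θ => s⁻¹ * DG u s θ) volume 0 (2 * π) := by
      apply Continuous.intervalIntegrable
      have hf : Continuous (fun θ : ℝ => ((s, θ) : ℝ × ℝ)) := by fun_prop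
      exact continuous_const.mul ((contOn_DG u hu).comp_continuous hf
        (fun θ => ⟨⟨hs0, hs1⟩, trivial⟩))
    calc (∫ θ in (0:ℝ)..(2 * π), DQ u s θ)
        = ∫ θ in (0:ℝ)..(2 * π), (s * hfun u g (cpt s θ) - s⁻¹ * DG u s θ) := by
          apply intervalIntegral.integral_congr
          intro θ _
          exact DQ_eq u g hu horth hs0 hs1 θ
      _ = (∫ θ in (0:ℝ)..(2 * π), s * hfun u g (cpt s θ)) -
            ∫ θ in (0:ℝ)..(2 * π), s⁻¹ * DG u s θ := intervalIntegral.integral_sub hint1 hint2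
      _ = ∫ θ in (0:ℝ)..(2 * π), s * hfun u g (cpt s θ) := by
          rw [show (∫ θ in (0:ℝ)..(2 * π), s⁻¹ * DG u s θ)
              = s⁻¹ * ∫ θ in (0:ℝ)..(2 * π), DG u s θ from by
            rw [intervalIntegral.integral_const_mul]]
          rw [intDG_zero u hu hs0 hs1, mul_zero, sub_zero]
  rw [bdry_eq u ht0 ht1, bdry_eq u ht2 ht21, ← hFTC,
      polar_annulus (contOn_hfun u g hu hg) ht0 ht1]
  exact intervalIntegral.integral_congr hRs

end K2

end Stmt4

open Stmt4 in
/-- For `u` of class `C²` on `B \ {0}` with tension field `g` satisfying the annular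
decay condition, `∫_{∂B_t}(|∂u/∂r|² − ½|∇u|²) dS − ½∫_{∂B_{t/2}}(|∂u/∂r|² − ½|∇u|²) dS
  ≤ C₀ t^{−a} ‖∇u‖_{L²(B_t \ B_{t/2})}` for every `0 < t < 1`. -/
theorem statement4 {K : ℕ} (a C₀ : ℝ) (ha0 : 0 < a) (ha1 : a < 1) (hC₀ : 0 < C₀)
    (u g : E2 → EK K)
    (hu : ContDiffOn ℝ 2 u (ball (0 : E2) 1 \ {0}))
    (hg : ContinuousOn g (ball (0 : E2) 1 \ {0}))
    (horth : ∀ x ∈ ball (0 : E2) 1 \ {0}, ∀ v : E2,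
      ⟪lapl u x - g x, fderiv ℝ u x v⟫ = 0)
    (hdecay : annDecay g a C₀) :
    ∀ t : ℝ, 0 < t → t < 1 →
      bdry u t - (1 / 2) * bdry u (t / 2) ≤
        C₀ * t ^ (-a) * Real.sqrt (∫ x in ball (0 : E2) t \ ball 0 (t / 2), grad2 u x) := by
  intro t ht0 ht1
  have ht2 : 0 < t / 2 := by linarith
  set A : Set E2 := ball (0 : E2) t \ ball 0 (t / 2) with hA
  have mA : MeasurableSet A := measurableSet_ball.diff measurableSet_ball
  set cA : Set E2 := closedBall (0 : E2) t \ ball 0 (t / 2) with hcA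
  have hAc : A ⊆ cA := diff_subset_diff_left ball_subset_closedBall
  have hcomp : IsCompact cA := (isCompact_closedBall _ _).diff isOpen_ball
  have hcOm : cA ⊆ Om := by
    rintro x ⟨hx1, hx2⟩
    rw [mem_closedBall, dist_zero_right] at hx1
    constructor
    · rw [mem_ball, dist_zero_right]; linarith
    · simp only [mem_singleton_iff]
      intro h
      exact hx2 (by rw [h]; exact mem_ball_self ht2)
  have hAOm : A ⊆ Om := fun x hx => hcOm (hAc hx)
  have hIO : ∀ {F : E2 → ℝ}, ContinuousOn F Om → IntegrableOn F A volume := by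
    intro F hF
    exact ((hF.mono hcOm).integrableOn_compact hcomp).mono_set hAc
  have hid := key_identity u g hu hg horth ht0 ht1
  rw [← hA] at hid
  -- pointwise bound
  have hpt : ∀ x ∈ A, hfun u g x ≤ ‖g x‖ * (t * Real.sqrt (grad2 u x)) := by
    intro x hx
    have h1 : hfun u g x ≤ ‖g x‖ * ‖fderiv ℝ u x x‖ := real_inner_le_norm _ _
    have h2 : ‖fderiv ℝ u x x‖ ≤ Real.sqrt (grad2 u x) * ‖x‖ := by
      have h3 := opnorm_clm (fderiv ℝ u x) x
      rw [← grad2_eq u x] at h3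
      have h5 : Real.sqrt (‖fderiv ℝ u x x‖ ^ 2) ≤ Real.sqrt (grad2 u x * ‖x‖ ^ 2) :=
        Real.sqrt_le_sqrt h3
      rwa [Real.sqrt_sq (norm_nonneg _), Real.sqrt_mul (grad2_nonneg u x),
        Real.sqrt_sq (norm_nonneg _)] at h5
    have h4 : ‖x‖ ≤ t := by
      have hx1 := hx.1
      rw [mem_ball, dist_zero_right] at hx1
      exact hx1.le
    have h6 : ‖fderiv ℝ u x x‖ ≤ Real.sqrt (grad2 u x) * t :=
      h2.trans (mul_le_mul_of_nonneg_left h4 (Real.sqrt_nonneg _))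
    calc hfun u g x ≤ ‖g x‖ * ‖fderiv ℝ u x x‖ := h1
      _ ≤ ‖g x‖ * (Real.sqrt (grad2 u x) * t) := mul_le_mul_of_nonneg_left h6 (norm_nonneg _)
      _ = ‖g x‖ * (t * Real.sqrt (grad2 u x)) := by ring
  -- integrability
  have hint1 : IntegrableOn (hfun u g) A volume := hIO (contOn_hfun u g hu hg)
  have hint2 : IntegrableOn (fun x => ‖g x‖ * (t * Real.sqrt (grad2 u x))) A volume :=
    hIO (hg.norm.mul (continuousOn_const.mul ((contOn_grad2 u hu).sqrt)))
  have hmono := setIntegral_mono_on hint1 hint2 mA hpt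
  -- pull out t
  have hpull : (∫ x in A, ‖g x‖ * (t * Real.sqrt (grad2 u x)))
      = t * ∫ x in A, ‖g x‖ * Real.sqrt (grad2 u x) := by
    rw [← integral_const_mul]
    apply setIntegral_congr_fun mA
    intro x _
    ring
  -- Hölder
  haveI hfin : IsFiniteMeasure (volume.restrict A) := by
    constructor
    rw [Measure.restrict_apply_univ]
    exact lt_of_le_of_lt (measure_mono hAc) hcomp.measure_lt_top
  obtain ⟨Cg, hCg⟩ := hcomp.exists_bound_of_continuousOn (hg.mono hcOm)
  obtain ⟨Cu, hCu⟩ := hcomp.exists_bound_of_continuousOn ((contOn_grad2 u hu).mono hcOm)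
  have haesm_g : AEStronglyMeasurable (fun x => ‖g x‖) (volume.restrict A) :=
    ((hg.mono hAOm).aestronglyMeasurable mA).norm
  have haesm_s : AEStronglyMeasurable (fun x => Real.sqrt (grad2 u x)) (volume.restrict A) :=
    Real.continuous_sqrt.comp_aestronglyMeasurable
      (((contOn_grad2 u hu).mono hAOm).aestronglyMeasurable mA)
  have hmem_g : MemLp (fun x => ‖g x‖) (ENNReal.ofReal 2) (volume.restrict A) := by
    refine MemLp.of_bound haesm_g Cg ?_
    rw [ae_restrict_iff' mA]
    refine Filter.Eventually.of_forall (fun x hx => ?_)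
    rw [norm_norm]
    exact hCg x (hAc hx)
  have hmem_s : MemLp (fun x => Real.sqrt (grad2 u x)) (ENNReal.ofReal 2)
      (volume.restrict A) := by
    refine MemLp.of_bound haesm_s (Real.sqrt Cu) ?_
    rw [ae_restrict_iff' mA]
    refine Filter.Eventually.of_forall (fun x hx => ?_)
    rw [Real.norm_eq_abs, abs_of_nonneg (Real.sqrt_nonneg _)]
    refine Real.sqrt_le_sqrt ?_
    have h7 := hCu x (hAc hx)
    rwa [Real.norm_eq_abs, abs_of_nonneg (grad2_nonneg u x)] at h7
  have hconj : Real.HolderConjugate 2 2 := Real.HolderConjugate.two_two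
  have hH := integral_mul_le_Lp_mul_Lq_of_nonneg hconj
    (Filter.Eventually.of_forall fun x => norm_nonneg (g x))
    (Filter.Eventually.of_forall fun x => Real.sqrt_nonneg (grad2 u x))
    hmem_g hmem_s
  have hrpow2 : ∀ y : ℝ, y ^ (2:ℝ) = y ^ 2 := fun y => by
    rw [show ((2:ℝ)) = ((2:ℕ):ℝ) by norm_num, Real.rpow_natCast]
  have e1 : (∫ x in A, ‖g x‖ ^ (2:ℝ)) = ∫ x in A, ‖g x‖ ^ 2 := by
    apply setIntegral_congr_fun mA
    intro x _
    exact hrpow2 _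
  have e2 : (∫ x in A, Real.sqrt (grad2 u x) ^ (2:ℝ)) = ∫ x in A, grad2 u x := by
    apply setIntegral_congr_fun mA
    intro x _
    dsimp only
    rw [hrpow2, Real.sq_sqrt (grad2_nonneg u x)]
  rw [e1, e2, ← Real.sqrt_eq_rpow, ← Real.sqrt_eq_rpow] at hH
  -- decay
  have hd := hdecay t ht0 ht1
  rw [← hA] at hd
  have hsg : 0 ≤ Real.sqrt (∫ x in A, grad2 u x) := Real.sqrt_nonneg _
  have h5 : (∫ x in A, ‖g x‖ * Real.sqrt (grad2 u x))
      ≤ (C₀ * t ^ (-a)) * Real.sqrt (∫ x in A, grad2 u x) :=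
    hH.trans (mul_le_mul_of_nonneg_right hd hsg)
  have hbound : (∫ x in A, hfun u g x)
      ≤ t * (C₀ * t ^ (-a) * Real.sqrt (∫ x in A, grad2 u x)) := by
    calc (∫ x in A, hfun u g x)
        ≤ ∫ x in A, ‖g x‖ * (t * Real.sqrt (grad2 u x)) := hmono
      _ = t * ∫ x in A, ‖g x‖ * Real.sqrt (grad2 u x) := hpull
      _ ≤ t * ((C₀ * t ^ (-a)) * Real.sqrt (∫ x in A, grad2 u x)) :=
          mul_le_mul_of_nonneg_left h5 ht0.le
  have h6 : t * (bdry u t - (1/2) * bdry u (t/2))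
      ≤ t * (C₀ * t ^ (-a) * Real.sqrt (∫ x in A, grad2 u x)) := by
    calc t * (bdry u t - (1/2) * bdry u (t/2))
        = t * bdry u t - (t/2) * bdry u (t/2) := by ring
      _ = ∫ x in A, hfun u g x := hid
      _ ≤ _ := hbound
  exact le_of_mul_le_mul_left h6 ht0
end
end

section
/- Let 0 < t₂ < t₁ and let u : ℝ² → ℝ^K be C¹ on a neighborhood of the closed annulus A = {x : t₂ ≤ |x| ≤ t₁}. Let u* : A → ℝ^K be the radially symmetric map defined by the angular means, u*(x) = (1/2π)∫₀^{2π} u(|x| cos θ, |x| sin θ) dθ. Then ∫_A ⟨∇u, ∇(u − u*)⟩ dx ≥ ∫_A (|∇u|² − |∂u/∂r|²) dx, where ⟨∇u, ∇v⟩ denotes the sum over components and coordinate directions of the products of partial derivatives. -/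
open MeasureTheory Metric Set
open scoped RealInnerProductSpace

noncomputable section

/- ### Auxiliary lemmas -/

lemma cpt_eq_smul (r θ : ℝ) : cpt r θ = r • cpt 1 θ := by
  simp only [cpt]
  ext j
  fin_cases j <;> simp [WithLp.equiv_symm_apply, PiLp.toLp_apply]

lemma norm_cpt (r θ : ℝ) (hr : 0 ≤ r) : ‖cpt r θ‖ = r := by
  rw [EuclideanSpace.norm_eq]
  have h : ∑ j : Fin 2, ‖cpt r θ j‖ ^ 2 = r ^ 2 := by
    rw [Fin.sum_univ_two]
    simp only [Real.norm_eq_abs, sq_abs]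
    simp [cpt, WithLp.equiv_symm_apply, PiLp.toLp_apply]
    ring_nf
    rw [← mul_add, Real.cos_sq_add_sin_sq]
    ring
  rw [h, Real.sqrt_sq hr]

lemma cpt_periodic (r : ℝ) : Function.Periodic (cpt r) (2 * Real.pi) := by
  intro θ; simp [cpt, Real.cos_add_two_pi, Real.sin_add_two_pi]

lemma continuous_cpt : Continuous (fun p : ℝ × ℝ => cpt p.1 p.2) := by
  have : Continuous fun p : ℝ × ℝ => (![p.1 * Real.cos p.2, p.1 * Real.sin p.2] : Fin 2 → ℝ) := by
    refine continuous_pi ?_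
    intro i
    fin_cases i
    · show Continuous fun p : ℝ × ℝ => p.1 * Real.cos p.2
      fun_prop
    · show Continuous fun p : ℝ × ℝ => p.1 * Real.sin p.2
      fun_prop
  exact (PiLp.continuous_toLp 2 (fun _ : Fin 2 => ℝ)).comp this

lemma sum_smul_single (x : E2) :
    ∑ i : Fin 2, x i • EuclideanSpace.single i (1:ℝ) = x := by
  ext j
  have h : ∀ i : Fin 2, (x i • EuclideanSpace.single i (1:ℝ)) j
      = if j = i then x i else 0 := by
    intro i; simp [EuclideanSpace.single_apply]
  have h2 : (∑ i : Fin 2, x i • EuclideanSpace.single i (1:ℝ)) j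
      = ∑ i : Fin 2, (x i • EuclideanSpace.single i (1:ℝ)) j := by
    rw [Fin.sum_univ_two, Fin.sum_univ_two]; rfl
  rw [h2]
  simp only [h]
  rw [Fin.sum_univ_two]
  fin_cases j <;> simp

lemma hasFDerivAt_norm' (x : E2) (hx : x ≠ 0) :
    HasFDerivAt (fun y : E2 => ‖y‖) (‖x‖⁻¹ • innerSL ℝ x) x := by
  have hinner : HasFDerivAt (fun y : E2 => ⟪y, y⟫)
      ((fderivInnerCLM ℝ (x, x)).comp ((ContinuousLinearMap.id ℝ E2).prod
        (ContinuousLinearMap.id ℝ E2))) x :=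
    (hasFDerivAt_id x).inner ℝ (hasFDerivAt_id x)
  have hne : ⟪x, x⟫ ≠ 0 := by
    rw [real_inner_self_eq_norm_sq]
    exact pow_ne_zero _ (norm_ne_zero_iff.mpr hx)
  have hs : HasDerivAt Real.sqrt (1 / (2 * Real.sqrt ⟪x, x⟫)) ⟪x, x⟫ :=
    Real.hasDerivAt_sqrt hne
  have hcomp := HasDerivAt.comp_hasFDerivAt (f := fun y : E2 => ⟪y, y⟫) x hs hinner
  have heq : (fun y : E2 => Real.sqrt ⟪y, y⟫) = fun y : E2 => ‖y‖ := by
    funext y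
    rw [real_inner_self_eq_norm_mul_norm, Real.sqrt_mul_self (norm_nonneg _)]
  rw [show (Real.sqrt ∘ fun y : E2 => ⟪y, y⟫) = fun y : E2 => ‖y‖ from heq] at hcomp
  refine hcomp.congr_fderiv (Eq.symm ?_)
  ext v
  simp only [ContinuousLinearMap.smul_apply, innerSL_apply_apply, ContinuousLinearMap.coe_comp',
    Function.comp_apply, ContinuousLinearMap.prod_apply, ContinuousLinearMap.coe_id', id,
    fderivInnerCLM_apply]
  rw [real_inner_self_eq_norm_mul_norm, Real.sqrt_mul_self (norm_nonneg _)]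
  rw [real_inner_comm v x]
  simp only [smul_eq_mul]
  have : ‖x‖ ≠ 0 := norm_ne_zero_iff.mpr hx
  field_simp
  ring

/-- For `u` of class `C¹` near the closed annulus `A = {t₂ ≤ |x| ≤ t₁}` and `u*` the
radially symmetric map of angular means,
`∫_A ⟨∇u, ∇(u − u*)⟩ ≥ ∫_A (|∇u|² − |∂u/∂r|²)`. -/
theorem statement8 {K : ℕ} (t₁ t₂ : ℝ) (ht₂ : 0 < t₂) (ht : t₂ < t₁)
    (u : E2 → EK K)
    (hu : ∃ U : Set E2, IsOpen U ∧ (closedBall (0 : E2) t₁ \ ball 0 t₂) ⊆ U ∧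
      ContDiffOn ℝ 1 u U) :
    (∫ x in closedBall (0 : E2) t₁ \ ball 0 t₂,
        gradInner u (fun y => u y - ustar u y) x) ≥
      ∫ x in closedBall (0 : E2) t₁ \ ball 0 t₂, (grad2 u x - ‖rderiv u x‖ ^ 2) := by
  obtain ⟨U, hUo, hAU, hu⟩ := hu
  have hπ : (0:ℝ) < Real.pi := Real.pi_pos
  set A : Set E2 := closedBall (0 : E2) t₁ \ ball 0 t₂ with hA
  have hAmeas : MeasurableSet A := measurableSet_closedBall.diff measurableSet_ball
  have hAcomp : IsCompact A := (isCompact_closedBall _ _).diff isOpen_ball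
  have hmemA : ∀ {r θ : ℝ}, t₂ ≤ r → r ≤ t₁ → cpt r θ ∈ A := by
    intro r θ h1 h2
    have hr0 : (0:ℝ) ≤ r := le_trans ht₂.le h1
    constructor
    · simp only [mem_closedBall, dist_zero_right, norm_cpt r θ hr0]; exact h2
    · simp only [mem_ball, dist_zero_right, norm_cpt r θ hr0, not_lt]; exact h1
  have hxA : ∀ {x : E2}, x ∈ A → t₂ ≤ ‖x‖ ∧ ‖x‖ ≤ t₁ := by
    intro x hx
    obtain ⟨h1, h2⟩ := hx
    simp only [mem_closedBall, dist_zero_right] at h1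
    simp only [mem_ball, dist_zero_right, not_lt] at h2
    exact ⟨h2, h1⟩
  have hxA' : ∀ {x : E2}, t₂ ≤ ‖x‖ → ‖x‖ ≤ t₁ → x ∈ A := by
    intro x h1 h2
    constructor
    · simp only [mem_closedBall, dist_zero_right]; exact h2
    · simp only [mem_ball, dist_zero_right, not_lt]; exact h1
  have hdiff : ∀ {x : E2}, x ∈ U → DifferentiableAt ℝ u x := fun hx =>
    (hu.differentiableOn one_ne_zero).differentiableAt (hUo.mem_nhds hx)
  have hucont : ContinuousOn u U := hu.continuousOn
  have hcontf : ContinuousOn (fderiv ℝ u) U := hu.continuousOn_fderiv_of_isOpen hUo le_rfl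
  obtain ⟨C, hC⟩ : ∃ C, ∀ x ∈ A, ‖fderiv ℝ u x‖ ≤ C :=
    hAcomp.exists_bound_of_continuousOn (hcontf.mono hAU)
  set g : ℝ → ℝ → EK K := fun r θ => fderiv ℝ u (cpt r θ) (cpt 1 θ) with hg
  set cl : ℝ → ℝ := fun r => max t₂ (min r t₁) with hcl
  have hcl_mem : ∀ r, t₂ ≤ cl r ∧ cl r ≤ t₁ :=
    fun r => ⟨le_max_left _ _, max_le ht.le (min_le_right _ _)⟩
  have hcl_id : ∀ {r}, t₂ ≤ r → r ≤ t₁ → cl r = r := by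
    intro r h1 h2; simp only [hcl]; rw [min_eq_left h2, max_eq_right h1]
  have hcl_cont : Continuous cl := continuous_const.max (continuous_id.min continuous_const)
  have hghat : Continuous (fun p : ℝ × ℝ => g (cl p.1) p.2) := by
    have h1 : Continuous (fun p : ℝ × ℝ => cpt (cl p.1) p.2) :=
      continuous_cpt.comp ((hcl_cont.comp continuous_fst).prodMk continuous_snd)
    have hmap : ∀ p : ℝ × ℝ, cpt (cl p.1) p.2 ∈ U := fun p =>
      hAU (hmemA (hcl_mem p.1).1 (hcl_mem p.1).2)
    have h2 : Continuous (fun p : ℝ × ℝ => fderiv ℝ u (cpt (cl p.1) p.2)) :=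
      hcontf.comp_continuous h1 hmap
    have h3 : Continuous (fun p : ℝ × ℝ => cpt 1 p.2) :=
      continuous_cpt.comp (continuous_const.prodMk continuous_snd)
    exact h2.clm_apply h3
  set m : ℝ → EK K := fun r => (2 * Real.pi)⁻¹ • ∫ θ in (0:ℝ)..(2*Real.pi), g (cl r) θ with hm
  have hm_cont : Continuous m := by
    have h := intervalIntegral.continuous_parametric_intervalIntegral_of_continuous'
      (μ := volume) (f := fun r θ => g (cl r) θ) (by exact hghat) 0 (2*Real.pi)
    exact h.const_smul ((2*Real.pi)⁻¹)
  -- continuity of `g r ·` for fixed good r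
  have hg_cont : ∀ {r : ℝ}, t₂ ≤ r → r ≤ t₁ → Continuous (fun θ => g r θ) := by
    intro r h1 h2
    have hc : Continuous fun θ : ℝ => g (cl r) θ :=
      hghat.comp (continuous_const.prodMk continuous_id)
    rwa [hcl_id h1 h2] at hc
  -- derivative of the angular integral
  have hphi : ∀ r₀ : ℝ, t₂ < r₀ → r₀ < t₁ →
      HasDerivAt (fun s => ∫ θ in (0:ℝ)..(2*Real.pi), u (cpt s θ))
        (∫ θ in (0:ℝ)..(2*Real.pi), g r₀ θ) r₀ := by
    intro r₀ h1 h2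
    set ε : ℝ := min (r₀ - t₂) (t₁ - r₀) with hε
    have hεpos : 0 < ε := lt_min (by linarith) (by linarith)
    have hball : ∀ s ∈ ball r₀ ε, t₂ ≤ s ∧ s ≤ t₁ := by
      intro s hs
      rw [mem_ball, Real.dist_eq] at hs
      have h1' := abs_lt.mp hs
      have := min_le_left (r₀ - t₂) (t₁ - r₀)
      have := min_le_right (r₀ - t₂) (t₁ - r₀)
      constructor <;> [linarith [h1'.1]; linarith [h1'.2]]
    have hcontθ : ∀ s : ℝ, t₂ ≤ s → s ≤ t₁ → Continuous (fun θ => u (cpt s θ)) := by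
      intro s hs1 hs2
      refine hucont.comp_continuous
        (continuous_cpt.comp (continuous_const.prodMk continuous_id)) ?_
      intro θ
      exact hAU (hmemA hs1 hs2)
    refine (intervalIntegral.hasDerivAt_integral_of_dominated_loc_of_deriv_le
      (F := fun s θ => u (cpt s θ)) (F' := fun s θ => g s θ) (bound := fun _ => C)
      (Metric.ball_mem_nhds r₀ hεpos) ?_ ?_ ?_ ?_ ?_ ?_).2
    · filter_upwards [Ioo_mem_nhds h1 h2] with s hs
      exact (hcontθ s hs.1.le hs.2.le).aestronglyMeasurable
    · exact ((hcontθ r₀ h1.le h2.le).intervalIntegrable _ _)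
    · exact ((hg_cont h1.le h2.le).aestronglyMeasurable)
    · refine Filter.Eventually.of_forall (fun θ => ?_)
      intro _ s hs
      have hb := hball s hs
      have hmem := hmemA (r := s) (θ := θ) hb.1 hb.2
      have : ‖g s θ‖ ≤ ‖fderiv ℝ u (cpt s θ)‖ * ‖cpt 1 θ‖ :=
        (fderiv ℝ u (cpt s θ)).le_opNorm _
      rw [norm_cpt 1 θ zero_le_one, mul_one] at this
      exact this.trans (hC _ hmem)
    · exact intervalIntegrable_const
    · refine Filter.Eventually.of_forall (fun θ => ?_)
      intro _ s hs
      have hb := hball s hs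
      have hd1 : HasDerivAt (fun s' : ℝ => s' • cpt 1 θ) (cpt 1 θ) s := by
        simpa using (hasDerivAt_id s).smul_const (cpt 1 θ)
      have hdu : DifferentiableAt ℝ u (cpt s θ) := hdiff (hAU (hmemA hb.1 hb.2))
      rw [cpt_eq_smul s θ] at hdu
      have hcomp := (hdu.hasFDerivAt).comp_hasDerivAt s hd1
      have heq : (u ∘ fun s' : ℝ => s' • cpt 1 θ) = fun s' => u (cpt s' θ) := by
        funext s'; simp only [Function.comp_apply, ← cpt_eq_smul]
      rw [heq] at hcomp
      show HasDerivAt (fun s' => u (cpt s' θ)) (fderiv ℝ u (cpt s θ) (cpt 1 θ)) s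
      rw [cpt_eq_smul s θ]
      exact hcomp
  -- derivative of ustar
  have hustar : ∀ x : E2, t₂ < ‖x‖ → ‖x‖ < t₁ →
      HasFDerivAt (ustar u)
        (((1 : ℝ →L[ℝ] ℝ).smulRight (m ‖x‖)).comp (‖x‖⁻¹ • innerSL ℝ x)) x := by
    intro x h1 h2
    have hx0 : x ≠ 0 := by
      intro h
      rw [h] at h1; simp only [norm_zero] at h1; linarith
    have hd := (hphi ‖x‖ h1 h2).const_smul ((2*Real.pi)⁻¹)
    have hmval : ((2*Real.pi)⁻¹ • ∫ θ in (0:ℝ)..(2*Real.pi), g ‖x‖ θ) = m ‖x‖ := by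
      rw [hm]; simp only
      rw [hcl_id h1.le h2.le]
    rw [hmval] at hd
    have hn := hasFDerivAt_norm' x hx0
    have hcomp := (hd.hasFDerivAt).comp x hn
    exact hcomp
  -- pointwise identity
  have hptwise : ∀ x : E2, t₂ < ‖x‖ → ‖x‖ < t₁ →
      gradInner u (fun y => u y - ustar u y) x
        = grad2 u x - ⟪rderiv u x, m ‖x‖⟫ := by
    intro x h1 h2
    have hxU : x ∈ U := hAU (hxA' h1.le h2.le)
    have hdu : DifferentiableAt ℝ u x := hdiff hxU
    have hst := hustar x h1 h2
    have hnx : ‖x‖ ≠ 0 := ne_of_gt (lt_trans ht₂ h1)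
    set L : E2 →L[ℝ] EK K :=
      ((1 : ℝ →L[ℝ] ℝ).smulRight (m ‖x‖)).comp (‖x‖⁻¹ • innerSL ℝ x) with hL
    have hfd : fderiv ℝ (fun y => u y - ustar u y) x = fderiv ℝ u x - L := by
      rw [fderiv_fun_sub hdu hst.differentiableAt, hst.fderiv]
    have hLapp : ∀ v : E2, L v = (‖x‖⁻¹ * ⟪x, v⟫) • m ‖x‖ := by
      intro v
      simp [hL, ContinuousLinearMap.smulRight_apply, smul_smul]
    unfold gradInner grad2
    rw [hfd]
    have hterm : ∀ i : Fin 2,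
        ⟪fderiv ℝ u x (EuclideanSpace.single i 1),
          (fderiv ℝ u x - L) (EuclideanSpace.single i 1)⟫
        = ‖fderiv ℝ u x (EuclideanSpace.single i 1)‖ ^ 2
          - (‖x‖⁻¹ * x i) * ⟪fderiv ℝ u x (EuclideanSpace.single i 1), m ‖x‖⟫ := by
      intro i
      rw [ContinuousLinearMap.sub_apply, inner_sub_right, hLapp, real_inner_smul_right,
        real_inner_self_eq_norm_sq]
      congr 3
      have : ⟪x, EuclideanSpace.single i (1:ℝ)⟫ = x i := by
        rw [EuclideanSpace.inner_single_right]; simp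
      rw [this]
    simp only [hterm]
    rw [Finset.sum_sub_distrib]
    congr 1
    have hsum : ∑ i : Fin 2, (‖x‖⁻¹ * x i) *
          ⟪fderiv ℝ u x (EuclideanSpace.single i 1), m ‖x‖⟫
        = ⟪fderiv ℝ u x (‖x‖⁻¹ • x), m ‖x‖⟫ := by
      have h3 : (fderiv ℝ u x) (‖x‖⁻¹ • x)
          = ∑ i : Fin 2, (‖x‖⁻¹ * x i) • fderiv ℝ u x (EuclideanSpace.single i 1) := by
        have hxrep : (‖x‖⁻¹ • x : E2)
            = ∑ i : Fin 2, (‖x‖⁻¹ * x i) • EuclideanSpace.single i (1:ℝ) := by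
          rw [← sum_smul_single x, Finset.smul_sum]
          simp [smul_smul, sum_smul_single]
        rw [hxrep, map_sum]
        simp [_root_.map_smul]
      rw [h3, sum_inner]
      congr 1
      funext i
      rw [real_inner_smul_left]
    rw [hsum]
    rfl
  -- continuity of various integrands on A
  have hrd_cont : ContinuousOn (fun x => rderiv u x) A := by
    have h1 : ContinuousOn (fun x : E2 => ‖x‖⁻¹ • x) A := by
      have hnz : ∀ x ∈ A, ‖x‖ ≠ 0 := fun x hx =>
        ne_of_gt (lt_of_lt_of_le ht₂ (hxA hx).1)
      exact (((continuous_norm.continuousOn :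
        ContinuousOn (fun x : E2 => ‖x‖) A)).inv₀ hnz).smul continuousOn_id
    exact (hcontf.mono hAU).clm_apply h1
  have hgrad2_cont : ContinuousOn (grad2 u) A := by
    apply continuousOn_finset_sum
    intro i _
    exact (((hcontf.mono hAU).clm_apply continuousOn_const).norm).pow 2
  have hH_cont : ContinuousOn (fun x => ‖rderiv u x‖ ^ 2 - ⟪rderiv u x, m ‖x‖⟫) A := by
    exact ((hrd_cont.norm).pow 2).sub
      (hrd_cont.inner ((hm_cont.comp continuous_norm).continuousOn))
  -- nonnegativity of the key integral
  have hkey : 0 ≤ ∫ x in A, (‖rderiv u x‖ ^ 2 - ⟪rderiv u x, m ‖x‖⟫) := by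
    set H : E2 → ℝ := fun x => ‖rderiv u x‖ ^ 2 - ⟪rderiv u x, m ‖x‖⟫ with hH
    set e : E2 ≃ᵐ ℝ × ℝ :=
      (MeasurableEquiv.toLp 2 (Fin 2 → ℝ)).symm.trans MeasurableEquiv.finTwoArrow with he
    have hep : MeasurePreserving e :=
      (volume_preserving_finTwoArrow ℝ).comp
        (EuclideanSpace.volume_preserving_symm_measurableEquiv_toLp (Fin 2))
    have hesymm : ∀ r θ : ℝ, e.symm (polarCoord.symm (r, θ)) = cpt r θ := by
      intro r θ; rfl
    have step1 : ∫ x in A, H x = ∫ p : ℝ × ℝ, A.indicator H (e.symm p) := by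
      rw [← integral_indicator hAmeas]
      exact ((hep.symm e).integral_comp e.symm.measurableEmbedding (A.indicator H)).symm
    have step2 : ∫ p : ℝ × ℝ, A.indicator H (e.symm p)
        = ∫ p in polarCoord.target, p.1 • A.indicator H (e.symm (polarCoord.symm p)) :=
      (integral_comp_polarCoord_symm (fun p => A.indicator H (e.symm p))).symm
    set S : Set (ℝ × ℝ) := Icc t₂ t₁ ×ˢ Ioo (-Real.pi) Real.pi with hS
    have hSsub : S ⊆ polarCoord.target := by
      rw [polarCoord_target]
      intro p hp
      exact ⟨lt_of_lt_of_le ht₂ hp.1.1, hp.2⟩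
    have step3 : ∫ p in polarCoord.target, p.1 • A.indicator H (e.symm (polarCoord.symm p))
        = ∫ p in S, p.1 * H (cpt p.1 p.2) := by
      have hcongr : ∀ p ∈ polarCoord.target,
          p.1 • A.indicator H (e.symm (polarCoord.symm p))
            = S.indicator (fun p : ℝ × ℝ => p.1 * H (cpt p.1 p.2)) p := by
        rintro ⟨r, θ⟩ hp
        rw [polarCoord_target] at hp
        obtain ⟨hr, hθ⟩ := hp
        rw [hesymm]
        by_cases hmem : r ∈ Icc t₂ t₁
        · have hin : cpt r θ ∈ A := hmemA hmem.1 hmem.2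
          rw [indicator_of_mem hin, indicator_of_mem (show (r, θ) ∈ S from ⟨hmem, hθ⟩)]
          rfl
        · have hout : cpt r θ ∉ A := by
            intro hmemA'
            have hb := hxA hmemA'
            rw [norm_cpt r θ (le_of_lt hr)] at hb
            exact hmem ⟨hb.1, hb.2⟩
          rw [indicator_of_notMem hout,
            indicator_of_notMem (show (r, θ) ∉ S from fun hc => hmem hc.1)]
          simp
      rw [setIntegral_congr_fun polarCoord.open_target.measurableSet hcongr,
        setIntegral_indicator (measurableSet_Icc.prod measurableSet_Ioo),
        inter_eq_self_of_subset_right hSsub]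
    have hJc : ContinuousOn (fun p : ℝ × ℝ => p.1 * H (cpt p.1 p.2))
        (Icc t₂ t₁ ×ˢ Icc (-Real.pi) Real.pi) := by
      apply ContinuousOn.mul continuousOn_fst
      refine hH_cont.comp continuous_cpt.continuousOn ?_
      intro p hp
      exact hmemA hp.1.1 hp.1.2
    have hJint : IntegrableOn (fun p : ℝ × ℝ => p.1 * H (cpt p.1 p.2)) S :=
      (hJc.integrableOn_compact (isCompact_Icc.prod isCompact_Icc)).mono_set
        (prod_mono subset_rfl Ioo_subset_Icc_self)
    have step4 : ∫ p in S, p.1 * H (cpt p.1 p.2)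
        = ∫ r in Icc t₂ t₁, ∫ θ in Ioo (-Real.pi) Real.pi, r * H (cpt r θ) := by
      rw [hS] at hJint ⊢
      exact setIntegral_prod _ hJint
    have step5 : ∀ r ∈ Icc t₂ t₁, 0 ≤ ∫ θ in Ioo (-Real.pi) Real.pi, r * H (cpt r θ) := by
      intro r hr
      have hr0 : (0:ℝ) < r := lt_of_lt_of_le ht₂ hr.1
      have hgc : Continuous (fun θ => g r θ) := hg_cont hr.1 hr.2
      have hHc : ∀ θ : ℝ, H (cpt r θ) = ‖g r θ‖ ^ 2 - ⟪g r θ, m r⟫ := by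
        intro θ
        have hne : ‖cpt r θ‖ = r := norm_cpt r θ hr0.le
        have hdir : (‖cpt r θ‖⁻¹ • cpt r θ : E2) = cpt 1 θ := by
          rw [hne, cpt_eq_smul r θ, smul_smul, inv_mul_cancel₀ (ne_of_gt hr0), one_smul]
        rw [hH]
        simp only
        rw [show rderiv u (cpt r θ) = g r θ from by rw [rderiv, hdir], hne]
      rw [← integral_Ioc_eq_integral_Ioo,
        ← intervalIntegral.integral_of_le (by linarith : -Real.pi ≤ Real.pi),
        intervalIntegral.integral_const_mul]
      apply mul_nonneg hr0.le
      have hper : Function.Periodic (fun θ => g r θ) (2 * Real.pi) := by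
        intro θ
        simp only [hg]
        rw [cpt_periodic r θ, cpt_periodic 1 θ]
      have hintg : ∫ θ in (-Real.pi)..Real.pi, g r θ = (2 * Real.pi) • m r := by
        rw [hm]
        simp only
        rw [hcl_id hr.1 hr.2, smul_smul,
          mul_inv_cancel₀ (by positivity : (2*Real.pi) ≠ 0), one_smul]
        have hp2 := hper.intervalIntegral_add_eq (-Real.pi) 0
        rw [show -Real.pi + 2*Real.pi = Real.pi by ring, zero_add] at hp2
        exact hp2
      have hkey2 : ∀ θ : ℝ, ‖g r θ‖ ^ 2 - ⟪g r θ, m r⟫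
          = ‖g r θ - m r‖ ^ 2 + (⟪g r θ, m r⟫ - ‖m r‖ ^ 2) := by
        intro θ
        rw [norm_sub_sq_real]
        ring
      have hi1 : IntervalIntegrable (fun θ => ‖g r θ - m r‖ ^ 2)
          volume (-Real.pi) Real.pi :=
        (((hgc.sub continuous_const).norm).pow 2).intervalIntegrable _ _
      have hi2 : IntervalIntegrable (fun θ => ⟪g r θ, m r⟫ - ‖m r‖ ^ 2)
          volume (-Real.pi) Real.pi :=
        ((hgc.inner continuous_const).sub continuous_const).intervalIntegrable _ _
      have hsplit2 : ∫ θ in (-Real.pi)..Real.pi, H (cpt r θ)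
          = (∫ θ in (-Real.pi)..Real.pi, ‖g r θ - m r‖ ^ 2)
            + ∫ θ in (-Real.pi)..Real.pi, (⟪g r θ, m r⟫ - ‖m r‖ ^ 2) := by
        rw [← intervalIntegral.integral_add hi1 hi2]
        apply intervalIntegral.integral_congr
        intro θ _
        dsimp only
        rw [hHc θ, hkey2 θ]
      have hzero : ∫ θ in (-Real.pi)..Real.pi, (⟪g r θ, m r⟫ - ‖m r‖ ^ 2) = 0 := by
        rw [intervalIntegral.integral_sub
          ((hgc.inner continuous_const).intervalIntegrable _ _) intervalIntegrable_const]
        have hlin : ∫ θ in (-Real.pi)..Real.pi, ⟪g r θ, m r⟫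
            = ⟪∫ θ in (-Real.pi)..Real.pi, g r θ, m r⟫ := by
          have hcomm : (fun θ => ⟪g r θ, m r⟫) = fun θ => (innerSL ℝ (m r)) (g r θ) := by
            funext θ
            exact real_inner_comm _ _
          have h2 := (innerSL ℝ (m r)).intervalIntegral_comp_comm (μ := volume)
            (a := -Real.pi) (b := Real.pi) (hgc.intervalIntegrable _ _)
          calc ∫ θ in (-Real.pi)..Real.pi, ⟪g r θ, m r⟫
              = ∫ θ in (-Real.pi)..Real.pi, (innerSL ℝ (m r)) (g r θ) := by rw [hcomm]
            _ = (innerSL ℝ (m r)) (∫ θ in (-Real.pi)..Real.pi, g r θ) := h2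
            _ = ⟪∫ θ in (-Real.pi)..Real.pi, g r θ, m r⟫ := by
                rw [innerSL_apply_apply]; exact real_inner_comm _ _
        rw [hlin, hintg, intervalIntegral.integral_const, real_inner_smul_left]
        simp only [real_inner_self_eq_norm_sq, smul_eq_mul]
        ring
      rw [hsplit2, hzero, add_zero]
      apply intervalIntegral.integral_nonneg (by linarith)
      intro θ _
      positivity
    rw [step1, step2, step3, step4]
    exact setIntegral_nonneg measurableSet_Icc step5
  -- final assembly
  have hae : ∀ᵐ x ∂volume, x ∈ A →
      gradInner u (fun y => u y - ustar u y) x = grad2 u x - ⟪rderiv u x, m ‖x‖⟫ := by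
    have hz : volume (sphere (0:E2) t₂ ∪ sphere 0 t₁) = 0 :=
      measure_union_null (Measure.addHaar_sphere _ _ _) (Measure.addHaar_sphere _ _ _)
    have h0 : ∀ᵐ x ∂(volume : Measure E2), x ∉ (sphere (0:E2) t₂ ∪ sphere 0 t₁) :=
      (measure_eq_zero_iff_ae_notMem).mp hz
    filter_upwards [h0] with x hx hxA2
    have hb := hxA hxA2
    have hns : ‖x‖ ≠ t₂ ∧ ‖x‖ ≠ t₁ := by
      constructor
      · intro h; exact hx (Or.inl (by simp [mem_sphere, dist_zero_right, h]))
      · intro h; exact hx (Or.inr (by simp [mem_sphere, dist_zero_right, h]))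
    exact hptwise x (lt_of_le_of_ne hb.1 (Ne.symm hns.1)) (lt_of_le_of_ne hb.2 hns.2)
  rw [show (∫ x in A, gradInner u (fun y => u y - ustar u y) x)
      = ∫ x in A, (grad2 u x - ⟪rderiv u x, m ‖x‖⟫) from
    setIntegral_congr_ae hAmeas hae]
  have hint2 : IntegrableOn (fun x => grad2 u x - ‖rderiv u x‖ ^ 2) A :=
    (hgrad2_cont.sub ((hrd_cont.norm).pow 2)).integrableOn_compact hAcomp
  have hintH : IntegrableOn (fun x => ‖rderiv u x‖ ^ 2 - ⟪rderiv u x, m ‖x‖⟫) A :=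
    hH_cont.integrableOn_compact hAcomp
  have hsplit : (∫ x in A, (grad2 u x - ⟪rderiv u x, m ‖x‖⟫))
      = (∫ x in A, (grad2 u x - ‖rderiv u x‖ ^ 2))
        + ∫ x in A, (‖rderiv u x‖ ^ 2 - ⟪rderiv u x, m ‖x‖⟫) := by
    rw [← integral_add hint2 hintH]
    congr 1
    funext x
    ring
  rw [hsplit]
  exact le_add_of_nonneg_right hkey
end
end

section
/- (Boundary term estimate via Wirtinger's inequality.) Let t > 0 and let u : ℝ² → ℝ^K be C¹ on a neighborhood of the circle ∂B_t = {x : |x| = t}. Let u*(t) = (1/2π)∫₀^{2π} u(t cos θ, t sin θ) dθ be the angular mean of u on this circle. Then |∫_{∂B_t} ⟨∂u/∂r, u − u*(t)⟩ dS| ≤ (t/2) ∫_{∂B_t} |∇u|² dS. -/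
set_option maxHeartbeats 1000000


open MeasureTheory Metric Set
open scoped RealInnerProductSpace
open scoped Real
open intervalIntegral

noncomputable section

lemma memLp_liftIoc {T : ℝ} [hT : Fact (0 < T)] (a : ℝ) {f : ℝ → ℂ} (hf : Continuous f) :
    MemLp (AddCircle.liftIoc T a f) 2 AddCircle.haarAddCircle := by
  obtain ⟨C, hC⟩ :=
    (isCompact_Icc (a := a) (b := a + T)).exists_bound_of_continuousOn hf.continuousOn
  have hmeas : Measurable (AddCircle.liftIoc T a f) := by
    have h : AddCircle.liftIoc T a f = (f ∘ Subtype.val) ∘ (AddCircle.measurableEquivIoc T a) :=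
      rfl
    rw [h]
    exact (hf.measurable.comp measurable_subtype_coe).comp
      (AddCircle.measurableEquivIoc T a).measurable
  refine MemLp.of_bound hmeas.aestronglyMeasurable C (Filter.Eventually.of_forall fun z => ?_)
  have h : AddCircle.liftIoc T a f z = f ((AddCircle.equivIoc T a z : ℝ)) := rfl
  rw [h]
  exact hC _ (Set.Ioc_subset_Icc_self (AddCircle.equivIoc T a z).2)

lemma parseval_interval {T : ℝ} [hT : Fact (0 < T)] {f : ℝ → ℂ} (hf : Continuous f) :
    Summable (fun n : ℤ => ‖fourierCoeffOn (lt_add_of_pos_right 0 hT.out) f n‖ ^ 2) ∧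
    T * ∑' n : ℤ, ‖fourierCoeffOn (lt_add_of_pos_right (0:ℝ) hT.out) f n‖ ^ 2
      = ∫ x in (0:ℝ)..0 + T, ‖f x‖ ^ 2 := by
  set F := AddCircle.liftIoc T 0 f with hF
  have hmem : MemLp F 2 AddCircle.haarAddCircle := memLp_liftIoc 0 hf
  set G : Lp ℂ 2 (AddCircle.haarAddCircle) := hmem.toLp F with hG
  have hGF : (G : AddCircle T → ℂ) =ᵐ[AddCircle.haarAddCircle] F := hmem.coeFn_toLp
  have hcoeff : ∀ n : ℤ, fourierCoeff (G : AddCircle T → ℂ) n = fourierCoeff F n := by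
    intro n
    simp only [fourierCoeff]
    exact integral_congr_ae (hGF.mono fun x hx => by dsimp only; rw [hx])
  have hcoeff' : ∀ n : ℤ,
      fourierCoeff (G : AddCircle T → ℂ) n = fourierCoeffOn (lt_add_of_pos_right 0 hT.out) f n := by
    intro n; rw [hcoeff n, hF, fourierCoeff_liftIoc_eq]
  have hnorm : ∫ t, ‖(G : AddCircle T → ℂ) t‖ ^ 2 ∂AddCircle.haarAddCircle
      = ∫ t, ‖F t‖ ^ 2 ∂AddCircle.haarAddCircle :=
    integral_congr_ae (hGF.mono fun x hx => by dsimp only; rw [hx])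
  have hpars := tsum_sq_fourierCoeff G
  -- summability
  have hsum0 := (lp.memℓp (fourierBasis.repr G)).summable (p := 2) (by norm_num)
  have hsum : Summable (fun n : ℤ => ‖fourierCoeffOn (lt_add_of_pos_right 0 hT.out) f n‖ ^ 2) := by
    refine hsum0.congr fun n => ?_
    rw [fourierBasis_repr, hcoeff' n]
    norm_num
  refine ⟨hsum, ?_⟩
  -- interval integral of ‖f‖² equals haar integral of ‖F‖² times T
  have hIoc : ∫ x in (0:ℝ)..0 + T, ‖f x‖ ^ 2 = ∫ x in (0:ℝ)..0 + T, ‖F ((x : ℝ) : AddCircle T)‖ ^ 2 := by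
    rw [integral_of_le (by linarith [hT.out]), integral_of_le (by linarith [hT.out])]
    refine setIntegral_congr_fun measurableSet_Ioc fun x hx => ?_
    rw [hF, AddCircle.liftIoc_coe_apply hx]
  have hvol : ∫ x in (0:ℝ)..0 + T, ‖F ((x : ℝ) : AddCircle T)‖ ^ 2
      = ∫ z : AddCircle T, ‖F z‖ ^ 2 := by
    simpa using AddCircle.intervalIntegral_preimage T 0 (fun z => ‖F z‖ ^ 2)
  have hhaar : ∫ z : AddCircle T, ‖F z‖ ^ 2
      = T * ∫ z : AddCircle T, ‖F z‖ ^ 2 ∂AddCircle.haarAddCircle := by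
    rw [AddCircle.volume_eq_smul_haarAddCircle, MeasureTheory.integral_smul_measure,
      ENNReal.toReal_ofReal hT.out.le, smul_eq_mul]
  rw [hIoc, hvol, hhaar, ← hnorm, ← hpars]
  congr 1
  exact tsum_congr fun n => by rw [hcoeff' n]

lemma wirtingerC {f f' : ℝ → ℂ} (hd : ∀ x, HasDerivAt f (f' x) x)
    (hc : Continuous f') (hper : f (2 * π) = f 0)
    (hmean : ∫ x in (0:ℝ)..2 * π, f x = 0) :
    ∫ x in (0:ℝ)..2 * π, ‖f x‖ ^ 2 ≤ ∫ x in (0:ℝ)..2 * π, ‖f' x‖ ^ 2 := by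
  haveI hT : Fact (0 < 2 * π) := ⟨by positivity⟩
  have hfc : Continuous f := by
    refine continuous_iff_continuousAt.mpr fun x => (hd x).continuousAt
  obtain ⟨hs1, he1⟩ := parseval_interval (T := 2 * π) hfc
  obtain ⟨hs2, he2⟩ := parseval_interval (T := 2 * π) hc
  set hab := lt_add_of_pos_right (0:ℝ) hT.out with hhab
  have key : ∀ n : ℤ, ‖fourierCoeffOn hab f n‖ ^ 2 ≤ ‖fourierCoeffOn hab f' n‖ ^ 2 := by
    intro n
    rcases eq_or_ne n 0 with rfl | hn
    · have h0 : fourierCoeffOn hab f 0 = 0 := by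
        rw [fourierCoeffOn_eq_integral]
        simp only [neg_zero, fourier_zero, one_smul, zero_add, sub_zero]
        rw [hmean, smul_zero]
      rw [h0]
      simpa using sq_nonneg ‖fourierCoeffOn hab f' 0‖
    · have hfd := fourierCoeffOn_of_hasDerivAt hab hn (fun x _ => hd x)
        (hc.intervalIntegrable _ _)
      have hper' : f (0 + 2 * π) = f 0 := by rw [zero_add]; exact hper
      rw [hper', sub_self, mul_zero, zero_sub] at hfd
      have hle : ‖fourierCoeffOn hab f n‖ ≤ ‖fourierCoeffOn hab f' n‖ := by
        rw [hfd, norm_mul, norm_neg, norm_mul]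
        have h1 : ‖(1:ℂ) / (-2 * ↑π * Complex.I * ↑n)‖ = 1 / (2 * π * |(n:ℝ)|) := by
          simp [norm_div, norm_mul, abs_of_pos Real.pi_pos]
        have h2 : ‖((0 + 2 * π : ℝ) : ℂ) - ((0:ℝ) : ℂ)‖ = 2 * π := by
          have h2a : ((0 + 2 * π : ℝ) : ℂ) - ((0:ℝ) : ℂ) = ((2 * π : ℝ) : ℂ) := by push_cast; ring
          rw [h2a, Complex.norm_real, Real.norm_eq_abs, abs_of_pos (by positivity)]
        rw [h1, h2]
        have hn1 : (1:ℝ) ≤ |(n:ℝ)| := by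
          rw [← Int.cast_abs]
          exact_mod_cast Int.one_le_abs hn
        have hπ := Real.pi_pos
        rw [div_mul_eq_mul_div, one_mul, mul_comm (2 * π) _, mul_div_assoc]
        have : (2 * π) / (2 * π * |(n:ℝ)|) ≤ 1 := by
          rw [div_le_one (by positivity)]
          nlinarith
        nlinarith [norm_nonneg (fourierCoeffOn hab f' n)]
      exact pow_le_pow_left₀ (norm_nonneg _) hle 2
  have h1 : ∫ x in (0:ℝ)..0 + 2 * π, ‖f x‖ ^ 2 ≤ ∫ x in (0:ℝ)..0 + 2 * π, ‖f' x‖ ^ 2 := by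
    rw [← he1, ← he2]
    exact mul_le_mul_of_nonneg_left (Summable.tsum_le_tsum key hs1 hs2) (by positivity)
  rwa [zero_add] at h1


lemma normsq_eq {K : ℕ} (v : EuclideanSpace ℝ (Fin K)) : ‖v‖ ^ 2 = ∑ i, ‖v i‖ ^ 2 := by
  rw [EuclideanSpace.norm_eq, Real.sq_sqrt (by positivity)]

lemma wirtingerE {K : ℕ} {f f' : ℝ → EuclideanSpace ℝ (Fin K)}
    (hd : ∀ x, HasDerivAt f (f' x) x) (hc : Continuous f')
    (hper : f (2 * π) = f 0) (hmean : ∫ x in (0:ℝ)..2 * π, f x = 0) :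
    ∫ x in (0:ℝ)..2 * π, ‖f x‖ ^ 2 ≤ ∫ x in (0:ℝ)..2 * π, ‖f' x‖ ^ 2 := by
  have hfc : Continuous f := continuous_iff_continuousAt.mpr fun x => (hd x).continuousAt
  have hcomp : ∀ (g : ℝ → EuclideanSpace ℝ (Fin K)), Continuous g → ∀ i : Fin K,
      Continuous (fun x => g x i) := fun g hg i => (EuclideanSpace.proj (𝕜 := ℝ) i).continuous.comp hg
  have hsplit : ∀ (g : ℝ → EuclideanSpace ℝ (Fin K)), Continuous g →
      ∫ x in (0:ℝ)..2*π, ‖g x‖^2 = ∑ i, ∫ x in (0:ℝ)..2*π, ‖g x i‖^2 := by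
    intro g hg
    rw [← intervalIntegral.integral_finset_sum (fun i _ =>
      ((show Continuous fun x => ‖g x i‖ ^ 2 from (hcomp g hg i).norm.pow 2).intervalIntegrable _ _))]
    simp_rw [normsq_eq]
  rw [hsplit f hfc, hsplit f' hc]
  refine Finset.sum_le_sum fun i _ => ?_
  have hdi : ∀ x, HasDerivAt (fun x => ((f x i : ℝ) : ℂ)) ((f' x i : ℝ) : ℂ) x := by
    intro x
    have h1 : HasDerivAt (fun x => f x i) (f' x i) x := by
      have := ((EuclideanSpace.proj (𝕜 := ℝ) i).hasFDerivAt).comp_hasDerivAt x (hd x)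
      exact this
    exact h1.ofReal_comp
  have hci : Continuous (fun x => ((f' x i : ℝ) : ℂ)) :=
    Complex.continuous_ofReal.comp (hcomp f' hc i)
  have hperi : ((f (2*π) i : ℝ) : ℂ) = ((f 0 i : ℝ) : ℂ) := by rw [hper]
  have hmeani : ∫ x in (0:ℝ)..2*π, ((f x i : ℝ) : ℂ) = 0 := by
    rw [intervalIntegral.integral_ofReal]
    have : ∫ x in (0:ℝ)..2*π, f x i = (EuclideanSpace.proj (𝕜 := ℝ) i) (∫ x in (0:ℝ)..2*π, f x) := by
      rw [← ContinuousLinearMap.intervalIntegral_comp_comm _ (hfc.intervalIntegrable _ _)]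
      simp
    rw [this, hmean]
    simp
  have := wirtingerC hdi hci hperi hmeani
  simpa using this


lemma cpt_norm {t : ℝ} (ht : 0 ≤ t) (θ : ℝ) : ‖cpt t θ‖ = t := by
  rw [EuclideanSpace.norm_eq]
  have h : ∑ i : Fin 2, ‖cpt t θ i‖ ^ 2 = t ^ 2 := by
    simp only [cpt, Fin.sum_univ_two, WithLp.equiv_symm_apply, PiLp.toLp_apply, Matrix.cons_val_zero,
      Matrix.cons_val_one, Matrix.head_cons, Real.norm_eq_abs, sq_abs]
    nlinarith [Real.sin_sq_add_cos_sq θ]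
  rw [h, Real.sqrt_sq ht]

lemma cpt_smul (r s θ : ℝ) : cpt (r * s) θ = r • cpt s θ := by
  rw [cpt, cpt]
  show WithLp.toLp 2 ![r * s * Real.cos θ, r * s * Real.sin θ]
    = r • WithLp.toLp 2 ![s * Real.cos θ, s * Real.sin θ]
  rw [← WithLp.toLp_smul]
  congr 1
  funext i
  fin_cases i <;> simp [mul_assoc]

lemma cpt_cont (t : ℝ) : Continuous (fun θ : ℝ => cpt t θ) := by
  have h : Continuous (fun θ : ℝ => (![t * Real.cos θ, t * Real.sin θ] : Fin 2 → ℝ)) := by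
    refine continuous_pi fun i => ?_
    fin_cases i <;> simp <;> fun_prop
  exact ((PiLp.continuousLinearEquiv 2 ℝ (fun _ : Fin 2 => ℝ)).symm.continuous).comp h

lemma hasDerivAt_cpt (t θ : ℝ) : HasDerivAt (fun θ => cpt t θ) (cpt t (θ + π / 2)) θ := by
  have h0 : HasDerivAt (fun θ => t * Real.cos θ) (t * Real.cos (θ + π / 2)) θ := by
    rw [Real.cos_add_pi_div_two]
    simpa [mul_comm, mul_assoc] using (Real.hasDerivAt_cos θ).const_mul t
  have h1 : HasDerivAt (fun θ => t * Real.sin θ) (t * Real.sin (θ + π / 2)) θ := by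
    rw [Real.sin_add_pi_div_two]
    simpa using (Real.hasDerivAt_sin θ).const_mul t
  have hp : HasDerivAt (fun θ : ℝ => (![t * Real.cos θ, t * Real.sin θ] : Fin 2 → ℝ))
      ![t * Real.cos (θ + π / 2), t * Real.sin (θ + π / 2)] θ := by
    rw [hasDerivAt_pi]
    intro i
    fin_cases i
    · simpa using h0
    · simpa using h1
  exact ((PiLp.continuousLinearEquiv 2 ℝ (fun _ : Fin 2 => ℝ)).symm.hasFDerivAt.comp_hasDerivAt
    θ hp)

lemma cpt_one (θ : ℝ) : cpt 1 θ =
    Real.cos θ • EuclideanSpace.single (0 : Fin 2) (1:ℝ)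
      + Real.sin θ • EuclideanSpace.single (1 : Fin 2) (1:ℝ) := by
  ext i
  fin_cases i <;>
    simp [cpt, WithLp.equiv_symm_apply, PiLp.toLp_apply, EuclideanSpace.single_apply]

lemma cpt_per (t : ℝ) : cpt t (2 * π) = cpt t 0 := by
  rw [cpt, cpt]
  norm_num [Real.cos_two_pi, Real.sin_two_pi]

/-- Boundary term estimate via Wirtinger's inequality:
`|∫_{∂B_t} ⟨∂u/∂r, u − u*(t)⟩ dS| ≤ (t/2) ∫_{∂B_t} |∇u|² dS`. -/
theorem statement9 {K : ℕ} (t : ℝ) (ht : 0 < t) (u : E2 → EK K)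
    (hu : ∃ U : Set E2, IsOpen U ∧ sphere (0 : E2) t ⊆ U ∧ ContDiffOn ℝ 1 u U) :
    |∫ θ in (0:ℝ)..(2 * Real.pi),
        ⟪rderiv u (cpt t θ),
          u (cpt t θ) - (2 * Real.pi)⁻¹ • ∫ φ in (0:ℝ)..(2 * Real.pi), u (cpt t φ)⟫ * t| ≤
      (t / 2) * ∫ θ in (0:ℝ)..(2 * Real.pi), grad2 u (cpt t θ) * t := by
  obtain ⟨U, hUo, hUs, hCD⟩ := hu
  have hmemU : ∀ θ : ℝ, cpt t θ ∈ U := fun θ => hUs (by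
    simp only [mem_sphere, dist_zero_right]
    exact cpt_norm ht.le θ)
  have hdiff : ∀ θ : ℝ, DifferentiableAt ℝ u (cpt t θ) := fun θ =>
    (hCD.differentiableOn one_ne_zero).differentiableAt (hUo.mem_nhds (hmemU θ))
  set A : ℝ → E2 →L[ℝ] EK K := fun θ => fderiv ℝ u (cpt t θ) with hA
  -- continuity facts
  have hAc : Continuous A := by
    rw [hA]
    exact (hCD.continuousOn_fderiv_of_isOpen hUo le_rfl).comp_continuous (cpt_cont t) hmemU
  have hrc : Continuous (fun θ => A θ (cpt 1 θ)) := hAc.clm_apply (cpt_cont 1)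
  have hshift : Continuous (fun θ : ℝ => cpt t (θ + π / 2)) :=
    (cpt_cont t).comp (continuous_id.add continuous_const)
  have htc : Continuous (fun θ => A θ (cpt t (θ + π / 2))) := hAc.clm_apply hshift
  have hucont : Continuous (fun θ : ℝ => u (cpt t θ)) :=
    hCD.continuousOn.comp_continuous (cpt_cont t) hmemU
  set uav : EK K := (2 * Real.pi)⁻¹ • ∫ φ in (0:ℝ)..(2 * Real.pi), u (cpt t φ) with huav
  have hgc : Continuous (fun θ : ℝ => u (cpt t θ) - uav) := hucont.sub continuous_const
  -- derivative of θ ↦ u (cpt t θ) - uav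
  have hder : ∀ θ : ℝ, HasDerivAt (fun θ : ℝ => u (cpt t θ) - uav)
      (A θ (cpt t (θ + π / 2))) θ := by
    intro θ
    have h1 : HasDerivAt (fun θ : ℝ => u (cpt t θ)) (A θ (cpt t (θ + π / 2))) θ :=
      (hdiff θ).hasFDerivAt.comp_hasDerivAt θ (hasDerivAt_cpt t θ)
    exact h1.sub_const uav
  -- periodicity and mean-zero
  have hper : u (cpt t (2 * π)) - uav = u (cpt t 0) - uav := by rw [cpt_per]
  have hmean : ∫ θ in (0:ℝ)..2 * π, (u (cpt t θ) - uav) = 0 := by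
    rw [intervalIntegral.integral_sub (hucont.intervalIntegrable _ _)
      intervalIntegrable_const, intervalIntegral.integral_const, huav, smul_smul, sub_zero,
      mul_inv_cancel₀ (by positivity : (2 * Real.pi) ≠ 0), one_smul, sub_self]
  -- Wirtinger
  have W := wirtingerE hder htc hper hmean
  -- key pointwise identities
  have hrd : ∀ θ : ℝ, rderiv u (cpt t θ) = A θ (cpt 1 θ) := by
    intro θ
    rw [rderiv, cpt_norm ht.le, hA]
    congr 1
    rw [← cpt_smul, inv_mul_cancel₀ ht.ne']
  have htangent : ∀ θ : ℝ, ‖A θ (cpt t (θ + π / 2))‖ ^ 2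
      = t ^ 2 * ‖A θ (cpt 1 (θ + π / 2))‖ ^ 2 := by
    intro θ
    have h : cpt t (θ + π / 2) = t • cpt 1 (θ + π / 2) := by rw [← cpt_smul, mul_one]
    rw [h, _root_.map_smul, norm_smul, Real.norm_eq_abs, abs_of_pos ht, mul_pow]
  have hgrad : ∀ θ : ℝ, grad2 u (cpt t θ)
      = ‖A θ (cpt 1 θ)‖ ^ 2 + ‖A θ (cpt 1 (θ + π / 2))‖ ^ 2 := by
    intro θ
    have expand : ∀ (c s : ℝ) (a b : EK K),
        ‖c • a + s • b‖ ^ 2 = c^2 * ‖a‖^2 + 2*(c*s)*⟪a, b⟫ + s^2 * ‖b‖^2 := by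
      intro c s a b
      rw [norm_add_sq_real, real_inner_smul_left, real_inner_smul_right, norm_smul, norm_smul]
      simp only [Real.norm_eq_abs, mul_pow, sq_abs]
      ring
    have e1 : cpt 1 θ
        = Real.cos θ • EuclideanSpace.single (0:Fin 2) (1:ℝ)
          + Real.sin θ • EuclideanSpace.single (1:Fin 2) (1:ℝ) := cpt_one θ
    have e2 : cpt 1 (θ + π / 2)
        = (-Real.sin θ) • EuclideanSpace.single (0:Fin 2) (1:ℝ)
          + Real.cos θ • EuclideanSpace.single (1:Fin 2) (1:ℝ) := by
      rw [cpt_one, Real.cos_add_pi_div_two, Real.sin_add_pi_div_two]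
    rw [grad2, Fin.sum_univ_two]
    show ‖A θ (EuclideanSpace.single 0 1)‖ ^ 2 + ‖A θ (EuclideanSpace.single 1 1)‖ ^ 2 = _
    rw [e1, e2, map_add, map_add, _root_.map_smul, _root_.map_smul, _root_.map_smul,
      _root_.map_smul, expand, expand]
    nlinarith [Real.sin_sq_add_cos_sq θ]
  -- abbreviations for the three integrals
  set I1 : ℝ := ∫ θ in (0:ℝ)..2 * π, ‖A θ (cpt 1 θ)‖ ^ 2 with hI1
  set I2 : ℝ := ∫ θ in (0:ℝ)..2 * π, ‖A θ (cpt 1 (θ + π / 2))‖ ^ 2 with hI2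
  set IG : ℝ := ∫ θ in (0:ℝ)..2 * π, ‖u (cpt t θ) - uav‖ ^ 2 with hIG
  have hc1 : Continuous (fun θ => ‖A θ (cpt 1 θ)‖ ^ 2) := (hrc.norm).pow 2
  have hc2 : Continuous (fun θ => ‖A θ (cpt 1 (θ + π / 2))‖ ^ 2) :=
    ((hAc.clm_apply ((cpt_cont 1).comp (continuous_id.add continuous_const))).norm).pow 2
  have hcG : Continuous (fun θ : ℝ => ‖u (cpt t θ) - uav‖ ^ 2) := (hgc.norm).pow 2
  -- W rewritten : IG ≤ t^2 * I2
  have W2 : IG ≤ t ^ 2 * I2 := by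
    calc IG ≤ ∫ θ in (0:ℝ)..2 * π, ‖A θ (cpt t (θ + π / 2))‖ ^ 2 := W
    _ = ∫ θ in (0:ℝ)..2 * π, t ^ 2 * ‖A θ (cpt 1 (θ + π / 2))‖ ^ 2 := by
        apply intervalIntegral.integral_congr
        intro θ _
        exact htangent θ
    _ = t ^ 2 * I2 := intervalIntegral.integral_const_mul _ _
  -- bound on LHS
  have step1 : |∫ θ in (0:ℝ)..(2 * Real.pi), ⟪rderiv u (cpt t θ), u (cpt t θ) - uav⟫ * t|
      ≤ ∫ θ in (0:ℝ)..(2 * Real.pi), |⟪A θ (cpt 1 θ), u (cpt t θ) - uav⟫ * t| := by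
    have heq : ∀ θ : ℝ, ⟪rderiv u (cpt t θ), u (cpt t θ) - uav⟫ * t
        = ⟪A θ (cpt 1 θ), u (cpt t θ) - uav⟫ * t := by
      intro θ; rw [hrd θ]
    rw [intervalIntegral.integral_congr (fun θ _ => heq θ)]
    exact intervalIntegral.abs_integral_le_integral_abs (by positivity)
  have hcInner : Continuous (fun θ : ℝ => ⟪A θ (cpt 1 θ), u (cpt t θ) - uav⟫ * t) :=
    (hrc.inner hgc).mul continuous_const
  have step2 : ∫ θ in (0:ℝ)..(2 * Real.pi), |⟪A θ (cpt 1 θ), u (cpt t θ) - uav⟫ * t|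
      ≤ ∫ θ in (0:ℝ)..(2 * Real.pi),
          (t ^ 2 / 2 * ‖A θ (cpt 1 θ)‖ ^ 2 + 1 / 2 * ‖u (cpt t θ) - uav‖ ^ 2) := by
    refine intervalIntegral.integral_mono_on (by positivity) (hcInner.abs.intervalIntegrable _ _)
      (((continuous_const.mul hc1).add (continuous_const.mul hcG)).intervalIntegrable _ _) fun θ _ => ?_
    have hCS := abs_real_inner_le_norm (A θ (cpt 1 θ)) (u (cpt t θ) - uav)
    rw [abs_mul, abs_of_pos ht]
    nlinarith [sq_nonneg (t * ‖A θ (cpt 1 θ)‖ - ‖u (cpt t θ) - uav‖), norm_nonneg (A θ (cpt 1 θ)),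
      norm_nonneg (u (cpt t θ) - uav), abs_nonneg (⟪A θ (cpt 1 θ), u (cpt t θ) - uav⟫)]
  have step3 : ∫ θ in (0:ℝ)..(2 * Real.pi),
      (t ^ 2 / 2 * ‖A θ (cpt 1 θ)‖ ^ 2 + 1 / 2 * ‖u (cpt t θ) - uav‖ ^ 2)
      = t ^ 2 / 2 * I1 + 1 / 2 * IG := by
    rw [intervalIntegral.integral_add ((show Continuous fun θ => t ^ 2 / 2 * ‖A θ (cpt 1 θ)‖ ^ 2
        from continuous_const.mul hc1).intervalIntegrable _ _)
      ((show Continuous fun θ => 1 / 2 * ‖u (cpt t θ) - uav‖ ^ 2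
        from continuous_const.mul hcG).intervalIntegrable _ _), intervalIntegral.integral_const_mul,
      intervalIntegral.integral_const_mul]
  -- RHS computation
  have hRHS : ∫ θ in (0:ℝ)..(2 * Real.pi), grad2 u (cpt t θ) * t = (I1 + I2) * t := by
    rw [intervalIntegral.integral_mul_const]
    congr 1
    rw [intervalIntegral.integral_congr (fun θ _ => hgrad θ),
      intervalIntegral.integral_add (hc1.intervalIntegrable _ _) (hc2.intervalIntegrable _ _)]
  rw [hRHS]
  have hI1nn : 0 ≤ I1 := by
    rw [hI1]
    apply intervalIntegral.integral_nonneg (by positivity)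
    intro θ _; positivity
  calc |∫ θ in (0:ℝ)..(2 * Real.pi), ⟪rderiv u (cpt t θ), u (cpt t θ) - uav⟫ * t|
      ≤ ∫ θ in (0:ℝ)..(2 * Real.pi), |⟪A θ (cpt 1 θ), u (cpt t θ) - uav⟫ * t| := step1
    _ ≤ t ^ 2 / 2 * I1 + 1 / 2 * IG := by rw [← step3]; exact step2
    _ ≤ t ^ 2 / 2 * I1 + 1 / 2 * (t ^ 2 * I2) := by linarith
    _ = t / 2 * ((I1 + I2) * t) := by ring
end
end

section
/- (Differential inequality lemma.) Let f : (0,1] → ℝ be nonnegative and differentiable, and let λ > 0, a > 0 with λ + a < 1 and C ≥ 0. Suppose that λ f(t) ≤ t f'(t) + C t^{1−a} for all t ∈ (0,1]. Then f(t) ≤ (f(1) + C/(1 − λ − a)) t^λ for all t ∈ (0,1]. -/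
open Set

/-- Differential inequality lemma: if `f : (0,1] → ℝ` is nonnegative and differentiable,
`λ, a > 0` with `λ + a < 1`, `C ≥ 0`, and `λ f(t) ≤ t f'(t) + C t^{1−a}` on `(0,1]`,
then `f(t) ≤ (f(1) + C/(1 − λ − a)) t^λ` on `(0,1]`. -/
theorem statement10 (f : ℝ → ℝ) (lam a C : ℝ) (hlam : 0 < lam) (ha : 0 < a)
    (hla : lam + a < 1) (hC : 0 ≤ C)
    (hnonneg : ∀ t ∈ Ioc (0:ℝ) 1, 0 ≤ f t)
    (hdiff : ∀ t ∈ Ioc (0:ℝ) 1, DifferentiableAt ℝ f t)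
    (hineq : ∀ t ∈ Ioc (0:ℝ) 1, lam * f t ≤ t * deriv f t + C * t ^ (1 - a)) :
    ∀ t ∈ Ioc (0:ℝ) 1, f t ≤ (f 1 + C / (1 - lam - a)) * t ^ lam := by
  have hpos : (0:ℝ) < 1 - lam - a := by linarith
  set K : ℝ := C / (1 - lam - a) with hK
  have hKnn : 0 ≤ K := div_nonneg hC hpos.le
  set g : ℝ → ℝ := fun x => x ^ (-lam) * f x + K * x ^ (1 - lam - a) with hg
  -- derivative of g at points of (0,1]
  have hgderiv : ∀ s ∈ Ioc (0:ℝ) 1, HasDerivAt g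
      ((-lam * s ^ (-lam - 1)) * f s + s ^ (-lam) * deriv f s
        + K * ((1 - lam - a) * s ^ (1 - lam - a - 1))) s := by
    intro s hs
    have hs0 : (0:ℝ) < s := hs.1
    have h1 : HasDerivAt (fun x : ℝ => x ^ (-lam)) (-lam * s ^ (-lam - 1)) s := by
      simpa using Real.hasDerivAt_rpow_const (p := -lam) (Or.inl hs0.ne')
    have h2 : HasDerivAt f (deriv f s) s := (hdiff s hs).hasDerivAt
    have h3 : HasDerivAt (fun x : ℝ => x ^ (1 - lam - a))
        ((1 - lam - a) * s ^ (1 - lam - a - 1)) s := by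
      simpa using Real.hasDerivAt_rpow_const (p := 1 - lam - a) (Or.inl hs0.ne')
    have := (h1.mul h2).add ((h3.const_mul K))
    exact this
  -- g is monotone on [t,1] for each t in (0,1]
  intro t ht
  have ht0 : (0:ℝ) < t := ht.1
  have ht1 : t ≤ 1 := ht.2
  have hsub : Icc t 1 ⊆ Ioc (0:ℝ) 1 := fun x hx => ⟨lt_of_lt_of_le ht0 hx.1, hx.2⟩
  have hmono : MonotoneOn g (Icc t 1) := by
    apply monotoneOn_of_deriv_nonneg (convex_Icc t 1)
    · exact fun x hx => ((hgderiv x (hsub hx)).continuousAt.continuousWithinAt)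
    · intro x hx
      rw [interior_Icc] at hx
      exact (hgderiv x (hsub ⟨hx.1.le, hx.2.le⟩)).differentiableAt.differentiableWithinAt
    · intro x hx
      rw [interior_Icc] at hx
      have hxm : x ∈ Ioc (0:ℝ) 1 := hsub ⟨hx.1.le, hx.2.le⟩
      have hx0 : (0:ℝ) < x := hxm.1
      rw [(hgderiv x hxm).deriv]
      -- key inequality
      have hI := hineq x hxm
      have hpow : (0:ℝ) ≤ x ^ (-lam - 1) := (Real.rpow_pos_of_pos hx0 _).le
      have h := mul_le_mul_of_nonneg_left hI hpow
      have e1 : x ^ (-lam - 1) * x = x ^ (-lam) := by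
        rw [← Real.rpow_add_one hx0.ne']
        congr 1
        ring
      have e2 : x ^ (-lam - 1) * x ^ (1 - a) = x ^ (1 - lam - a - 1) := by
        rw [← Real.rpow_add hx0]; ring_nf
      have e3 : K * ((1 - lam - a) * x ^ (1 - lam - a - 1)) = C * x ^ (1 - lam - a - 1) := by
        rw [hK]; field_simp
      rw [e3]
      have h' : x ^ (-lam - 1) * (lam * f x)
          ≤ x ^ (-lam) * deriv f x + C * x ^ (1 - lam - a - 1) := by
        calc x ^ (-lam - 1) * (lam * f x)
            ≤ x ^ (-lam - 1) * (x * deriv f x + C * x ^ (1 - a)) := h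
          _ = (x ^ (-lam - 1) * x) * deriv f x + C * (x ^ (-lam - 1) * x ^ (1 - a)) := by ring
          _ = x ^ (-lam) * deriv f x + C * x ^ (1 - lam - a - 1) := by rw [e1, e2]
      linarith [h']
  have hgt : g t ≤ g 1 := hmono ⟨le_refl t, ht1⟩ ⟨ht1, le_refl 1⟩ ht1
  have hg1 : g 1 = f 1 + K := by simp [hg]
  -- conclude
  have htlam : (0:ℝ) < t ^ lam := Real.rpow_pos_of_pos ht0 _
  have hinv : t ^ (-lam) * t ^ lam = 1 := by
    rw [← Real.rpow_add ht0]; simp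
  have h2 : t ^ (-lam) * f t ≤ f 1 + K := by
    have hnn : 0 ≤ K * t ^ (1 - lam - a) :=
      mul_nonneg hKnn (Real.rpow_pos_of_pos ht0 _).le
    have : t ^ (-lam) * f t ≤ g t := by simp only [hg]; linarith
    linarith [hg1 ▸ hgt]
  calc f t = (t ^ (-lam) * f t) * t ^ lam := by
        rw [mul_comm (t ^ (-lam)) (f t), mul_assoc, hinv, mul_one]
    _ ≤ (f 1 + K) * t ^ lam := mul_le_mul_of_nonneg_right h2 htlam.le
end

section
/- (Neck differential inequality lemma.) Let L ≥ 1, let f : [1, L] → ℝ be differentiable, and let δ > β > 0 and K₀ ≥ 0. Suppose δ f(t) ≤ f'(t)/log 2 + K₀ · 2^{βt} for all t ∈ [1, L]. Then f(1) ≤ f(L) · 2^{−δ(L−1)} + (2^β/(δ − β)) K₀. -/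
open Set

lemma aux_exp_deriv (a t : ℝ) :
    HasDerivAt (fun s => Real.exp (a * s)) (Real.exp (a * t) * a) t := by
  have h : HasDerivAt (fun s : ℝ => a * s) a t := by
    simpa using (hasDerivAt_id t).const_mul a
  exact (Real.hasDerivAt_exp (a * t)).comp t h

/-- Neck differential inequality lemma: if `f` is differentiable on `[1, L]`,
`δ > β > 0`, `K₀ ≥ 0`, and `δ f(t) ≤ f'(t)/log 2 + K₀ 2^{βt}` on `[1, L]`, then
`f(1) ≤ f(L) 2^{−δ(L−1)} + (2^β/(δ − β)) K₀`. -/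
theorem statement15 (L : ℝ) (hL : 1 ≤ L) (f : ℝ → ℝ) (d β K₀ : ℝ)
    (hβ : 0 < β) (hdβ : β < d) (hK₀ : 0 ≤ K₀)
    (hdiff : ∀ t ∈ Icc (1:ℝ) L, DifferentiableAt ℝ f t)
    (hineq : ∀ t ∈ Icc (1:ℝ) L,
      d * f t ≤ deriv f t / Real.log 2 + K₀ * (2:ℝ) ^ (β * t)) :
    f 1 ≤ f L * (2:ℝ) ^ (-(d * (L - 1))) + ((2:ℝ) ^ β / (d - β)) * K₀ := by
  set c := Real.log 2 with hc_def
  have hc : 0 < c := Real.log_pos one_lt_two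
  have hrpow : ∀ x : ℝ, (2:ℝ) ^ x = Real.exp (c * x) := fun x =>
    Real.rpow_def_of_pos two_pos x
  set g : ℝ → ℝ := fun t =>
    f t * Real.exp ((-(d * c)) * t) - K₀ / (d - β) * Real.exp (((β - d) * c) * t)
    with hg_def
  have hdβ' : 0 < d - β := sub_pos.mpr hdβ
  -- derivative of g
  have hgderiv : ∀ t ∈ Icc (1:ℝ) L, HasDerivAt g
      (deriv f t * Real.exp ((-(d * c)) * t)
        + f t * (Real.exp ((-(d * c)) * t) * (-(d * c)))
        - K₀ / (d - β) * (Real.exp (((β - d) * c) * t) * ((β - d) * c))) t := by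
    intro t ht
    exact (((hdiff t ht).hasDerivAt.mul (aux_exp_deriv (-(d * c)) t))).sub
      ((aux_exp_deriv ((β - d) * c) t).const_mul (K₀ / (d - β)))
  -- nonnegativity of g'
  have hgd_nonneg : ∀ t ∈ Icc (1:ℝ) L,
      0 ≤ deriv f t * Real.exp ((-(d * c)) * t)
        + f t * (Real.exp ((-(d * c)) * t) * (-(d * c)))
        - K₀ / (d - β) * (Real.exp (((β - d) * c) * t) * ((β - d) * c)) := by
    intro t ht
    have h1 := hineq t ht
    rw [hrpow (β * t)] at h1
    have hE1 : (0:ℝ) < Real.exp ((-(d * c)) * t) := Real.exp_pos _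
    have hE2 : Real.exp (c * (β * t)) * Real.exp ((-(d * c)) * t)
        = Real.exp (((β - d) * c) * t) := by
      rw [← Real.exp_add]; ring_nf
    have hfd : deriv f t ≥ c * (d * f t) - c * (K₀ * Real.exp (c * (β * t))) := by
      have := mul_le_mul_of_nonneg_left h1 hc.le
      have hc' : c ≠ 0 := ne_of_gt hc
      field_simp at this ⊢
      nlinarith [this]
    have hK : K₀ / (d - β) * (Real.exp (((β - d) * c) * t) * ((β - d) * c))
        = -(c * K₀ * Real.exp (((β - d) * c) * t)) := by
      field_simp; ring
    rw [hK]
    have h5 : c * (K₀ * Real.exp (c * (β * t))) * Real.exp ((-(d * c)) * t)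
        = c * K₀ * Real.exp (((β - d) * c) * t) := by
      rw [← hE2]; ring
    have h6 := mul_le_mul_of_nonneg_right hfd hE1.le
    nlinarith [h6, h5]
  -- monotonicity
  have hmono : MonotoneOn g (Icc (1:ℝ) L) := by
    apply monotoneOn_of_deriv_nonneg (convex_Icc 1 L)
    · intro t ht
      exact ((hgderiv t ht).differentiableAt).continuousAt.continuousWithinAt
    · intro t ht
      rw [interior_Icc] at ht
      exact ((hgderiv t (Ioo_subset_Icc_self ht)).differentiableAt).differentiableWithinAt
    · intro t ht
      rw [interior_Icc] at ht
      rw [(hgderiv t (Ioo_subset_Icc_self ht)).deriv]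
      exact hgd_nonneg t (Ioo_subset_Icc_self ht)
  have h1L : (1:ℝ) ∈ Icc (1:ℝ) L := ⟨le_refl 1, hL⟩
  have hLL : L ∈ Icc (1:ℝ) L := ⟨hL, le_refl L⟩
  have hg1L : g 1 ≤ g L := hmono h1L hLL hL
  simp only [hg_def, mul_one] at hg1L
  -- translate back
  rw [hrpow (-(d * (L - 1))), hrpow β]
  have hE : (0:ℝ) < Real.exp (d * c) := Real.exp_pos _
  have key := mul_le_mul_of_nonneg_right hg1L hE.le
  have e1 : Real.exp (-(d * c)) * Real.exp (d * c) = 1 := by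
    rw [← Real.exp_add]; ring_nf; exact Real.exp_zero
  have e2 : Real.exp ((-(d * c)) * L) * Real.exp (d * c)
      = Real.exp (c * -(d * (L - 1))) := by
    rw [← Real.exp_add]; ring_nf
  have e3 : Real.exp ((β - d) * c) * Real.exp (d * c) = Real.exp (c * β) := by
    rw [← Real.exp_add]; ring_nf
  have hpos : 0 ≤ K₀ / (d - β) * (Real.exp (((β - d) * c) * L) * Real.exp (d * c)) := by
    positivity
  have key' : f 1 * (Real.exp (-(d * c)) * Real.exp (d * c))
      - K₀ / (d - β) * (Real.exp ((β - d) * c) * Real.exp (d * c))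
      ≤ f L * (Real.exp ((-(d * c)) * L) * Real.exp (d * c))
      - K₀ / (d - β) * (Real.exp (((β - d) * c) * L) * Real.exp (d * c)) := by
    nlinarith [key]
  rw [e1, e2, e3, mul_one] at key'
  have hdiv : K₀ / (d - β) * Real.exp (c * β) = Real.exp (c * β) / (d - β) * K₀ := by
    ring
  linarith [key', hpos, hdiv.le, hdiv.ge]
end
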